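/- arXiv:2004.06097 — 6 statements merged into one kernel-verified Lean document; each statement's English description precedes it below -/
import Mathlib

section
/- Let k, l ≥ 2 be integers. There exists a (k,l)-semisaturated sequence a : Fin m → ℝ of length m = min(2k + l − 5, 2l + k − 5). -/
/-- The injective sequence `a` of length `m` is `(k,l)`-semisaturated: for every one-element
extension `(b, g)` of `a`, the sequence `b` has an increasing subsequence of length `k` or a
decreasing subsequence of length `l` whose index set contains the new position. -/
def SeqSemiSat {m : ℕ} (a : Fin m → ℝ) (k l : ℕ) : Prop :=
  ∀ (b : Fin (m + 1) → ℝ) (g : Fin m → Fin (m + 1)),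
    Function.Injective b → StrictMono g → b ∘ g = a →
    ∀ j : Fin (m + 1), j ∉ Set.range g →
      (∃ f : Fin k → Fin (m + 1), StrictMono f ∧ StrictMono (b ∘ f) ∧ j ∈ Set.range f) ∨
      (∃ f : Fin l → Fin (m + 1), StrictMono f ∧ StrictAnti (b ∘ f) ∧ j ∈ Set.range f)

namespace SemiSatAux

/-- The value pattern: increasing `0..p-1`, then decreasing `p+d-1..p` (encoded as
`2p+d-1-n`), then increasing `p+d..2p+d-1`. -/
def ssF (p d : ℕ) : ℕ → ℕ := fun n => if n < p then n else if n < p + d then 2*p+d-1-n else n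

lemma ssF_lo {p d n : ℕ} (h : n < p) : ssF p d n = n := by simp [ssF, h]

lemma ssF_mid {p d n : ℕ} (h1 : p ≤ n) (h2 : n < p + d) : ssF p d n = 2*p+d-1-n := by
  simp only [ssF]; rw [if_neg (by omega), if_pos h2]

lemma ssF_hi {p d n : ℕ} (h : p + d ≤ n) : ssF p d n = n := by
  simp only [ssF]; rw [if_neg (by omega), if_neg (by omega)]

/-- Value of the extended sequence at position `x`, with new element `v` at position `J`. -/
noncomputable def ssW (p d J : ℕ) (v : ℝ) : ℕ → ℝ := fun x =>
  if x = J then v else if x < J then (ssF p d x : ℝ) else (ssF p d (x-1) : ℝ)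

lemma ssW_self {p d J : ℕ} {v : ℝ} : ssW p d J v J = v := by simp [ssW]

lemma ssW_lt {p d J x : ℕ} {v : ℝ} (h : x < J) : ssW p d J v x = (ssF p d x : ℝ) := by
  simp only [ssW]; rw [if_neg (by omega), if_pos h]

lemma ssW_gt {p d J x : ℕ} {v : ℝ} (h : J < x) : ssW p d J v x = (ssF p d (x-1) : ℝ) := by
  simp only [ssW]; rw [if_neg (by omega), if_neg (by omega)]

lemma pairwise_range_map {t : ℕ} {g : ℕ → ℕ} {R : ℕ → ℕ → Prop}
    (h : ∀ r1 r2, r1 < r2 → r2 < t → R (g r1) (g r2)) :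
    ((List.range t).map g).Pairwise R := by
  rw [List.pairwise_map]
  refine List.pairwise_iff_get.mpr fun i1 i2 h12 => ?_
  simp only [List.get_eq_getElem, List.getElem_range]
  exact h _ _ h12 (by simpa using i2.isLt)

lemma pairwise_pair {α : Type*} {R : α → α → Prop} {x y : α} (h : R x y) :
    ([x, y] : List α).Pairwise R := by simp [h]

lemma listChain_inc {M n : ℕ} (b : Fin M → ℝ) (W : ℕ → ℝ) (j : Fin M) (L : List ℕ)
    (hW : ∀ (x : ℕ) (hx : x < M), b ⟨x, hx⟩ = W x)
    (hlen : L.length = n) (hbd : ∀ x ∈ L, x < M) (hmem : (j : ℕ) ∈ L)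
    (hlt : L.Pairwise (· < ·)) (hval : L.Pairwise (fun x y => W x < W y)) :
    ∃ f : Fin n → Fin M, StrictMono f ∧ StrictMono (b ∘ f) ∧ j ∈ Set.range f := by
  subst hlen
  have hlen' : (L.pmap (fun x hx => (⟨x, hx⟩ : Fin M)) hbd).length = L.length :=
    List.length_pmap
  have hP : (L.pmap (fun x hx => (⟨x, hx⟩ : Fin M)) hbd).Pairwise (· < ·) :=
    hlt.pmap hbd (by intro x hx y hy hxy; exact Fin.mk_lt_mk.mpr hxy)
  have hP2 : (L.pmap (fun x hx => (⟨x, hx⟩ : Fin M)) hbd).Pairwise (fun u w => b u < b w) :=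
    hval.pmap hbd (by intro x hx y hy hxy; rw [hW _ hx, hW _ hy]; exact hxy)
  refine ⟨fun i => (L.pmap (fun x hx => (⟨x, hx⟩ : Fin M)) hbd).get (Fin.cast hlen'.symm i),
    ?_, ?_, ?_⟩
  · intro i1 i2 h
    exact List.pairwise_iff_get.mp hP _ _ (by simp only [Fin.lt_def, Fin.coe_cast]; exact h)
  · intro i1 i2 h
    exact List.pairwise_iff_get.mp hP2 _ _ (by simp only [Fin.lt_def, Fin.coe_cast]; exact h)
  · have hj' : j ∈ L.pmap (fun x hx => (⟨x, hx⟩ : Fin M)) hbd :=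
      List.mem_pmap.mpr ⟨(j : ℕ), hmem, Fin.eta j _⟩
    obtain ⟨i, hi⟩ := List.mem_iff_get.mp hj'
    exact ⟨Fin.cast hlen' i, by simpa using hi⟩

lemma listChain_dec {M n : ℕ} (b : Fin M → ℝ) (W : ℕ → ℝ) (j : Fin M) (L : List ℕ)
    (hW : ∀ (x : ℕ) (hx : x < M), b ⟨x, hx⟩ = W x)
    (hlen : L.length = n) (hbd : ∀ x ∈ L, x < M) (hmem : (j : ℕ) ∈ L)
    (hlt : L.Pairwise (· < ·)) (hval : L.Pairwise (fun x y => W y < W x)) :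
    ∃ f : Fin n → Fin M, StrictMono f ∧ StrictAnti (b ∘ f) ∧ j ∈ Set.range f := by
  subst hlen
  have hlen' : (L.pmap (fun x hx => (⟨x, hx⟩ : Fin M)) hbd).length = L.length :=
    List.length_pmap
  have hP : (L.pmap (fun x hx => (⟨x, hx⟩ : Fin M)) hbd).Pairwise (· < ·) :=
    hlt.pmap hbd (by intro x hx y hy hxy; exact Fin.mk_lt_mk.mpr hxy)
  have hP2 : (L.pmap (fun x hx => (⟨x, hx⟩ : Fin M)) hbd).Pairwise (fun u w => b w < b u) :=
    hval.pmap hbd (by intro x hx y hy hxy; rw [hW _ hx, hW _ hy]; exact hxy)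
  refine ⟨fun i => (L.pmap (fun x hx => (⟨x, hx⟩ : Fin M)) hbd).get (Fin.cast hlen'.symm i),
    ?_, ?_, ?_⟩
  · intro i1 i2 h
    exact List.pairwise_iff_get.mp hP _ _ (by simp only [Fin.lt_def, Fin.coe_cast]; exact h)
  · intro i1 i2 h
    exact List.pairwise_iff_get.mp hP2 _ _ (by simp only [Fin.lt_def, Fin.coe_cast]; exact h)
  · have hj' : j ∈ L.pmap (fun x hx => (⟨x, hx⟩ : Fin M)) hbd :=
      List.mem_pmap.mpr ⟨(j : ℕ), hmem, Fin.eta j _⟩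
    obtain ⟨i, hi⟩ := List.mem_iff_get.mp hj'
    exact ⟨Fin.cast hlen' i, by simpa using hi⟩

lemma key (k l m : ℕ) (hk : 2 ≤ k) (hl : 2 ≤ l) (hm : m = 2*k + l - 5) :
    ∃ a : Fin m → ℝ, Function.Injective a ∧ SeqSemiSat a k l := by
  obtain ⟨p, rfl⟩ : ∃ p, k = p + 2 := ⟨k - 2, by omega⟩
  obtain ⟨d, rfl⟩ : ∃ d, l = d + 1 := ⟨l - 1, by omega⟩
  have hd : 1 ≤ d := by omega
  have hm' : m = 2*p + d := by omega
  subst hm'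
  clear hm hk hl
  refine ⟨fun i => (ssF p d i : ℝ), ?_, ?_⟩
  · intro i1 i2 h
    have hc : ((ssF p d i1 : ℕ) : ℝ) = ((ssF p d i2 : ℕ) : ℝ) := h
    have h' : ssF p d i1 = ssF p d i2 := Nat.cast_inj.mp hc
    have b1 := i1.isLt; have b2 := i2.isLt
    apply Fin.ext
    simp only [ssF] at h'
    split_ifs at h' <;> omega
  intro b g hb hg hbg j hj
  -- g is the canonical embedding missing j
  have hrg : Set.range g = Set.range (Fin.succAbove j) := by
    rw [Fin.range_succAbove]
    refine Set.eq_of_subset_of_ncard_le ?_ ?_ (Set.toFinite _)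
    · rintro x ⟨i, rfl⟩
      exact fun h => hj (Set.mem_singleton_iff.mp h ▸ ⟨i, rfl⟩)
    · have h1 : ({j} : Set (Fin (2*p+d+1))).ncard + ({j}ᶜ : Set (Fin (2*p+d+1))).ncard
          = 2*p+d+1 := by
        rw [Set.ncard_add_ncard_compl ({j} : Set (Fin (2*p+d+1))) (Set.toFinite _)
          (Set.toFinite _)]
        simp
      have h2 : (Set.range g).ncard = 2*p+d := by
        rw [← Set.image_univ, Set.ncard_image_of_injective _ hg.injective, Set.ncard_univ]
        simp
      have h3 := Set.ncard_singleton j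
      omega
  have hgs : g = Fin.succAbove j :=
    (hg.range_inj (Fin.strictMono_succAbove j)).mp hrg
  have hbi : ∀ i : Fin (2*p+d), b (Fin.succAbove j i) = (ssF p d i : ℝ) := by
    intro i; rw [← hgs]; exact congrFun hbg i
  set J := (j : ℕ) with hJ
  set v := b j with hv
  have hJle : J ≤ 2*p+d := by have := j.isLt; omega
  have hb1 : ∀ (x : ℕ) (hx : x < 2*p+d+1), x < J → b ⟨x, hx⟩ = (ssF p d x : ℝ) := by
    intro x hx hxJ
    have hxm : x < 2*p+d := by have := j.isLt; omega
    have h := hbi ⟨x, hxm⟩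
    rwa [Fin.succAbove_of_castSucc_lt _ _ (by simp [Fin.lt_def]; omega)] at h
  have hb2 : ∀ (x : ℕ) (hx : x < 2*p+d+1), J < x → b ⟨x, hx⟩ = (ssF p d (x-1) : ℝ) := by
    intro x hx hJx
    have hxm : x - 1 < 2*p+d := by omega
    have h := hbi ⟨x - 1, hxm⟩
    rw [Fin.succAbove_of_le_castSucc _ _ (by simp [Fin.le_def]; omega)] at h
    convert h using 2
    apply Fin.ext
    simp [Fin.val_succ]
    omega
  have hW : ∀ (x : ℕ) (hx : x < 2*p+d+1), b ⟨x, hx⟩ = ssW p d J v x := by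
    intro x hx
    rcases lt_trichotomy x J with h | h | h
    · rw [ssW_lt h]; exact hb1 x hx h
    · subst h
      rw [ssW_self, hv]
    · rw [ssW_gt h]; exact hb2 x hx h
  have hvne : ∀ n : ℕ, n < 2*p+d → v ≠ (ssF p d n : ℝ) := by
    intro n hn heq
    have h1 : b j = b (Fin.succAbove j ⟨n, hn⟩) := by rw [hbi]; exact heq
    exact (Fin.succAbove_ne j ⟨n, hn⟩) (hb h1).symm
  by_cases hA : J ≤ p
  · -- before/at the left increasing run
    have hne := hvne p (by omega)
    rw [ssF_mid le_rfl (by omega)] at hne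
    rcases hne.lt_or_gt with hlo | hhi
    · -- v < p+d-1 : increasing chain [J, p+1, p+d+1, ..., p+d+p]
      left
      apply listChain_inc b (ssW p d J v) j
        (J :: (p+1) :: (List.range p).map (fun r => p+d+1+r)) hW
      · simp
      · intro x hx
        simp only [List.mem_cons, List.mem_map, List.mem_range] at hx
        rcases hx with rfl | rfl | ⟨r, hr, rfl⟩ <;> omega
      · exact List.mem_cons_self
      · refine List.pairwise_cons.mpr ⟨?_, List.pairwise_cons.mpr ⟨?_, ?_⟩⟩
        · intro x hx
          simp only [List.mem_cons, List.mem_map, List.mem_range] at hx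
          rcases hx with rfl | ⟨r, hr, rfl⟩ <;> omega
        · intro x hx
          simp only [List.mem_map, List.mem_range] at hx
          obtain ⟨r, hr, rfl⟩ := hx; omega
        · exact pairwise_range_map fun r1 r2 h12 h2t => by omega
      · refine List.pairwise_cons.mpr ⟨?_, List.pairwise_cons.mpr ⟨?_, ?_⟩⟩
        · intro x hx
          simp only [List.mem_cons, List.mem_map, List.mem_range] at hx
          rw [ssW_self]
          rcases hx with rfl | ⟨r, hr, rfl⟩
          · rw [ssW_gt (by omega), show p+1-1 = p by omega, ssF_mid le_rfl (by omega)]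
            exact hlo
          · rw [ssW_gt (by omega), show p+d+1+r-1 = p+d+r by omega, ssF_hi (by omega)]
            exact lt_of_lt_of_le hlo (Nat.cast_le.mpr (by omega))
        · intro x hx
          simp only [List.mem_map, List.mem_range] at hx
          obtain ⟨r, hr, rfl⟩ := hx
          rw [ssW_gt (by omega), ssW_gt (by omega), show p+1-1 = p by omega,
            show p+d+1+r-1 = p+d+r by omega, ssF_mid le_rfl (by omega), ssF_hi (by omega)]
          exact Nat.cast_lt.mpr (by omega)
        · apply pairwise_range_map
          intro r1 r2 h12 h2t
          rw [ssW_gt (by omega), ssW_gt (by omega), show p+d+1+r1-1 = p+d+r1 by omega,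
            show p+d+1+r2-1 = p+d+r2 by omega, ssF_hi (by omega), ssF_hi (by omega)]
          exact Nat.cast_lt.mpr (by omega)
    · -- v > p+d-1 : decreasing chain [J, p+1, ..., p+d]
      right
      apply listChain_dec b (ssW p d J v) j
        (J :: (List.range d).map (fun r => p+1+r)) hW
      · simp
      · intro x hx
        simp only [List.mem_cons, List.mem_map, List.mem_range] at hx
        rcases hx with rfl | ⟨r, hr, rfl⟩ <;> omega
      · exact List.mem_cons_self
      · refine List.pairwise_cons.mpr ⟨?_, ?_⟩
        · intro x hx
          simp only [List.mem_map, List.mem_range] at hx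
          obtain ⟨r, hr, rfl⟩ := hx; omega
        · exact pairwise_range_map fun r1 r2 h12 h2t => by omega
      · refine List.pairwise_cons.mpr ⟨?_, ?_⟩
        · intro x hx
          simp only [List.mem_map, List.mem_range] at hx
          obtain ⟨r, hr, rfl⟩ := hx
          rw [ssW_self, ssW_gt (by omega), show p+1+r-1 = p+r by omega,
            ssF_mid (by omega) (by omega)]
          exact lt_of_le_of_lt (Nat.cast_le.mpr (by omega)) hhi
        · apply pairwise_range_map
          intro r1 r2 h12 h2t
          rw [ssW_gt (by omega), ssW_gt (by omega), show p+1+r1-1 = p+r1 by omega,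
            show p+1+r2-1 = p+r2 by omega, ssF_mid (by omega) (by omega),
            ssF_mid (by omega) (by omega)]
          exact Nat.cast_lt.mpr (by omega)
  · by_cases hC : p + d ≤ J
    · -- within/after the right increasing run
      have hne := hvne (p+d-1) (by omega)
      rw [ssF_mid (by omega) (by omega)] at hne
      rcases hne.lt_or_gt with hlo | hhi
      · -- v < p : decreasing chain [p, ..., p+d-1, J]
        right
        apply listChain_dec b (ssW p d J v) j
          ((List.range d).map (fun r => p+r) ++ [J]) hW
        · simp
        · intro x hx
          simp only [List.mem_append, List.mem_map, List.mem_range, List.mem_singleton] at hx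
          rcases hx with ⟨r, hr, rfl⟩ | rfl <;> omega
        · simp [hJ]
        · refine List.pairwise_append.mpr ⟨?_, ?_, ?_⟩
          · exact pairwise_range_map fun r1 r2 h12 h2t => by omega
          · simp
          · intro x hx y hy
            simp only [List.mem_map, List.mem_range] at hx
            simp only [List.mem_singleton] at hy
            obtain ⟨r, hr, rfl⟩ := hx; subst hy; omega
        · refine List.pairwise_append.mpr ⟨?_, ?_, ?_⟩
          · apply pairwise_range_map
            intro r1 r2 h12 h2t
            rw [ssW_lt (by omega), ssW_lt (by omega), ssF_mid (by omega) (by omega),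
              ssF_mid (by omega) (by omega)]
            exact Nat.cast_lt.mpr (by omega)
          · simp
          · intro x hx y hy
            simp only [List.mem_map, List.mem_range] at hx
            simp only [List.mem_singleton] at hy
            obtain ⟨r, hr, rfl⟩ := hx; subst hy
            rw [ssW_self, ssW_lt (by omega), ssF_mid (by omega) (by omega)]
            exact lt_of_lt_of_le hlo (Nat.cast_le.mpr (by omega))
      · -- v > p : increasing chain [0, ..., p-1, p+d-1, J]
        left
        apply listChain_inc b (ssW p d J v) j
          ((List.range p).map (fun r => r) ++ [p+d-1, J]) hW
        · simp
        · intro x hx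
          simp only [List.mem_append, List.mem_map, List.mem_range, List.mem_cons,
            List.mem_singleton, List.not_mem_nil, or_false] at hx
          rcases hx with ⟨r, hr, rfl⟩ | rfl | rfl <;> omega
        · simp [hJ]
        · refine List.pairwise_append.mpr ⟨?_, pairwise_pair (by omega), ?_⟩
          · exact pairwise_range_map fun r1 r2 h12 h2t => by omega
          · intro x hx y hy
            simp only [List.mem_map, List.mem_range] at hx
            simp only [List.mem_cons, List.mem_singleton, List.not_mem_nil, or_false] at hy
            obtain ⟨r, hr, rfl⟩ := hx
            rcases hy with rfl | rfl <;> omega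
        · refine List.pairwise_append.mpr ⟨?_, ?_, ?_⟩
          · apply pairwise_range_map
            intro r1 r2 h12 h2t
            rw [ssW_lt (by omega), ssW_lt (by omega), ssF_lo (by omega), ssF_lo (by omega)]
            exact Nat.cast_lt.mpr (by omega)
          · apply pairwise_pair
            rw [ssW_self, ssW_lt (by omega), ssF_mid (by omega) (by omega)]
            exact hhi
          · intro x hx y hy
            simp only [List.mem_map, List.mem_range] at hx
            simp only [List.mem_cons, List.mem_singleton, List.not_mem_nil, or_false] at hy
            obtain ⟨r, hr, rfl⟩ := hx
            rcases hy with rfl | rfl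
            · rw [ssW_lt (by omega), ssW_lt (by omega), ssF_lo (by omega),
                ssF_mid (by omega) (by omega)]
              exact Nat.cast_lt.mpr (by omega)
            · rw [ssW_self, ssW_lt (by omega), ssF_lo (by omega)]
              exact lt_trans (Nat.cast_lt.mpr (show r < 2*p+d-1-(p+d-1) by omega)) hhi
    · -- strictly inside the decreasing run : p < J < p+d
      have hB1 : p < J := by omega
      have hB2 : J < p + d := by omega
      have hne1 := hvne (J-1) (by omega)
      rw [ssF_mid (by omega) (by omega)] at hne1
      rcases hne1.lt_or_gt with hlo1 | hhi1
      · have hne2 := hvne J (by omega)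
        rw [ssF_mid (by omega) (by omega)] at hne2
        rcases hne2.lt_or_gt with hlo2 | hhi2
        · -- v < 2p+d-1-J : increasing chain [J, J+1, p+d+1, ..., p+d+p]
          left
          apply listChain_inc b (ssW p d J v) j
            (J :: (J+1) :: (List.range p).map (fun r => p+d+1+r)) hW
          · simp
          · intro x hx
            simp only [List.mem_cons, List.mem_map, List.mem_range] at hx
            rcases hx with rfl | rfl | ⟨r, hr, rfl⟩ <;> omega
          · exact List.mem_cons_self
          · refine List.pairwise_cons.mpr ⟨?_, List.pairwise_cons.mpr ⟨?_, ?_⟩⟩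
            · intro x hx
              simp only [List.mem_cons, List.mem_map, List.mem_range] at hx
              rcases hx with rfl | ⟨r, hr, rfl⟩ <;> omega
            · intro x hx
              simp only [List.mem_map, List.mem_range] at hx
              obtain ⟨r, hr, rfl⟩ := hx; omega
            · exact pairwise_range_map fun r1 r2 h12 h2t => by omega
          · refine List.pairwise_cons.mpr ⟨?_, List.pairwise_cons.mpr ⟨?_, ?_⟩⟩
            · intro x hx
              simp only [List.mem_cons, List.mem_map, List.mem_range] at hx
              rw [ssW_self]
              rcases hx with rfl | ⟨r, hr, rfl⟩
              · rw [ssW_gt (by omega), show J+1-1 = J by omega,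
                  ssF_mid (by omega) (by omega)]
                exact hlo2
              · rw [ssW_gt (by omega), show p+d+1+r-1 = p+d+r by omega, ssF_hi (by omega)]
                exact lt_of_lt_of_le hlo2 (Nat.cast_le.mpr (by omega))
            · intro x hx
              simp only [List.mem_map, List.mem_range] at hx
              obtain ⟨r, hr, rfl⟩ := hx
              rw [ssW_gt (by omega), ssW_gt (by omega), show J+1-1 = J by omega,
                show p+d+1+r-1 = p+d+r by omega, ssF_mid (by omega) (by omega),
                ssF_hi (by omega)]
              exact Nat.cast_lt.mpr (by omega)
            · apply pairwise_range_map
              intro r1 r2 h12 h2t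
              rw [ssW_gt (by omega), ssW_gt (by omega), show p+d+1+r1-1 = p+d+r1 by omega,
                show p+d+1+r2-1 = p+d+r2 by omega, ssF_hi (by omega), ssF_hi (by omega)]
              exact Nat.cast_lt.mpr (by omega)
        · -- 2p+d-1-J < v < 2p+d-1-(J-1) : decreasing chain [p..J-1, J, J+1..p+d]
          right
          apply listChain_dec b (ssW p d J v) j
            ((List.range (J-p)).map (fun r => p+r) ++
              J :: (List.range (d-(J-p))).map (fun r => J+1+r)) hW
          · simp; omega
          · intro x hx
            simp only [List.mem_append, List.mem_cons, List.mem_map, List.mem_range] at hx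
            rcases hx with ⟨r, hr, rfl⟩ | rfl | ⟨r, hr, rfl⟩ <;> omega
          · simp [hJ]
          · refine List.pairwise_append.mpr ⟨?_, List.pairwise_cons.mpr ⟨?_, ?_⟩, ?_⟩
            · exact pairwise_range_map fun r1 r2 h12 h2t => by omega
            · intro x hx
              simp only [List.mem_map, List.mem_range] at hx
              obtain ⟨r, hr, rfl⟩ := hx; omega
            · exact pairwise_range_map fun r1 r2 h12 h2t => by omega
            · intro x hx y hy
              simp only [List.mem_map, List.mem_range] at hx
              simp only [List.mem_cons, List.mem_map, List.mem_range] at hy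
              obtain ⟨r, hr, rfl⟩ := hx
              rcases hy with rfl | ⟨r2, hr2, rfl⟩ <;> omega
          · refine List.pairwise_append.mpr ⟨?_, List.pairwise_cons.mpr ⟨?_, ?_⟩, ?_⟩
            · apply pairwise_range_map
              intro r1 r2 h12 h2t
              rw [ssW_lt (by omega), ssW_lt (by omega), ssF_mid (by omega) (by omega),
                ssF_mid (by omega) (by omega)]
              exact Nat.cast_lt.mpr (by omega)
            · intro x hx
              simp only [List.mem_map, List.mem_range] at hx
              obtain ⟨r, hr, rfl⟩ := hx
              rw [ssW_self, ssW_gt (by omega), show J+1+r-1 = J+r by omega,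
                ssF_mid (by omega) (by omega)]
              exact lt_of_le_of_lt (Nat.cast_le.mpr (by omega)) hhi2
            · apply pairwise_range_map
              intro r1 r2 h12 h2t
              rw [ssW_gt (by omega), ssW_gt (by omega), show J+1+r1-1 = J+r1 by omega,
                show J+1+r2-1 = J+r2 by omega, ssF_mid (by omega) (by omega),
                ssF_mid (by omega) (by omega)]
              exact Nat.cast_lt.mpr (by omega)
            · intro x hx y hy
              simp only [List.mem_map, List.mem_range] at hx
              simp only [List.mem_cons, List.mem_map, List.mem_range] at hy
              obtain ⟨r, hr, rfl⟩ := hx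
              rcases hy with rfl | ⟨r2, hr2, rfl⟩
              · rw [ssW_self, ssW_lt (by omega), ssF_mid (by omega) (by omega)]
                exact lt_of_lt_of_le hlo1 (Nat.cast_le.mpr (by omega))
              · rw [ssW_gt (by omega), show J+1+r2-1 = J+r2 by omega,
                  ssF_mid (by omega) (by omega), ssW_lt (by omega),
                  ssF_mid (by omega) (by omega)]
                exact Nat.cast_lt.mpr (by omega)
      · -- v > 2p+d-1-(J-1) : increasing chain [0..p-1, J-1, J]
        left
        apply listChain_inc b (ssW p d J v) j
          ((List.range p).map (fun r => r) ++ [J-1, J]) hW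
        · simp
        · intro x hx
          simp only [List.mem_append, List.mem_map, List.mem_range, List.mem_cons,
            List.mem_singleton, List.not_mem_nil, or_false] at hx
          rcases hx with ⟨r, hr, rfl⟩ | rfl | rfl <;> omega
        · simp [hJ]
        · refine List.pairwise_append.mpr ⟨?_, pairwise_pair (by omega), ?_⟩
          · exact pairwise_range_map fun r1 r2 h12 h2t => by omega
          · intro x hx y hy
            simp only [List.mem_map, List.mem_range] at hx
            simp only [List.mem_cons, List.mem_singleton, List.not_mem_nil, or_false] at hy
            obtain ⟨r, hr, rfl⟩ := hx
            rcases hy with rfl | rfl <;> omega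
        · refine List.pairwise_append.mpr ⟨?_, ?_, ?_⟩
          · apply pairwise_range_map
            intro r1 r2 h12 h2t
            rw [ssW_lt (by omega), ssW_lt (by omega), ssF_lo (by omega), ssF_lo (by omega)]
            exact Nat.cast_lt.mpr (by omega)
          · apply pairwise_pair
            rw [ssW_self, ssW_lt (by omega), ssF_mid (by omega) (by omega)]
            exact hhi1
          · intro x hx y hy
            simp only [List.mem_map, List.mem_range] at hx
            simp only [List.mem_cons, List.mem_singleton, List.not_mem_nil, or_false] at hy
            obtain ⟨r, hr, rfl⟩ := hx
            rcases hy with rfl | rfl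
            · rw [ssW_lt (by omega), ssW_lt (by omega), ssF_lo (by omega),
                ssF_mid (by omega) (by omega)]
              exact Nat.cast_lt.mpr (by omega)
            · rw [ssW_self, ssW_lt (by omega), ssF_lo (by omega)]
              exact lt_trans (Nat.cast_lt.mpr (show r < 2*p+d-1-(J-1) by omega)) hhi1

lemma neg_semisat {m k l : ℕ} {a : Fin m → ℝ} (h : SeqSemiSat a l k) :
    SeqSemiSat (fun i => -a i) k l := by
  intro b g hb hg hbg j hj
  have h2 := h (fun q => -(b q)) g (fun x y hxy => hb (neg_injective hxy)) hg
    (by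
      funext i
      have h0 := congrFun hbg i
      simp only [Function.comp_apply] at h0 ⊢
      rw [h0, neg_neg]) j hj
  rcases h2 with ⟨f, h1, h2, h3⟩ | ⟨f, h1, h2, h3⟩
  · right
    exact ⟨f, h1, fun i1 i2 hlt => by simpa using h2 hlt, h3⟩
  · left
    exact ⟨f, h1, fun i1 i2 hlt => by simpa using h2 hlt, h3⟩

end SemiSatAux

/-- For `k, l ≥ 2`, there is an injective `(k,l)`-semisaturated sequence of length
`min(2k + l - 5, 2l + k - 5)`. -/
theorem sequence_semisat_upper_bound (k l : ℕ) (hk : 2 ≤ k) (hl : 2 ≤ l) :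
    ∃ a : Fin (min (2 * k + l - 5) (2 * l + k - 5)) → ℝ,
      Function.Injective a ∧ SeqSemiSat a k l := by
  rcases le_total k l with h | h
  · exact SemiSatAux.key k l _ hk hl (by omega)
  · obtain ⟨a, ha, hs⟩ := SemiSatAux.key l k (min (2 * k + l - 5) (2 * l + k - 5)) hl hk (by omega)
    exact ⟨fun i => -a i, fun i1 i2 hh => ha (neg_injective hh), SemiSatAux.neg_semisat hs⟩
end

section
/- Let l ≥ 3 be an integer. Then: (i) every finite point set in the plane in general position that is (3,l)-semisaturated (with respect to 3-cups and l-caps) has at least l−1 points; and (ii) any set of l−1 points forming an (l−1)-cap is (3,l)-semisaturated. -/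
/-- For `p, q, r` with increasing `x`-coordinates, `{p,q,r}` is a cup: `q` lies strictly
below the line through `p` and `r`. -/
def Cup3 (p q r : ℝ × ℝ) : Prop :=
  p.1 < q.1 ∧ q.1 < r.1 ∧ (q.2 - p.2) * (r.1 - p.1) < (r.2 - p.2) * (q.1 - p.1)

/-- For `p, q, r` with increasing `x`-coordinates, `{p,q,r}` is a cap: `q` lies strictly
above the line through `p` and `r`. -/
def Cap3 (p q r : ℝ × ℝ) : Prop :=
  p.1 < q.1 ∧ q.1 < r.1 ∧ (q.2 - p.2) * (r.1 - p.1) > (r.2 - p.2) * (q.1 - p.1)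

/-- `S` is a `k`-cup: `k` points with pairwise distinct `x`-coordinates all of whose
triples are cups. -/
def IsCup (k : ℕ) (S : Finset (ℝ × ℝ)) : Prop :=
  S.card = k ∧ (∀ p ∈ S, ∀ q ∈ S, p ≠ q → p.1 ≠ q.1) ∧
    ∀ p ∈ S, ∀ q ∈ S, ∀ r ∈ S, p.1 < q.1 → q.1 < r.1 → Cup3 p q r

/-- `S` is a `k`-cap: `k` points with pairwise distinct `x`-coordinates all of whose
triples are caps. -/
def IsCap (k : ℕ) (S : Finset (ℝ × ℝ)) : Prop :=
  S.card = k ∧ (∀ p ∈ S, ∀ q ∈ S, p ≠ q → p.1 ≠ q.1) ∧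
    ∀ p ∈ S, ∀ q ∈ S, ∀ r ∈ S, p.1 < q.1 → q.1 < r.1 → Cap3 p q r

/-- `P` is in general position: no two points share an `x`-coordinate and no three points
are collinear. -/
def GenPos (P : Finset (ℝ × ℝ)) : Prop :=
  (∀ p ∈ P, ∀ q ∈ P, p ≠ q → p.1 ≠ q.1) ∧
    ∀ p ∈ P, ∀ q ∈ P, ∀ r ∈ P, p ≠ q → p ≠ r → q ≠ r →
      ¬ Collinear ℝ ({p, q, r} : Set (ℝ × ℝ))

/-- `P` is `(k,l)`-semisaturated with respect to `k`-cups and `l`-caps: for every point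
`q ∉ P` with `P ∪ {q}` in general position, `P ∪ {q}` contains a `k`-cup or an `l`-cap
containing `q`. -/
def CupCapSemiSat (k l : ℕ) (P : Finset (ℝ × ℝ)) : Prop :=
  ∀ q ∉ P, GenPos (insert q P) →
    ∃ S ⊆ insert q P, q ∈ S ∧ (IsCup k S ∨ IsCap l S)

lemma cross_eq_of_collinear {s : Set (ℝ × ℝ)} (h : Collinear ℝ s)
    {a b c : ℝ × ℝ} (ha : a ∈ s) (hb : b ∈ s) (hc : c ∈ s) :
    (b.2 - a.2) * (c.1 - a.1) = (c.2 - a.2) * (b.1 - a.1) := by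
  obtain ⟨v, hv⟩ := (collinear_iff_of_mem ha).1 h
  obtain ⟨rb, hrb⟩ := hv b hb
  obtain ⟨rc, hrc⟩ := hv c hc
  have h1 : b.1 = rb * v.1 + a.1 := by rw [hrb]; rfl
  have h2 : b.2 = rb * v.2 + a.2 := by rw [hrb]; rfl
  have h3 : c.1 = rc * v.1 + a.1 := by rw [hrc]; rfl
  have h4 : c.2 = rc * v.2 + a.2 := by rw [hrc]; rfl
  rw [h1, h2, h3, h4]; ring

lemma collinear_of_cross {a b c : ℝ × ℝ} (hab : a.1 ≠ b.1)
    (h : (b.2 - a.2) * (c.1 - a.1) = (c.2 - a.2) * (b.1 - a.1)) :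
    Collinear ℝ ({a, b, c} : Set (ℝ × ℝ)) := by
  apply (collinear_iff_of_mem (show a ∈ ({a,b,c} : Set (ℝ×ℝ)) by simp)).2
  refine ⟨b - a, ?_⟩
  intro p hp
  have hd : b.1 - a.1 ≠ 0 := sub_ne_zero.2 (Ne.symm hab)
  simp only [Set.mem_insert_iff, Set.mem_singleton_iff] at hp
  rcases hp with rfl | rfl | rfl
  · exact ⟨0, by simp⟩
  · exact ⟨1, by simp⟩
  · refine ⟨(p.1 - a.1) / (b.1 - a.1), ?_⟩
    have e1 : (p.1 - a.1) / (b.1 - a.1) * (b.1 - a.1) = p.1 - a.1 := by field_simp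
    have e2 : (p.1 - a.1) / (b.1 - a.1) * (b.2 - a.2) = p.2 - a.2 := by
      rw [div_mul_eq_mul_div, div_eq_iff hd]; nlinarith [h]
    ext
    · show p.1 = (p.1 - a.1) / (b.1 - a.1) * (b.1 - a.1) + a.1
      rw [e1]; ring
    · show p.2 = (p.1 - a.1) / (b.1 - a.1) * (b.2 - a.2) + a.2
      rw [e2]; ring

/-- For `l ≥ 3`: (i) every finite planar point set in general position that is
`(3,l)`-semisaturated has at least `l-1` points; (ii) every `(l-1)`-cap is in general
position and is `(3,l)`-semisaturated. -/
theorem cupcap_semisat_three (l : ℕ) (hl : 3 ≤ l) :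
    (∀ P : Finset (ℝ × ℝ), GenPos P → CupCapSemiSat 3 l P → l - 1 ≤ P.card) ∧
    (∀ P : Finset (ℝ × ℝ), IsCap (l - 1) P → GenPos P ∧ CupCapSemiSat 3 l P) := by
  constructor
  · -- Part (i)
    intro P hgp hsat
    by_contra hcard
    push_neg at hcard
    set X : ℝ := (insert (0:ℝ) (P.image Prod.fst)).max' (by simp) + 1 with hXdef
    have hX : ∀ p ∈ P, p.1 < X := by
      intro p hp
      have : p.1 ≤ (insert (0:ℝ) (P.image Prod.fst)).max' (by simp) :=
        Finset.le_max' _ _ (Finset.mem_insert_of_mem (Finset.mem_image_of_mem Prod.fst hp))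
      linarith
    set T : Finset ℝ := insert (0:ℝ) ((P ×ˢ P).image
      (fun ab => ab.1.2 + (ab.2.2 - ab.1.2) * (X - ab.1.1) / (ab.2.1 - ab.1.1))) with hTdef
    set Y : ℝ := T.min' ⟨0, by simp [hTdef]⟩ - 1 with hYdef
    have hY : ∀ a ∈ P, ∀ b ∈ P, Y < a.2 + (b.2 - a.2) * (X - a.1) / (b.1 - a.1) := by
      intro a ha b hb
      have hm : a.2 + (b.2 - a.2) * (X - a.1) / (b.1 - a.1) ∈ T := by
        rw [hTdef]
        refine Finset.mem_insert_of_mem (Finset.mem_image.2 ⟨(a, b), ?_, rfl⟩)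
        exact Finset.mem_product.2 ⟨ha, hb⟩
      have := T.min'_le _ hm
      linarith
    have hcap : ∀ a ∈ P, ∀ b ∈ P, a.1 < b.1 →
        (Y - a.2) * (b.1 - a.1) < (b.2 - a.2) * (X - a.1) := by
      intro a ha b hb hab
      have hd : (0:ℝ) < b.1 - a.1 := by linarith
      have h2 : Y - a.2 < (b.2 - a.2) * (X - a.1) / (b.1 - a.1) := by
        have := hY a ha b hb; linarith
      exact (lt_div_iff₀ hd).1 h2
    have hqP : (X, Y) ∉ P := fun h => absurd (hX _ h) (lt_irrefl X)
    have hnc : ∀ a ∈ P, ∀ b ∈ P, a ≠ b → ∀ s : Set (ℝ × ℝ),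
        a ∈ s → b ∈ s → (X, Y) ∈ s → ¬ Collinear ℝ s := by
      intro a ha b hb hne s has hbs hqs hcol
      rcases lt_or_gt_of_ne (hgp.1 a ha b hb hne) with h | h
      · have h1 := cross_eq_of_collinear hcol has hbs hqs
        have h2 := hcap a ha b hb h
        simp only at h1
        linarith
      · have h1 := cross_eq_of_collinear hcol hbs has hqs
        have h2 := hcap b hb a ha h
        simp only at h1
        linarith
    have hgen : GenPos (insert (X, Y) P) := by
      constructor
      · intro p hp q hq hne
        rcases Finset.mem_insert.1 hp with rfl | hp <;>
          rcases Finset.mem_insert.1 hq with rfl | hq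
        · exact absurd rfl hne
        · exact fun h => absurd (h ▸ hX q hq) (lt_irrefl _)
        · exact ne_of_lt (hX p hp)
        · exact hgp.1 p hp q hq hne
      · intro p hp q hq r hr hpq hpr hqr
        rcases Finset.mem_insert.1 hp with rfl | hp <;>
          rcases Finset.mem_insert.1 hq with rfl | hq <;>
            rcases Finset.mem_insert.1 hr with rfl | hr
        · exact absurd rfl hpq
        · exact absurd rfl hpq
        · exact absurd rfl hpr
        · exact hnc q hq r hr hqr _ (by simp) (by simp) (by simp)
        · exact absurd rfl hqr
        · exact hnc p hp r hr hpr _ (by simp) (by simp) (by simp)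
        · exact hnc p hp q hq hpq _ (by simp) (by simp) (by simp)
        · exact hgp.2 p hp q hq r hr hpq hpr hqr
    obtain ⟨S, hS, hqS, hcup | hcapS⟩ := hsat (X, Y) hqP hgen
    · obtain ⟨hc3, hxS, hcupS⟩ := hcup
      have hsub : S.erase (X, Y) ⊆ P := by
        intro x hx
        rcases Finset.mem_insert.1 (hS (Finset.mem_of_mem_erase hx)) with rfl | h
        · exact absurd rfl (Finset.ne_of_mem_erase hx)
        · exact h
      have hc2 : (S.erase (X, Y)).card = 2 := by
        rw [Finset.card_erase_of_mem hqS, hc3]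
      obtain ⟨a, b, hab, hE⟩ := Finset.card_eq_two.1 hc2
      have haE : a ∈ S.erase (X, Y) := by rw [hE]; simp
      have hbE : b ∈ S.erase (X, Y) := by rw [hE]; simp
      have haP := hsub haE
      have hbP := hsub hbE
      have haS := Finset.mem_of_mem_erase haE
      have hbS := Finset.mem_of_mem_erase hbE
      rcases lt_or_gt_of_ne (hgp.1 a haP b hbP hab) with h | h
      · have hc := hcupS a haS b hbS (X, Y) hqS h (hX b hbP)
        have := hc.2.2
        have h2 := hcap a haP b hbP h
        simp only at this
        linarith
      · have hc := hcupS b hbS a haS (X, Y) hqS h (hX a haP)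
        have := hc.2.2
        have h2 := hcap b hbP a haP h
        simp only at this
        linarith
    · have h1 := Finset.card_le_card hS
      have h2 := Finset.card_insert_le (X, Y) P
      have h3 := hcapS.1
      omega
  · -- Part (ii)
    intro P hP
    obtain ⟨hcard, hx, hcapP⟩ := hP
    have hgpP : GenPos P := by
      refine ⟨hx, ?_⟩
      intro p hp q hq r hr hpq hpr hqr hcol
      have key : ∀ a ∈ P, ∀ b ∈ P, ∀ c ∈ P, a.1 < b.1 → b.1 < c.1 →
          a ∈ ({p, q, r} : Set (ℝ × ℝ)) → b ∈ ({p, q, r} : Set (ℝ × ℝ)) →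
          c ∈ ({p, q, r} : Set (ℝ × ℝ)) → False := by
        intro a ha b hb c hc h1 h2 has hbs hcs
        have e := cross_eq_of_collinear hcol has hbs hcs
        have := (hcapP a ha b hb c hc h1 h2).2.2
        linarith
      rcases lt_or_gt_of_ne (hx p hp q hq hpq) with h1 | h1 <;>
        rcases lt_or_gt_of_ne (hx p hp r hr hpr) with h2 | h2 <;>
          rcases lt_or_gt_of_ne (hx q hq r hr hqr) with h3 | h3
      · exact key p hp q hq r hr h1 h3 (by simp) (by simp) (by simp)
      · exact key p hp r hr q hq h2 h3 (by simp) (by simp) (by simp)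
      · linarith
      · exact key r hr p hp q hq h2 h1 (by simp) (by simp) (by simp)
      · exact key q hq p hp r hr h1 h2 (by simp) (by simp) (by simp)
      · linarith
      · exact key q hq r hr p hp h3 h2 (by simp) (by simp) (by simp)
      · exact key r hr q hq p hp h3 h1 (by simp) (by simp) (by simp)
    refine ⟨hgpP, ?_⟩
    intro q hq hgen
    by_cases hall : ∀ a ∈ insert q P, ∀ b ∈ insert q P, ∀ c ∈ insert q P,
        a.1 < b.1 → b.1 < c.1 → Cap3 a b c
    · refine ⟨insert q P, le_refl _, Finset.mem_insert_self _ _, Or.inr ⟨?_, hgen.1, hall⟩⟩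
      rw [Finset.card_insert_of_notMem hq, hcard]
      omega
    · push_neg at hall
      obtain ⟨a, ha, b, hb, c, hc, h1, h2, hnab⟩ := hall
      have hab : a ≠ b := fun h => by rw [h] at h1; exact lt_irrefl _ h1
      have hbc : b ≠ c := fun h => by rw [h] at h2; exact lt_irrefl _ h2
      have hac : a ≠ c := fun h => by rw [h] at h1; linarith
      have hncol := hgen.2 a ha b hb c hc hab hac hbc
      have hne : (b.2 - a.2) * (c.1 - a.1) ≠ (c.2 - a.2) * (b.1 - a.1) :=
        fun h => hncol (collinear_of_cross (ne_of_lt h1) h)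
      have hcup3 : Cup3 a b c := by
        refine ⟨h1, h2, lt_of_le_of_ne ?_ hne⟩
        by_contra hgt
        exact hnab ⟨h1, h2, lt_of_not_ge hgt⟩
      have hqin : q = a ∨ q = b ∨ q = c := by
        by_contra hcon
        push_neg at hcon
        obtain ⟨n1, n2, n3⟩ := hcon
        have ha' : a ∈ P := (Finset.mem_insert.1 ha).resolve_left fun h => n1 h.symm
        have hb' : b ∈ P := (Finset.mem_insert.1 hb).resolve_left fun h => n2 h.symm
        have hc' : c ∈ P := (Finset.mem_insert.1 hc).resolve_left fun h => n3 h.symm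
        exact hnab (hcapP a ha' b hb' c hc' h1 h2)
      refine ⟨{a, b, c}, ?_, ?_, Or.inl ⟨?_, ?_, ?_⟩⟩
      · intro x hx
        simp only [Finset.mem_insert, Finset.mem_singleton] at hx
        rcases hx with rfl | rfl | rfl <;> assumption
      · rcases hqin with rfl | rfl | rfl <;> simp
      · rw [Finset.card_insert_of_notMem (by simp [hab, hac]),
          Finset.card_insert_of_notMem (by simp [hbc]), Finset.card_singleton]
      · intro x hx y hy hxy
        simp only [Finset.mem_insert, Finset.mem_singleton] at hx hy
        rcases hx with rfl | rfl | rfl <;> rcases hy with rfl | rfl | rfl <;>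
          first
            | exact absurd rfl hxy
            | exact ne_of_lt (by linarith)
            | exact ne_of_gt (by linarith)
      · intro x hx y hy z hz hxy hyz
        simp only [Finset.mem_insert, Finset.mem_singleton] at hx hy hz
        rcases hx with rfl | rfl | rfl <;> rcases hy with rfl | rfl | rfl <;>
          rcases hz with rfl | rfl | rfl <;>
          first
            | exact hcup3
            | (exfalso; linarith)
end

section
/- Let k ≥ 5 and l ≥ 5 be integers. Every finite point set in the plane in general position that is (k,l)-semisaturated (with respect to k-cups and l-caps) has at least 2k + 2l − 12 points. -/
lemma collinear_det {u v w : ℝ × ℝ} (h : Collinear ℝ ({u, v, w} : Set (ℝ × ℝ))) :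
    (v.1 - u.1) * (w.2 - u.2) - (v.2 - u.2) * (w.1 - u.1) = 0 := by
  rw [collinear_iff_of_mem (Set.mem_insert u {v, w})] at h
  obtain ⟨d, hd⟩ := h
  obtain ⟨r1, h1⟩ := hd v (by simp)
  obtain ⟨r2, h2⟩ := hd w (by simp)
  have e1 : v.1 - u.1 = r1 * d.1 := by rw [h1]; simp [Prod.ext_iff]
  have e2 : v.2 - u.2 = r1 * d.2 := by rw [h1]; simp [Prod.ext_iff]
  have e3 : w.1 - u.1 = r2 * d.1 := by rw [h2]; simp [Prod.ext_iff]
  have e4 : w.2 - u.2 = r2 * d.2 := by rw [h2]; simp [Prod.ext_iff]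
  rw [e1, e2, e3, e4]; ring

lemma cup_cap_inter {m m' : ℕ} {U C : Finset (ℝ × ℝ)} (hU : IsCup m U) (hC : IsCap m' C) :
    (U ∩ C).card ≤ 2 := by
  by_contra hcon
  push_neg at hcon
  obtain ⟨a, b, c, ha, hb, hc, hab, hac, hbc⟩ := Finset.two_lt_card_iff.mp hcon
  have key : ∀ x y z : ℝ × ℝ, x ∈ U ∩ C → y ∈ U ∩ C → z ∈ U ∩ C →
      x.1 < y.1 → y.1 < z.1 → False := by
    intro x y z hx hy hz h1 h2
    have hx' := Finset.mem_inter.mp hx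
    have hy' := Finset.mem_inter.mp hy
    have hz' := Finset.mem_inter.mp hz
    have hcup := hU.2.2 x hx'.1 y hy'.1 z hz'.1 h1 h2
    have hcap := hC.2.2 x hx'.2 y hy'.2 z hz'.2 h1 h2
    exact absurd hcup.2.2 (not_lt.mpr (le_of_lt hcap.2.2))
  have haU := (Finset.mem_inter.mp ha).1
  have hbU := (Finset.mem_inter.mp hb).1
  have hcU := (Finset.mem_inter.mp hc).1
  have hxab := hU.2.1 a haU b hbU hab
  have hxac := hU.2.1 a haU c hcU hac
  have hxbc := hU.2.1 b hbU c hcU hbc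
  rcases hxab.lt_or_gt with h1 | h1 <;> rcases hxac.lt_or_gt with h2 | h2 <;>
    rcases hxbc.lt_or_gt with h3 | h3
  · exact key a b c ha hb hc h1 h3
  · exact key a c b ha hc hb h2 h3
  · linarith
  · exact key c a b hc ha hb h2 h1
  · exact key b a c hb ha hc h1 h2
  · linarith
  · exact key b c a hb hc ha h3 h2
  · exact key c b a hc hb ha h3 h1

lemma exists_cup_side {k l : ℕ} (hk : 5 ≤ k) (hl : 5 ≤ l)
    {P : Finset (ℝ × ℝ)} (hgp : GenPos P) (hsat : CupCapSemiSat k l P)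
    (t : ℝ) (ht : ∀ p ∈ P, p.1 ≠ t) :
    ∃ U ⊆ P, IsCup (k - 1) U ∧ ((∀ p ∈ U, p.1 < t) ∨ (∀ p ∈ U, t < p.1)) := by
  classical
  obtain ⟨M, hM⟩ := Finset.exists_le ((P ×ˢ P).image
    (fun ab : (ℝ × ℝ) × (ℝ × ℝ) => ab.1.2 + (ab.2.2 - ab.1.2) * (t - ab.1.1) / (ab.2.1 - ab.1.1)))
  set q : ℝ × ℝ := (t, M + 1) with hqdef
  have hq1 : q.1 = t := rfl
  have hq2 : q.2 = M + 1 := rfl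
  have hdet : ∀ a ∈ P, ∀ b ∈ P, a.1 < b.1 →
      (b.2 - a.2) * (t - a.1) < (M + 1 - a.2) * (b.1 - a.1) := by
    intro a ha b hb hab
    have hmem : a.2 + (b.2 - a.2) * (t - a.1) / (b.1 - a.1) ∈ (P ×ˢ P).image
        (fun ab : (ℝ × ℝ) × (ℝ × ℝ) => ab.1.2 + (ab.2.2 - ab.1.2) * (t - ab.1.1) / (ab.2.1 - ab.1.1)) :=
      Finset.mem_image.mpr ⟨(a, b), Finset.mem_product.mpr ⟨ha, hb⟩, rfl⟩
    have h1 := hM _ hmem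
    have hpos : (0 : ℝ) < b.1 - a.1 := by linarith
    have h2 : (b.2 - a.2) * (t - a.1) / (b.1 - a.1) < M + 1 - a.2 := by linarith
    have h3 := (div_lt_iff₀ hpos).mp h2
    linarith
  have hqP : q ∉ P := fun h => ht q h rfl
  have hnlin : ∀ a ∈ P, ∀ b ∈ P, a ≠ b → ¬ Collinear ℝ ({q, a, b} : Set (ℝ × ℝ)) := by
    intro a ha b hb hab hcol
    have h0 := collinear_det hcol
    rw [hq1, hq2] at h0
    rcases (hgp.1 a ha b hb hab).lt_or_gt with h | h
    · have h4 := hdet a ha b hb h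
      nlinarith [h0, h4]
    · have h4 := hdet b hb a ha h
      nlinarith [h0, h4]
  have hgp' : GenPos (insert q P) := by
    constructor
    · intro p hp r hr hne
      rcases Finset.mem_insert.mp hp with rfl | hp <;> rcases Finset.mem_insert.mp hr with rfl | hr
      · exact absurd rfl hne
      · intro h; exact ht r hr h.symm
      · intro h; exact ht p hp (by rw [h])
      · exact hgp.1 p hp r hr hne
    · intro u hu v hv w hw huv huw hvw
      rcases Finset.mem_insert.mp hu with rfl | hu
      · rcases Finset.mem_insert.mp hv with rfl | hv
        · exact absurd rfl huv
        · rcases Finset.mem_insert.mp hw with rfl | hw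
          · exact absurd rfl huw
          · exact hnlin v hv w hw hvw
      · rcases Finset.mem_insert.mp hv with rfl | hv
        · rcases Finset.mem_insert.mp hw with rfl | hw
          · exact absurd rfl hvw
          · intro hcol
            exact hnlin u hu w hw huw (hcol.subset (by intro x hx; simp at hx ⊢; tauto))
        · rcases Finset.mem_insert.mp hw with rfl | hw
          · intro hcol
            exact hnlin u hu v hv huv (hcol.subset (by intro x hx; simp at hx ⊢; tauto))
          · exact hgp.2 u hu v hv w hw huv huw hvw
  obtain ⟨S, hSsub, hqS, hScc⟩ := hsat q hqP hgp'
  have hSP : S.erase q ⊆ P := by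
    intro x hx
    have hx1 := Finset.mem_erase.mp hx
    rcases Finset.mem_insert.mp (hSsub hx1.2) with h | h
    · exact absurd h hx1.1
    · exact h
  rcases hScc with hcup | hcap
  · refine ⟨S.erase q, hSP, ⟨?_, ?_, ?_⟩, ?_⟩
    · rw [Finset.card_erase_of_mem hqS, hcup.1]
    · intro a ha b hb hab
      exact hcup.2.1 a (Finset.mem_of_mem_erase ha) b (Finset.mem_of_mem_erase hb) hab
    · intro a ha b hb c hc h1 h2
      exact hcup.2.2 a (Finset.mem_of_mem_erase ha) b (Finset.mem_of_mem_erase hb)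
        c (Finset.mem_of_mem_erase hc) h1 h2
    · have hnoboth : ¬ ((∃ a ∈ S.erase q, a.1 < t) ∧ ∃ b ∈ S.erase q, t < b.1) := by
        rintro ⟨⟨a, ha, hat⟩, b, hb, hbt⟩
        have haP := hSP ha
        have hbP := hSP hb
        have hc := hcup.2.2 a (Finset.mem_of_mem_erase ha) q hqS b (Finset.mem_of_mem_erase hb)
          (by rw [hq1]; exact hat) (by rw [hq1]; exact hbt)
        have h3 := hc.2.2
        rw [hq1, hq2] at h3
        have h4 := hdet a haP b hbP (lt_trans hat hbt)
        linarith
      by_cases hex : ∃ b ∈ S.erase q, t < b.1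
      · right; intro p hp
        rcases (ht p (hSP hp)).lt_or_gt with h | h
        · exact absurd ⟨⟨p, hp, h⟩, hex⟩ hnoboth
        · exact h
      · left; intro p hp
        rcases (ht p (hSP hp)).lt_or_gt with h | h
        · exact h
        · exact absurd ⟨p, hp, h⟩ hex
  · exfalso
    have hcard : 4 ≤ (S.erase q).card := by
      rw [Finset.card_erase_of_mem hqS, hcap.1]; omega
    have keyL : ∀ a b : ℝ × ℝ, a ∈ S.erase q → b ∈ S.erase q → a.1 < b.1 → b.1 < t → False := by
      intro a b ha hb h1 h2
      have hc := hcap.2.2 a (Finset.mem_of_mem_erase ha) b (Finset.mem_of_mem_erase hb) q hqS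
        h1 (by rw [hq1]; exact h2)
      have h3 := hc.2.2
      rw [hq1, hq2] at h3
      have h4 := hdet a (hSP ha) b (hSP hb) h1
      linarith
    have keyR : ∀ a b : ℝ × ℝ, a ∈ S.erase q → b ∈ S.erase q → t < a.1 → a.1 < b.1 → False := by
      intro a b ha hb h1 h2
      have hc := hcap.2.2 q hqS a (Finset.mem_of_mem_erase ha) b (Finset.mem_of_mem_erase hb)
        (by rw [hq1]; exact h1) h2
      have h3 := hc.2.2
      rw [hq1, hq2] at h3
      have h4 := hdet a (hSP ha) b (hSP hb) h2
      nlinarith [h3, h4]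
    set A := (S.erase q).filter (fun p => p.1 < t) with hA
    set B := (S.erase q).filter (fun p => t < p.1) with hB
    have hcover : S.erase q ⊆ A ∪ B := by
      intro x hx
      rcases (ht x (hSP hx)).lt_or_gt with h | h
      · exact Finset.mem_union_left _ (Finset.mem_filter.mpr ⟨hx, h⟩)
      · exact Finset.mem_union_right _ (Finset.mem_filter.mpr ⟨hx, h⟩)
    have h2cards : 2 ≤ A.card ∨ 2 ≤ B.card := by
      have hle := Finset.card_le_card hcover
      have hun := Finset.card_union_le A B
      omega
    rcases h2cards with h2 | h2
    · obtain ⟨a, ha, b, hb, hab⟩ := Finset.one_lt_card.mp (by omega : 1 < A.card)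
      have ha' := Finset.mem_filter.mp ha
      have hb' := Finset.mem_filter.mp hb
      have hx := hcap.2.1 a (Finset.mem_of_mem_erase ha'.1) b (Finset.mem_of_mem_erase hb'.1) hab
      rcases hx.lt_or_gt with h | h
      · exact keyL a b ha'.1 hb'.1 h hb'.2
      · exact keyL b a hb'.1 ha'.1 h ha'.2
    · obtain ⟨a, ha, b, hb, hab⟩ := Finset.one_lt_card.mp (by omega : 1 < B.card)
      have ha' := Finset.mem_filter.mp ha
      have hb' := Finset.mem_filter.mp hb
      have hx := hcap.2.1 a (Finset.mem_of_mem_erase ha'.1) b (Finset.mem_of_mem_erase hb'.1) hab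
      rcases hx.lt_or_gt with h | h
      · exact keyR a b ha'.1 hb'.1 ha'.2 h
      · exact keyR b a hb'.1 ha'.1 hb'.2 h

lemma exists_cap_side {k l : ℕ} (hk : 5 ≤ k) (hl : 5 ≤ l)
    {P : Finset (ℝ × ℝ)} (hgp : GenPos P) (hsat : CupCapSemiSat k l P)
    (t : ℝ) (ht : ∀ p ∈ P, p.1 ≠ t) :
    ∃ C ⊆ P, IsCap (l - 1) C ∧ ((∀ p ∈ C, p.1 < t) ∨ (∀ p ∈ C, t < p.1)) := by
  classical
  obtain ⟨M, hM⟩ := Finset.exists_le ((P ×ˢ P).image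
    (fun ab : (ℝ × ℝ) × (ℝ × ℝ) => -(ab.1.2 + (ab.2.2 - ab.1.2) * (t - ab.1.1) / (ab.2.1 - ab.1.1))))
  set q : ℝ × ℝ := (t, -M - 1) with hqdef
  have hq1 : q.1 = t := rfl
  have hq2 : q.2 = -M - 1 := rfl
  have hdet : ∀ a ∈ P, ∀ b ∈ P, a.1 < b.1 →
      (-M - 1 - a.2) * (b.1 - a.1) < (b.2 - a.2) * (t - a.1) := by
    intro a ha b hb hab
    have hmem : -(a.2 + (b.2 - a.2) * (t - a.1) / (b.1 - a.1)) ∈ (P ×ˢ P).image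
        (fun ab : (ℝ × ℝ) × (ℝ × ℝ) => -(ab.1.2 + (ab.2.2 - ab.1.2) * (t - ab.1.1) / (ab.2.1 - ab.1.1))) :=
      Finset.mem_image.mpr ⟨(a, b), Finset.mem_product.mpr ⟨ha, hb⟩, rfl⟩
    have h1 := hM _ hmem
    have hpos : (0 : ℝ) < b.1 - a.1 := by linarith
    have h2 : -M - 1 - a.2 < (b.2 - a.2) * (t - a.1) / (b.1 - a.1) := by linarith
    have h3 := (lt_div_iff₀ hpos).mp h2
    linarith
  have hqP : q ∉ P := fun h => ht q h rfl
  have hnlin : ∀ a ∈ P, ∀ b ∈ P, a ≠ b → ¬ Collinear ℝ ({q, a, b} : Set (ℝ × ℝ)) := by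
    intro a ha b hb hab hcol
    have h0 := collinear_det hcol
    rw [hq1, hq2] at h0
    rcases (hgp.1 a ha b hb hab).lt_or_gt with h | h
    · have h4 := hdet a ha b hb h
      nlinarith [h0, h4]
    · have h4 := hdet b hb a ha h
      nlinarith [h0, h4]
  have hgp' : GenPos (insert q P) := by
    constructor
    · intro p hp r hr hne
      rcases Finset.mem_insert.mp hp with rfl | hp <;> rcases Finset.mem_insert.mp hr with rfl | hr
      · exact absurd rfl hne
      · intro h; exact ht r hr h.symm
      · intro h; exact ht p hp (by rw [h])
      · exact hgp.1 p hp r hr hne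
    · intro u hu v hv w hw huv huw hvw
      rcases Finset.mem_insert.mp hu with rfl | hu
      · rcases Finset.mem_insert.mp hv with rfl | hv
        · exact absurd rfl huv
        · rcases Finset.mem_insert.mp hw with rfl | hw
          · exact absurd rfl huw
          · exact hnlin v hv w hw hvw
      · rcases Finset.mem_insert.mp hv with rfl | hv
        · rcases Finset.mem_insert.mp hw with rfl | hw
          · exact absurd rfl hvw
          · intro hcol
            exact hnlin u hu w hw huw (hcol.subset (by intro x hx; simp at hx ⊢; tauto))
        · rcases Finset.mem_insert.mp hw with rfl | hw
          · intro hcol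
            exact hnlin u hu v hv huv (hcol.subset (by intro x hx; simp at hx ⊢; tauto))
          · exact hgp.2 u hu v hv w hw huv huw hvw
  obtain ⟨S, hSsub, hqS, hScc⟩ := hsat q hqP hgp'
  have hSP : S.erase q ⊆ P := by
    intro x hx
    have hx1 := Finset.mem_erase.mp hx
    rcases Finset.mem_insert.mp (hSsub hx1.2) with h | h
    · exact absurd h hx1.1
    · exact h
  rcases hScc with hcup | hcap
  · exfalso
    have hcard : 4 ≤ (S.erase q).card := by
      rw [Finset.card_erase_of_mem hqS, hcup.1]; omega
    have keyL : ∀ a b : ℝ × ℝ, a ∈ S.erase q → b ∈ S.erase q → a.1 < b.1 → b.1 < t → False := by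
      intro a b ha hb h1 h2
      have hc := hcup.2.2 a (Finset.mem_of_mem_erase ha) b (Finset.mem_of_mem_erase hb) q hqS
        h1 (by rw [hq1]; exact h2)
      have h3 := hc.2.2
      rw [hq1, hq2] at h3
      have h4 := hdet a (hSP ha) b (hSP hb) h1
      linarith
    have keyR : ∀ a b : ℝ × ℝ, a ∈ S.erase q → b ∈ S.erase q → t < a.1 → a.1 < b.1 → False := by
      intro a b ha hb h1 h2
      have hc := hcup.2.2 q hqS a (Finset.mem_of_mem_erase ha) b (Finset.mem_of_mem_erase hb)
        (by rw [hq1]; exact h1) h2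
      have h3 := hc.2.2
      rw [hq1, hq2] at h3
      have h4 := hdet a (hSP ha) b (hSP hb) h2
      nlinarith [h3, h4]
    set A := (S.erase q).filter (fun p => p.1 < t) with hA
    set B := (S.erase q).filter (fun p => t < p.1) with hB
    have hcover : S.erase q ⊆ A ∪ B := by
      intro x hx
      rcases (ht x (hSP hx)).lt_or_gt with h | h
      · exact Finset.mem_union_left _ (Finset.mem_filter.mpr ⟨hx, h⟩)
      · exact Finset.mem_union_right _ (Finset.mem_filter.mpr ⟨hx, h⟩)
    have h2cards : 2 ≤ A.card ∨ 2 ≤ B.card := by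
      have hle := Finset.card_le_card hcover
      have hun := Finset.card_union_le A B
      omega
    rcases h2cards with h2 | h2
    · obtain ⟨a, ha, b, hb, hab⟩ := Finset.one_lt_card.mp (by omega : 1 < A.card)
      have ha' := Finset.mem_filter.mp ha
      have hb' := Finset.mem_filter.mp hb
      have hx := hcup.2.1 a (Finset.mem_of_mem_erase ha'.1) b (Finset.mem_of_mem_erase hb'.1) hab
      rcases hx.lt_or_gt with h | h
      · exact keyL a b ha'.1 hb'.1 h hb'.2
      · exact keyL b a hb'.1 ha'.1 h ha'.2
    · obtain ⟨a, ha, b, hb, hab⟩ := Finset.one_lt_card.mp (by omega : 1 < B.card)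
      have ha' := Finset.mem_filter.mp ha
      have hb' := Finset.mem_filter.mp hb
      have hx := hcup.2.1 a (Finset.mem_of_mem_erase ha'.1) b (Finset.mem_of_mem_erase hb'.1) hab
      rcases hx.lt_or_gt with h | h
      · exact keyR a b ha'.1 hb'.1 ha'.2 h
      · exact keyR b a hb'.1 ha'.1 hb'.2 h
  · refine ⟨S.erase q, hSP, ⟨?_, ?_, ?_⟩, ?_⟩
    · rw [Finset.card_erase_of_mem hqS, hcap.1]
    · intro a ha b hb hab
      exact hcap.2.1 a (Finset.mem_of_mem_erase ha) b (Finset.mem_of_mem_erase hb) hab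
    · intro a ha b hb c hc h1 h2
      exact hcap.2.2 a (Finset.mem_of_mem_erase ha) b (Finset.mem_of_mem_erase hb)
        c (Finset.mem_of_mem_erase hc) h1 h2
    · have hnoboth : ¬ ((∃ a ∈ S.erase q, a.1 < t) ∧ ∃ b ∈ S.erase q, t < b.1) := by
        rintro ⟨⟨a, ha, hat⟩, b, hb, hbt⟩
        have haP := hSP ha
        have hbP := hSP hb
        have hc := hcap.2.2 a (Finset.mem_of_mem_erase ha) q hqS b (Finset.mem_of_mem_erase hb)
          (by rw [hq1]; exact hat) (by rw [hq1]; exact hbt)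
        have h3 := hc.2.2
        rw [hq1, hq2] at h3
        have h4 := hdet a haP b hbP (lt_trans hat hbt)
        linarith
      by_cases hex : ∃ b ∈ S.erase q, t < b.1
      · right; intro p hp
        rcases (ht p (hSP hp)).lt_or_gt with h | h
        · exact absurd ⟨⟨p, hp, h⟩, hex⟩ hnoboth
        · exact h
      · left; intro p hp
        rcases (ht p (hSP hp)).lt_or_gt with h | h
        · exact h
        · exact absurd ⟨p, hp, h⟩ hex

lemma exists_two_sided {P : Finset (ℝ × ℝ)} (hgp : GenPos P)
    (Q : Finset (ℝ × ℝ) → Prop) (hQcard : ∀ V, Q V → 1 < V.card)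
    (side : ∀ t : ℝ, (∀ p ∈ P, p.1 ≠ t) →
      ∃ V ⊆ P, Q V ∧ ((∀ p ∈ V, p.1 < t) ∨ (∀ p ∈ V, t < p.1))) :
    ∃ (i : ℝ) (VR VL : Finset (ℝ × ℝ)), VR ⊆ P ∧ VL ⊆ P ∧ Q VR ∧ Q VL ∧
      (∀ p ∈ VR, i ≤ p.1) ∧ (∀ p ∈ VL, p.1 ≤ i) := by
  classical
  set F := P.filter (fun p => ∃ V, V ⊆ P ∧ Q V ∧ p ∈ V ∧ ∀ r ∈ V, p.1 ≤ r.1) with hF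
  -- F is nonempty
  obtain ⟨M0, hM0⟩ := Finset.exists_le (P.image Prod.fst)
  have hfresh0 : ∀ p ∈ P, p.1 ≠ M0 + 1 := by
    intro p hp h
    have := hM0 p.1 (Finset.mem_image_of_mem _ hp)
    linarith
  obtain ⟨V0, hV0P, hQ0, _⟩ := side (M0 + 1) hfresh0
  have hV0ne : V0.Nonempty := Finset.card_pos.mp (by have := hQcard V0 hQ0; omega)
  obtain ⟨p0, hp0V, hp0min⟩ := Finset.exists_min_image V0 Prod.fst hV0ne
  have hFne : F.Nonempty := ⟨p0, Finset.mem_filter.mpr ⟨hV0P hp0V, V0, hV0P, hQ0, hp0V, hp0min⟩⟩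
  obtain ⟨pR, hpRF, hpRmax⟩ := Finset.exists_max_image F Prod.fst hFne
  obtain ⟨hpRP, VR, hVRP, hQR, hpRV, hpRmin⟩ := Finset.mem_filter.mp hpRF
  -- the set of points strictly right of pR.1 is nonempty
  set s2 := P.filter (fun p => pR.1 < p.1) with hs2
  have hs2ne : s2.Nonempty := by
    obtain ⟨a, ha, b, hb, hab⟩ := Finset.one_lt_card.mp (hQcard VR hQR)
    have hxab := hgp.1 a (hVRP ha) b (hVRP hb) hab
    by_cases hai : a.1 = pR.1
    · have hbi : pR.1 < b.1 := lt_of_le_of_ne (hpRmin b hb) (fun h => hxab (by rw [hai, h]))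
      exact ⟨b, Finset.mem_filter.mpr ⟨hVRP hb, hbi⟩⟩
    · have hai' : pR.1 < a.1 := lt_of_le_of_ne (hpRmin a ha) (Ne.symm hai)
      exact ⟨a, Finset.mem_filter.mpr ⟨hVRP ha, hai'⟩⟩
  obtain ⟨p2, hp2s, hp2min⟩ := Finset.exists_min_image s2 Prod.fst hs2ne
  have hp2gt : pR.1 < p2.1 := (Finset.mem_filter.mp hp2s).2
  set t := (pR.1 + p2.1) / 2 with htdef
  have hti : pR.1 < t := by rw [htdef]; linarith
  have htx : t < p2.1 := by rw [htdef]; linarith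
  have ht : ∀ p ∈ P, p.1 ≠ t := by
    intro p hp h
    have hps : p ∈ s2 := Finset.mem_filter.mpr ⟨hp, by rw [h]; exact hti⟩
    have := hp2min p hps
    rw [h] at this
    linarith
  obtain ⟨VL, hVLP, hQL, hside⟩ := side t ht
  rcases hside with hL | hR
  · refine ⟨pR.1, VR, VL, hVRP, hVLP, hQR, hQL, hpRmin, ?_⟩
    intro p hp
    by_contra hcon
    push_neg at hcon
    have hps : p ∈ s2 := Finset.mem_filter.mpr ⟨hVLP hp, hcon⟩
    have := hp2min p hps
    have := hL p hp
    linarith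
  · exfalso
    have hVLne : VL.Nonempty := Finset.card_pos.mp (by have := hQcard VL hQL; omega)
    obtain ⟨p', hp'V, hp'min⟩ := Finset.exists_min_image VL Prod.fst hVLne
    have hp'F : p' ∈ F := Finset.mem_filter.mpr ⟨hVLP hp'V, VL, hVLP, hQL, hp'V, hp'min⟩
    have h1 := hpRmax p' hp'F
    have h2 := hR p' hp'V
    linarith

/-- For `k, l ≥ 5`, every finite planar point set in general position that is
`(k,l)`-semisaturated (with respect to `k`-cups and `l`-caps) has at least `2k + 2l - 12`
points. -/
theorem cupcap_semisat_lower_bound (k l : ℕ) (hk : 5 ≤ k) (hl : 5 ≤ l)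
    (P : Finset (ℝ × ℝ)) (hgp : GenPos P) (hsat : CupCapSemiSat k l P) :
    2 * k + 2 * l - 12 ≤ P.card := by
  classical
  obtain ⟨iU, UR, UL, hURP, hULP, hQUR, hQUL, hURge, hULle⟩ :=
    exists_two_sided hgp (IsCup (k - 1)) (fun V hV => by rw [hV.1]; omega)
      (fun t ht => exists_cup_side hk hl hgp hsat t ht)
  obtain ⟨iC, CR, CL, hCRP, hCLP, hQCR, hQCL, hCRge, hCLle⟩ :=
    exists_two_sided hgp (IsCap (l - 1)) (fun V hV => by rw [hV.1]; omega)
      (fun t ht => exists_cap_side hk hl hgp hsat t ht)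
  -- pairwise intersection bounds
  have distx : ∀ a ∈ P, ∀ b ∈ P, a.1 = b.1 → a = b := by
    intro a ha b hb h
    by_contra hne
    exact hgp.1 a ha b hb hne h
  have hUU : (UL ∩ UR).card ≤ 1 := by
    rw [Finset.card_le_one]
    intro a ha b hb
    have ha' := Finset.mem_inter.mp ha
    have hb' := Finset.mem_inter.mp hb
    have hax : a.1 = iU := le_antisymm (hULle a ha'.1) (hURge a ha'.2)
    have hbx : b.1 = iU := le_antisymm (hULle b hb'.1) (hURge b hb'.2)
    exact distx a (hULP ha'.1) b (hULP hb'.1) (by rw [hax, hbx])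
  have hCC : (CL ∩ CR).card ≤ 1 := by
    rw [Finset.card_le_one]
    intro a ha b hb
    have ha' := Finset.mem_inter.mp ha
    have hb' := Finset.mem_inter.mp hb
    have hax : a.1 = iC := le_antisymm (hCLle a ha'.1) (hCRge a ha'.2)
    have hbx : b.1 = iC := le_antisymm (hCLle b hb'.1) (hCRge b hb'.2)
    exact distx a (hCLP ha'.1) b (hCLP hb'.1) (by rw [hax, hbx])
  have hULCL : (UL ∩ CL).card ≤ 2 := cup_cap_inter hQUL hQCL
  have hURCR : (UR ∩ CR).card ≤ 2 := cup_cap_inter hQUR hQCR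
  have hcross : (UL ∩ CR).card + (UR ∩ CL).card ≤ 2 := by
    rcases lt_trichotomy iU iC with h | h | h
    · have h1 : (UL ∩ CR).card = 0 := by
        rw [Finset.card_eq_zero]
        apply Finset.eq_empty_of_forall_notMem
        intro a ha
        have ha' := Finset.mem_inter.mp ha
        have := hULle a ha'.1
        have := hCRge a ha'.2
        linarith
      have h2 : (UR ∩ CL).card ≤ 2 := cup_cap_inter hQUR hQCL
      omega
    · subst h
      have h1 : (UL ∩ CR).card ≤ 1 := by
        rw [Finset.card_le_one]
        intro a ha b hb
        have ha' := Finset.mem_inter.mp ha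
        have hb' := Finset.mem_inter.mp hb
        have hax : a.1 = iU := le_antisymm (hULle a ha'.1) (hCRge a ha'.2)
        have hbx : b.1 = iU := le_antisymm (hULle b hb'.1) (hCRge b hb'.2)
        exact distx a (hULP ha'.1) b (hULP hb'.1) (by rw [hax, hbx])
      have h2 : (UR ∩ CL).card ≤ 1 := by
        rw [Finset.card_le_one]
        intro a ha b hb
        have ha' := Finset.mem_inter.mp ha
        have hb' := Finset.mem_inter.mp hb
        have hax : a.1 = iU := le_antisymm (hCLle a ha'.2) (hURge a ha'.1)
        have hbx : b.1 = iU := le_antisymm (hCLle b hb'.2) (hURge b hb'.1)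
        exact distx a (hURP ha'.1) b (hURP hb'.1) (by rw [hax, hbx])
      omega
    · have h1 : (UR ∩ CL).card = 0 := by
        rw [Finset.card_eq_zero]
        apply Finset.eq_empty_of_forall_notMem
        intro a ha
        have ha' := Finset.mem_inter.mp ha
        have := hURge a ha'.1
        have := hCLle a ha'.2
        linarith
      have h2 : (UL ∩ CR).card ≤ 2 := cup_cap_inter hQUL hQCR
      omega
  -- inclusion-exclusion
  have e1 := Finset.card_union_add_card_inter UL UR
  have e2 := Finset.card_union_add_card_inter (UL ∪ UR) CL
  have e3 := Finset.card_union_add_card_inter ((UL ∪ UR) ∪ CL) CR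
  have i2 : ((UL ∪ UR) ∩ CL).card ≤ (UL ∩ CL).card + (UR ∩ CL).card := by
    rw [Finset.union_inter_distrib_right]
    exact Finset.card_union_le _ _
  have i3 : (((UL ∪ UR) ∪ CL) ∩ CR).card ≤
      (UL ∩ CR).card + (UR ∩ CR).card + (CL ∩ CR).card := by
    rw [Finset.union_inter_distrib_right, Finset.union_inter_distrib_right]
    calc ((UL ∩ CR ∪ UR ∩ CR) ∪ CL ∩ CR).card
        ≤ (UL ∩ CR ∪ UR ∩ CR).card + (CL ∩ CR).card := Finset.card_union_le _ _
      _ ≤ (UL ∩ CR).card + (UR ∩ CR).card + (CL ∩ CR).card := by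
          have := Finset.card_union_le (UL ∩ CR) (UR ∩ CR)
          omega
  have hWsub : ((UL ∪ UR) ∪ CL) ∪ CR ⊆ P := by
    intro x hx
    rcases Finset.mem_union.mp hx with hx | hx
    · rcases Finset.mem_union.mp hx with hx | hx
      · rcases Finset.mem_union.mp hx with hx | hx
        · exact hULP hx
        · exact hURP hx
      · exact hCLP hx
    · exact hCRP hx
  have hW := Finset.card_le_card hWsub
  have c1 : UL.card = k - 1 := hQUL.1
  have c2 : UR.card = k - 1 := hQUR.1
  have c3 : CL.card = l - 1 := hQCL.1
  have c4 : CR.card = l - 1 := hQCR.1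
  omega
end

section
/- Let k ≥ 5 and l ≥ 5 be integers. There exists a finite point set in the plane in general position with exactly 2k + 2l − 10 points that is (k,l)-semisaturated (with respect to k-cups and l-caps). -/
namespace CCSat

def Yz (W n : ℤ) : ℤ := if Even n then n ^ 2 else -n ^ 2 + 16 * W * n + 18 * W ^ 2

noncomputable def pt (W n : ℤ) : ℝ × ℝ := ((n : ℝ), ((Yz W n : ℤ) : ℝ))

lemma Yz_even {W n : ℤ} (h : Even n) : Yz W n = n ^ 2 := if_pos h

lemma Yz_odd {W n : ℤ} (h : Odd n) : Yz W n = -n ^ 2 + 16 * W * n + 18 * W ^ 2 :=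
  if_neg (Int.not_even_iff_odd.2 h)

lemma pt_injective (W : ℤ) : Function.Injective (pt W) := by
  intro a b h
  have : ((a : ℝ)) = b := congrArg Prod.fst h
  exact_mod_cast this

lemma pt_fst (W n : ℤ) : (pt W n).1 = (n : ℝ) := rfl

noncomputable def sl (a b : ℝ × ℝ) : ℝ := (b.2 - a.2) / (b.1 - a.1)

lemma cup3_iff₁ {a b c : ℝ × ℝ} (h1 : a.1 < b.1) (h2 : b.1 < c.1) :
    Cup3 a b c ↔ sl a b < sl a c := by
  unfold Cup3 sl
  rw [div_lt_div_iff₀ (by linarith) (by linarith)]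
  constructor
  · rintro ⟨-, -, h⟩; linarith
  · intro h; exact ⟨h1, h2, by linarith⟩

lemma cup3_iff₂ {a b c : ℝ × ℝ} (h1 : a.1 < b.1) (h2 : b.1 < c.1) :
    Cup3 a b c ↔ sl a b < sl b c := by
  unfold Cup3 sl
  rw [div_lt_div_iff₀ (by linarith) (by linarith)]
  have key : (c.2 - a.2) * (b.1 - a.1) - (b.2 - a.2) * (c.1 - a.1)
      = (c.2 - b.2) * (b.1 - a.1) - (b.2 - a.2) * (c.1 - b.1) := by ring
  constructor
  · rintro ⟨-, -, h⟩; linarith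
  · intro h; exact ⟨h1, h2, by linarith⟩

lemma cup3_iff₃ {a b c : ℝ × ℝ} (h1 : a.1 < b.1) (h2 : b.1 < c.1) :
    Cup3 a b c ↔ sl a c < sl b c := by
  unfold Cup3 sl
  rw [div_lt_div_iff₀ (by linarith) (by linarith)]
  have key : (c.2 - a.2) * (b.1 - a.1) - (b.2 - a.2) * (c.1 - a.1)
      = (c.2 - b.2) * (c.1 - a.1) - (c.2 - a.2) * (c.1 - b.1) := by ring
  constructor
  · rintro ⟨-, -, h⟩; linarith
  · intro h; exact ⟨h1, h2, by linarith⟩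

lemma cap3_iff₁ {a b c : ℝ × ℝ} (h1 : a.1 < b.1) (h2 : b.1 < c.1) :
    Cap3 a b c ↔ sl a c < sl a b := by
  unfold Cap3 sl
  rw [div_lt_div_iff₀ (by linarith) (by linarith)]
  constructor
  · rintro ⟨-, -, h⟩; linarith
  · intro h; exact ⟨h1, h2, by linarith⟩

lemma cap3_iff₂ {a b c : ℝ × ℝ} (h1 : a.1 < b.1) (h2 : b.1 < c.1) :
    Cap3 a b c ↔ sl b c < sl a b := by
  unfold Cap3 sl
  rw [div_lt_div_iff₀ (by linarith) (by linarith)]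
  have key : (c.2 - a.2) * (b.1 - a.1) - (b.2 - a.2) * (c.1 - a.1)
      = (c.2 - b.2) * (b.1 - a.1) - (b.2 - a.2) * (c.1 - b.1) := by ring
  constructor
  · rintro ⟨-, -, h⟩; linarith
  · intro h; exact ⟨h1, h2, by linarith⟩

lemma cap3_iff₃ {a b c : ℝ × ℝ} (h1 : a.1 < b.1) (h2 : b.1 < c.1) :
    Cap3 a b c ↔ sl b c < sl a c := by
  unfold Cap3 sl
  rw [div_lt_div_iff₀ (by linarith) (by linarith)]
  have key : (c.2 - a.2) * (b.1 - a.1) - (b.2 - a.2) * (c.1 - a.1)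
      = (c.2 - b.2) * (c.1 - a.1) - (c.2 - a.2) * (c.1 - b.1) := by ring
  constructor
  · rintro ⟨-, -, h⟩; linarith
  · intro h; exact ⟨h1, h2, by linarith⟩

/-- Insert a new point to the left of a cup, given cup relations with the minimum. -/
lemma isCup_insert_min_forall {m : ℕ} {S : Finset (ℝ × ℝ)} {t₁ a : ℝ × ℝ}
    (hS : IsCup m S) (ht₁ : t₁ ∈ S) (hmin : ∀ s ∈ S, s ≠ t₁ → t₁.1 < s.1)
    (ha : a.1 < t₁.1) (hc : ∀ s ∈ S, s ≠ t₁ → Cup3 a t₁ s) :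
    IsCup (m + 1) (insert a S) := by
  obtain ⟨hcard, hdx, htr⟩ := hS
  have halt : ∀ s ∈ S, a.1 < s.1 := by
    intro s hs
    rcases eq_or_ne s t₁ with rfl | h
    · exact ha
    · linarith [hmin s hs h]
  have haS : a ∉ S := fun h => lt_irrefl _ (halt a h)
  refine ⟨by rw [Finset.card_insert_of_notMem haS, hcard], ?_, ?_⟩
  · intro p hp q hq hpq
    rcases Finset.mem_insert.1 hp with h1 | h1
    · subst h1
      rcases Finset.mem_insert.1 hq with h2 | h2
      · subst h2; exact absurd rfl hpq
      · exact ne_of_lt (halt _ h2)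
    · rcases Finset.mem_insert.1 hq with h2 | h2
      · subst h2; exact (ne_of_lt (halt _ h1)).symm
      · exact hdx p h1 q h2 hpq
  · intro p hp q hq r hr hpq hqr
    have hqS : q ∈ S := by
      rcases Finset.mem_insert.1 hq with h | h
      · subst h
        rcases Finset.mem_insert.1 hp with h' | h'
        · subst h'; exact absurd hpq (lt_irrefl _)
        · exact absurd hpq (by push_neg; linarith [halt p h'])
      · exact h
    have hrS : r ∈ S := by
      rcases Finset.mem_insert.1 hr with h | h
      · subst h
        rcases Finset.mem_insert.1 hp with h' | h'
        · subst h'; exact absurd (lt_trans hpq hqr) (lt_irrefl _)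
        · exact absurd (lt_trans hpq hqr) (by push_neg; linarith [halt p h'])
      · exact h
    rcases Finset.mem_insert.1 hp with rfl | hpS
    · -- p = a
      rcases eq_or_ne q t₁ with rfl | hqt
      · exact hc r hrS (fun h => by rw [h] at hqr; exact lt_irrefl _ hqr)
      · have c1 : Cup3 p t₁ q := hc q hqS hqt
        have ht1q : t₁.1 < q.1 := hmin q hqS hqt
        have hrt : r ≠ t₁ := fun h => by
          rw [h] at hqr; linarith
        have c3 : Cup3 t₁ q r := htr t₁ ht₁ q hqS r hrS ht1q hqr
        have e1 : sl p q < sl t₁ q := (cup3_iff₃ (by linarith) ht1q).1 c1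
        have e2 : sl t₁ q < sl q r := (cup3_iff₂ ht1q hqr).1 c3
        exact (cup3_iff₂ hpq hqr).2 (by linarith)
    · exact htr p hpS q hqS r hrS hpq hqr

/-- Insert a new point to the right of a cup, given cup relations with the maximum. -/
lemma isCup_insert_max_forall {m : ℕ} {S : Finset (ℝ × ℝ)} {t₁ a : ℝ × ℝ}
    (hS : IsCup m S) (ht₁ : t₁ ∈ S) (hmax : ∀ s ∈ S, s ≠ t₁ → s.1 < t₁.1)
    (ha : t₁.1 < a.1) (hc : ∀ s ∈ S, s ≠ t₁ → Cup3 s t₁ a) :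
    IsCup (m + 1) (insert a S) := by
  obtain ⟨hcard, hdx, htr⟩ := hS
  have halt : ∀ s ∈ S, s.1 < a.1 := by
    intro s hs
    rcases eq_or_ne s t₁ with rfl | h
    · exact ha
    · linarith [hmax s hs h]
  have haS : a ∉ S := fun h => lt_irrefl _ (halt a h)
  refine ⟨by rw [Finset.card_insert_of_notMem haS, hcard], ?_, ?_⟩
  · intro p hp q hq hpq
    rcases Finset.mem_insert.1 hp with h1 | h1
    · subst h1
      rcases Finset.mem_insert.1 hq with h2 | h2
      · subst h2; exact absurd rfl hpq
      · exact (ne_of_lt (halt _ h2)).symm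
    · rcases Finset.mem_insert.1 hq with h2 | h2
      · subst h2; exact ne_of_lt (halt _ h1)
      · exact hdx p h1 q h2 hpq
  · intro p hp q hq r hr hpq hqr
    have hpS : p ∈ S := by
      rcases Finset.mem_insert.1 hp with h | h
      · subst h
        rcases Finset.mem_insert.1 hr with h' | h'
        · subst h'; exact absurd (lt_trans hpq hqr) (lt_irrefl _)
        · exact absurd (lt_trans hpq hqr) (by push_neg; linarith [halt r h'])
      · exact h
    have hqS : q ∈ S := by
      rcases Finset.mem_insert.1 hq with h | h
      · subst h
        rcases Finset.mem_insert.1 hr with h' | h'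
        · subst h'; exact absurd hqr (lt_irrefl _)
        · exact absurd hqr (by push_neg; linarith [halt r h'])
      · exact h
    rcases Finset.mem_insert.1 hr with rfl | hrS
    · -- r = a
      rcases eq_or_ne q t₁ with rfl | hqt
      · exact hc p hpS (fun h => by rw [h] at hpq; exact lt_irrefl _ hpq)
      · have c1 : Cup3 q t₁ r := hc q hqS hqt
        have hqt1 : q.1 < t₁.1 := hmax q hqS hqt
        have hpt : p ≠ t₁ := fun h => by rw [h] at hpq; linarith
        have c3 : Cup3 p q t₁ := htr p hpS q hqS t₁ ht₁ hpq hqt1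
        have e1 : sl p q < sl q t₁ := (cup3_iff₂ hpq hqt1).1 c3
        have e2 : sl q t₁ < sl q r := (cup3_iff₁ hqt1 (by linarith)).1 c1
        exact (cup3_iff₂ hpq hqr).2 (by linarith)
    · exact htr p hpS q hqS r hrS hpq hqr

lemma isCap_insert_min_forall {m : ℕ} {S : Finset (ℝ × ℝ)} {t₁ a : ℝ × ℝ}
    (hS : IsCap m S) (ht₁ : t₁ ∈ S) (hmin : ∀ s ∈ S, s ≠ t₁ → t₁.1 < s.1)
    (ha : a.1 < t₁.1) (hc : ∀ s ∈ S, s ≠ t₁ → Cap3 a t₁ s) :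
    IsCap (m + 1) (insert a S) := by
  obtain ⟨hcard, hdx, htr⟩ := hS
  have halt : ∀ s ∈ S, a.1 < s.1 := by
    intro s hs
    rcases eq_or_ne s t₁ with rfl | h
    · exact ha
    · linarith [hmin s hs h]
  have haS : a ∉ S := fun h => lt_irrefl _ (halt a h)
  refine ⟨by rw [Finset.card_insert_of_notMem haS, hcard], ?_, ?_⟩
  · intro p hp q hq hpq
    rcases Finset.mem_insert.1 hp with h1 | h1
    · subst h1
      rcases Finset.mem_insert.1 hq with h2 | h2
      · subst h2; exact absurd rfl hpq
      · exact ne_of_lt (halt _ h2)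
    · rcases Finset.mem_insert.1 hq with h2 | h2
      · subst h2; exact (ne_of_lt (halt _ h1)).symm
      · exact hdx p h1 q h2 hpq
  · intro p hp q hq r hr hpq hqr
    have hqS : q ∈ S := by
      rcases Finset.mem_insert.1 hq with h | h
      · subst h
        rcases Finset.mem_insert.1 hp with h' | h'
        · subst h'; exact absurd hpq (lt_irrefl _)
        · exact absurd hpq (by push_neg; linarith [halt p h'])
      · exact h
    have hrS : r ∈ S := by
      rcases Finset.mem_insert.1 hr with h | h
      · subst h
        rcases Finset.mem_insert.1 hp with h' | h'
        · subst h'; exact absurd (lt_trans hpq hqr) (lt_irrefl _)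
        · exact absurd (lt_trans hpq hqr) (by push_neg; linarith [halt p h'])
      · exact h
    rcases Finset.mem_insert.1 hp with rfl | hpS
    · rcases eq_or_ne q t₁ with rfl | hqt
      · exact hc r hrS (fun h => by rw [h] at hqr; exact lt_irrefl _ hqr)
      · have c1 : Cap3 p t₁ q := hc q hqS hqt
        have ht1q : t₁.1 < q.1 := hmin q hqS hqt
        have c3 : Cap3 t₁ q r := htr t₁ ht₁ q hqS r hrS ht1q hqr
        have e1 : sl t₁ q < sl p q := (cap3_iff₃ (by linarith) ht1q).1 c1
        have e2 : sl q r < sl t₁ q := (cap3_iff₂ ht1q hqr).1 c3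
        exact (cap3_iff₂ hpq hqr).2 (by linarith)
    · exact htr p hpS q hqS r hrS hpq hqr

lemma isCap_insert_max_forall {m : ℕ} {S : Finset (ℝ × ℝ)} {t₁ a : ℝ × ℝ}
    (hS : IsCap m S) (ht₁ : t₁ ∈ S) (hmax : ∀ s ∈ S, s ≠ t₁ → s.1 < t₁.1)
    (ha : t₁.1 < a.1) (hc : ∀ s ∈ S, s ≠ t₁ → Cap3 s t₁ a) :
    IsCap (m + 1) (insert a S) := by
  obtain ⟨hcard, hdx, htr⟩ := hS
  have halt : ∀ s ∈ S, s.1 < a.1 := by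
    intro s hs
    rcases eq_or_ne s t₁ with rfl | h
    · exact ha
    · linarith [hmax s hs h]
  have haS : a ∉ S := fun h => lt_irrefl _ (halt a h)
  refine ⟨by rw [Finset.card_insert_of_notMem haS, hcard], ?_, ?_⟩
  · intro p hp q hq hpq
    rcases Finset.mem_insert.1 hp with h1 | h1
    · subst h1
      rcases Finset.mem_insert.1 hq with h2 | h2
      · subst h2; exact absurd rfl hpq
      · exact (ne_of_lt (halt _ h2)).symm
    · rcases Finset.mem_insert.1 hq with h2 | h2
      · subst h2; exact ne_of_lt (halt _ h1)
      · exact hdx p h1 q h2 hpq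
  · intro p hp q hq r hr hpq hqr
    have hpS : p ∈ S := by
      rcases Finset.mem_insert.1 hp with h | h
      · subst h
        rcases Finset.mem_insert.1 hr with h' | h'
        · subst h'; exact absurd (lt_trans hpq hqr) (lt_irrefl _)
        · exact absurd (lt_trans hpq hqr) (by push_neg; linarith [halt r h'])
      · exact h
    have hqS : q ∈ S := by
      rcases Finset.mem_insert.1 hq with h | h
      · subst h
        rcases Finset.mem_insert.1 hr with h' | h'
        · subst h'; exact absurd hqr (lt_irrefl _)
        · exact absurd hqr (by push_neg; linarith [halt r h'])
      · exact h
    rcases Finset.mem_insert.1 hr with rfl | hrS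
    · rcases eq_or_ne q t₁ with rfl | hqt
      · exact hc p hpS (fun h => by rw [h] at hpq; exact lt_irrefl _ hpq)
      · have c1 : Cap3 q t₁ r := hc q hqS hqt
        have hqt1 : q.1 < t₁.1 := hmax q hqS hqt
        have c3 : Cap3 p q t₁ := htr p hpS q hqS t₁ ht₁ hpq hqt1
        have e1 : sl q t₁ < sl p q := (cap3_iff₂ hpq hqt1).1 c3
        have e2 : sl q r < sl q t₁ := (cap3_iff₁ hqt1 (by linarith)).1 c1
        exact (cap3_iff₂ hpq hqr).2 (by linarith)
    · exact htr p hpS q hqS r hrS hpq hqr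


lemma odd_ne_zero {x : ℤ} (h : Odd x) : x ≠ 0 := by
  rintro rfl
  exact (Int.not_odd_iff_even.2 Even.zero) h

lemma detz_ne (W m n o : ℤ) (h1 : m < n) (h2 : n < o) :
    Yz W m * (o - n) + Yz W n * (m - o) + Yz W o * (n - m) ≠ 0 := by
  have hnm : n - m ≠ 0 := by omega
  have hon : o - n ≠ 0 := by omega
  have hom : o - m ≠ 0 := by omega
  rcases Int.even_or_odd m with hm | hm <;> rcases Int.even_or_odd n with hn | hn <;>
    rcases Int.even_or_odd o with ho | ho
  · -- EEE
    rw [Yz_even hm, Yz_even hn, Yz_even ho]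
    have hid : m ^ 2 * (o - n) + n ^ 2 * (m - o) + o ^ 2 * (n - m)
        = (n - m) * ((o - n) * (o - m)) := by ring
    rw [hid]
    exact mul_ne_zero hnm (mul_ne_zero hon hom)
  · -- EEO
    rw [Yz_even hm, Yz_even hn, Yz_odd ho]
    have hid : m ^ 2 * (o - n) + n ^ 2 * (m - o) +
        (-o ^ 2 + 16 * W * o + 18 * W ^ 2) * (n - m)
        = (n - m) * ((o - n) * (o - m) - 2 * ((o + W) * (o - 9 * W))) := by ring
    rw [hid]
    refine mul_ne_zero hnm (odd_ne_zero ?_)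
    exact (((ho.sub_even hn).mul (ho.sub_even hm))).sub_even (even_two_mul _)
  · -- EOE
    rw [Yz_even hm, Yz_odd hn, Yz_even ho]
    have hid : m ^ 2 * (o - n) + (-n ^ 2 + 16 * W * n + 18 * W ^ 2) * (m - o) +
        o ^ 2 * (n - m)
        = (o - m) * ((n - m) * (o - n) + 2 * ((n + W) * (n - 9 * W))) := by ring
    rw [hid]
    refine mul_ne_zero hom (odd_ne_zero ?_)
    exact (((hn.sub_even hm).mul (ho.sub_odd hn))).add_even (even_two_mul _)
  · -- EOO
    rw [Yz_even hm, Yz_odd hn, Yz_odd ho]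
    have hid : m ^ 2 * (o - n) + (-n ^ 2 + 16 * W * n + 18 * W ^ 2) * (m - o) +
        (-o ^ 2 + 16 * W * o + 18 * W ^ 2) * (n - m)
        = (o - n) * ((n - m) * (o - m) + 2 * ((n + W) * (n - 9 * W))
            - 2 * ((n - m) * (o + n - 8 * W))) := by ring
    rw [hid]
    refine mul_ne_zero hon (odd_ne_zero ?_)
    exact ((((hn.sub_even hm).mul (ho.sub_even hm))).add_even (even_two_mul _)).sub_even
      (even_two_mul _)
  · -- OEE
    rw [Yz_odd hm, Yz_even hn, Yz_even ho]
    have hid : (-m ^ 2 + 16 * W * m + 18 * W ^ 2) * (o - n) + n ^ 2 * (m - o) +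
        o ^ 2 * (n - m)
        = (o - n) * ((n - m) * (o - m) - 2 * ((m + W) * (m - 9 * W))) := by ring
    rw [hid]
    refine mul_ne_zero hon (odd_ne_zero ?_)
    exact (((hn.sub_odd hm).mul (ho.sub_odd hm))).sub_even (even_two_mul _)
  · -- OEO
    rw [Yz_odd hm, Yz_even hn, Yz_odd ho]
    have hid : (-m ^ 2 + 16 * W * m + 18 * W ^ 2) * (o - n) + n ^ 2 * (m - o) +
        (-o ^ 2 + 16 * W * o + 18 * W ^ 2) * (n - m)
        = (o - m) * ((n - m) * (o - n) - 2 * ((n - m) * (m + o - 8 * W))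
            - 2 * ((m + W) * (m - 9 * W))) := by ring
    rw [hid]
    refine mul_ne_zero hom (odd_ne_zero ?_)
    exact ((((hn.sub_odd hm).mul (ho.sub_even hn))).sub_even (even_two_mul _)).sub_even
      (even_two_mul _)
  · -- OOE
    rw [Yz_odd hm, Yz_odd hn, Yz_even ho]
    have hid : (-m ^ 2 + 16 * W * m + 18 * W ^ 2) * (o - n) +
        (-n ^ 2 + 16 * W * n + 18 * W ^ 2) * (m - o) + o ^ 2 * (n - m)
        = (n - m) * ((o - n) * (o - m) + 2 * ((o - m) * (n + m - 8 * W))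
            + 2 * ((m + W) * (m - 9 * W))) := by ring
    rw [hid]
    refine mul_ne_zero hnm (odd_ne_zero ?_)
    exact ((((ho.sub_odd hn).mul (ho.sub_odd hm))).add_even (even_two_mul _)).add_even
      (even_two_mul _)
  · -- OOO
    rw [Yz_odd hm, Yz_odd hn, Yz_odd ho]
    have hid : (-m ^ 2 + 16 * W * m + 18 * W ^ 2) * (o - n) +
        (-n ^ 2 + 16 * W * n + 18 * W ^ 2) * (m - o) +
        (-o ^ 2 + 16 * W * o + 18 * W ^ 2) * (n - m)
        = -((n - m) * ((o - n) * (o - m))) := by ring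
    rw [hid]
    exact neg_ne_zero.2 (mul_ne_zero hnm (mul_ne_zero hon hom))

lemma det_eq_zero_of_collinear {p q r : ℝ × ℝ}
    (h : Collinear ℝ ({p, q, r} : Set (ℝ × ℝ))) :
    (q.1 - p.1) * (r.2 - p.2) - (r.1 - p.1) * (q.2 - p.2) = 0 := by
  rw [collinear_iff_of_mem (Set.mem_insert p {q, r})] at h
  obtain ⟨v, hv⟩ := h
  obtain ⟨tq, hq⟩ := hv q (by simp)
  obtain ⟨tr, hr⟩ := hv r (by simp)
  have hq1 : q.1 = tq * v.1 + p.1 := by rw [hq]; rfl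
  have hq2 : q.2 = tq * v.2 + p.2 := by rw [hq]; rfl
  have hr1 : r.1 = tr * v.1 + p.1 := by rw [hr]; rfl
  have hr2 : r.2 = tr * v.2 + p.2 := by rw [hr]; rfl
  rw [hq1, hq2, hr1, hr2]; ring

lemma not_collinear_pt (W m n o : ℤ) (h1 : m < n) (h2 : n < o) :
    ¬ Collinear ℝ ({pt W m, pt W n, pt W o} : Set (ℝ × ℝ)) := by
  intro hcol
  have hdet := det_eq_zero_of_collinear hcol
  simp only [pt] at hdet
  have : ((Yz W m * (o - n) + Yz W n * (m - o) + Yz W o * (n - m) : ℤ) : ℝ) = 0 := by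
    push_cast
    linear_combination hdet
  exact detz_ne W m n o h1 h2 (by exact_mod_cast this)


lemma isCup_base (W : ℤ) (F : Finset ℤ) (hF : ∀ n ∈ F, Yz W n = n ^ 2) :
    IsCup F.card (F.image (pt W)) := by
  refine ⟨Finset.card_image_of_injective _ (pt_injective W), ?_, ?_⟩
  · intro p hp q hq hpq
    obtain ⟨a, ha, rfl⟩ := Finset.mem_image.1 hp
    obtain ⟨b, hb, rfl⟩ := Finset.mem_image.1 hq
    have : a ≠ b := fun h => hpq (by rw [h])
    simpa [pt_fst] using fun h => this (by exact_mod_cast h)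
  · intro p hp q hq r hr hpq hqr
    obtain ⟨a, ha, rfl⟩ := Finset.mem_image.1 hp
    obtain ⟨b, hb, rfl⟩ := Finset.mem_image.1 hq
    obtain ⟨c, hc, rfl⟩ := Finset.mem_image.1 hr
    have hya : ((Yz W a : ℤ) : ℝ) = (a : ℝ) ^ 2 := by rw [hF a ha]; push_cast; ring
    have hyb : ((Yz W b : ℤ) : ℝ) = (b : ℝ) ^ 2 := by rw [hF b hb]; push_cast; ring
    have hyc : ((Yz W c : ℤ) : ℝ) = (c : ℝ) ^ 2 := by rw [hF c hc]; push_cast; ring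
    simp only [pt, pt_fst] at hpq hqr ⊢
    refine ⟨hpq, hqr, ?_⟩
    dsimp only
    rw [hya, hyb, hyc]
    nlinarith [mul_pos (sub_pos.2 hpq) (mul_pos (sub_pos.2 hqr)
      (sub_pos.2 (lt_trans hpq hqr)))]

lemma isCap_base (W : ℤ) (F : Finset ℤ)
    (hF : ∀ n ∈ F, Yz W n = -n ^ 2 + 16 * W * n + 18 * W ^ 2) :
    IsCap F.card (F.image (pt W)) := by
  refine ⟨Finset.card_image_of_injective _ (pt_injective W), ?_, ?_⟩
  · intro p hp q hq hpq
    obtain ⟨a, ha, rfl⟩ := Finset.mem_image.1 hp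
    obtain ⟨b, hb, rfl⟩ := Finset.mem_image.1 hq
    have : a ≠ b := fun h => hpq (by rw [h])
    simpa [pt_fst] using fun h => this (by exact_mod_cast h)
  · intro p hp q hq r hr hpq hqr
    obtain ⟨a, ha, rfl⟩ := Finset.mem_image.1 hp
    obtain ⟨b, hb, rfl⟩ := Finset.mem_image.1 hq
    obtain ⟨c, hc, rfl⟩ := Finset.mem_image.1 hr
    have hya : ((Yz W a : ℤ) : ℝ) = -(a : ℝ) ^ 2 + 16 * W * a + 18 * (W : ℝ) ^ 2 := by
      rw [hF a ha]; push_cast; ring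
    have hyb : ((Yz W b : ℤ) : ℝ) = -(b : ℝ) ^ 2 + 16 * W * b + 18 * (W : ℝ) ^ 2 := by
      rw [hF b hb]; push_cast; ring
    have hyc : ((Yz W c : ℤ) : ℝ) = -(c : ℝ) ^ 2 + 16 * W * c + 18 * (W : ℝ) ^ 2 := by
      rw [hF c hc]; push_cast; ring
    simp only [pt, pt_fst] at hpq hqr ⊢
    refine ⟨hpq, hqr, ?_⟩
    dsimp only
    rw [hya, hyb, hyc]
    nlinarith [mul_pos (sub_pos.2 hpq) (mul_pos (sub_pos.2 hqr)
      (sub_pos.2 (lt_trans hpq hqr)))]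



lemma isCup_insert_min_two {m : ℕ} {S : Finset (ℝ × ℝ)} {t₁ t₂ a : ℝ × ℝ}
    (hS : IsCup m S) (ht₁ : t₁ ∈ S) (ht₂ : t₂ ∈ S) (h12 : t₁.1 < t₂.1)
    (hmin2 : ∀ s ∈ S, s ≠ t₁ → s ≠ t₂ → t₂.1 < s.1)
    (ha : a.1 < t₁.1) (hc : Cup3 a t₁ t₂) : IsCup (m + 1) (insert a S) := by
  have hmin : ∀ s ∈ S, s ≠ t₁ → t₁.1 < s.1 := by
    intro s hs h1
    rcases eq_or_ne s t₂ with rfl | h2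
    · exact h12
    · linarith [hmin2 s hs h1 h2]
  refine isCup_insert_min_forall hS ht₁ hmin ha ?_
  intro s hs h1
  rcases eq_or_ne s t₂ with rfl | h2
  · exact hc
  · have hts : t₂.1 < s.1 := hmin2 s hs h1 h2
    have c3 : Cup3 t₁ t₂ s := hS.2.2 t₁ ht₁ t₂ ht₂ s hs h12 hts
    have e2 : sl a t₁ < sl t₁ t₂ := (cup3_iff₂ ha h12).1 hc
    have e1 : sl t₁ t₂ < sl t₁ s := (cup3_iff₁ h12 hts).1 c3
    exact (cup3_iff₂ ha (by linarith)).2 (by linarith)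

lemma isCup_insert_max_two {m : ℕ} {S : Finset (ℝ × ℝ)} {t₁ t₂ a : ℝ × ℝ}
    (hS : IsCup m S) (ht₁ : t₁ ∈ S) (ht₂ : t₂ ∈ S) (h21 : t₂.1 < t₁.1)
    (hmax2 : ∀ s ∈ S, s ≠ t₁ → s ≠ t₂ → s.1 < t₂.1)
    (ha : t₁.1 < a.1) (hc : Cup3 t₂ t₁ a) : IsCup (m + 1) (insert a S) := by
  have hmax : ∀ s ∈ S, s ≠ t₁ → s.1 < t₁.1 := by
    intro s hs h1
    rcases eq_or_ne s t₂ with rfl | h2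
    · exact h21
    · linarith [hmax2 s hs h1 h2]
  refine isCup_insert_max_forall hS ht₁ hmax ha ?_
  intro s hs h1
  rcases eq_or_ne s t₂ with rfl | h2
  · exact hc
  · have hts : s.1 < t₂.1 := hmax2 s hs h1 h2
    have c3 : Cup3 s t₂ t₁ := hS.2.2 s hs t₂ ht₂ t₁ ht₁ hts h21
    have e2 : sl t₂ t₁ < sl t₁ a := (cup3_iff₂ h21 ha).1 hc
    have e1 : sl s t₁ < sl t₂ t₁ := (cup3_iff₃ hts h21).1 c3
    exact (cup3_iff₂ (by linarith) ha).2 (by linarith)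

lemma isCap_insert_min_two {m : ℕ} {S : Finset (ℝ × ℝ)} {t₁ t₂ a : ℝ × ℝ}
    (hS : IsCap m S) (ht₁ : t₁ ∈ S) (ht₂ : t₂ ∈ S) (h12 : t₁.1 < t₂.1)
    (hmin2 : ∀ s ∈ S, s ≠ t₁ → s ≠ t₂ → t₂.1 < s.1)
    (ha : a.1 < t₁.1) (hc : Cap3 a t₁ t₂) : IsCap (m + 1) (insert a S) := by
  have hmin : ∀ s ∈ S, s ≠ t₁ → t₁.1 < s.1 := by
    intro s hs h1
    rcases eq_or_ne s t₂ with rfl | h2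
    · exact h12
    · linarith [hmin2 s hs h1 h2]
  refine isCap_insert_min_forall hS ht₁ hmin ha ?_
  intro s hs h1
  rcases eq_or_ne s t₂ with rfl | h2
  · exact hc
  · have hts : t₂.1 < s.1 := hmin2 s hs h1 h2
    have c3 : Cap3 t₁ t₂ s := hS.2.2 t₁ ht₁ t₂ ht₂ s hs h12 hts
    have e2 : sl t₁ t₂ < sl a t₁ := (cap3_iff₂ ha h12).1 hc
    have e1 : sl t₁ s < sl t₁ t₂ := (cap3_iff₁ h12 hts).1 c3
    exact (cap3_iff₂ ha (by linarith)).2 (by linarith)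

lemma isCap_insert_max_two {m : ℕ} {S : Finset (ℝ × ℝ)} {t₁ t₂ a : ℝ × ℝ}
    (hS : IsCap m S) (ht₁ : t₁ ∈ S) (ht₂ : t₂ ∈ S) (h21 : t₂.1 < t₁.1)
    (hmax2 : ∀ s ∈ S, s ≠ t₁ → s ≠ t₂ → s.1 < t₂.1)
    (ha : t₁.1 < a.1) (hc : Cap3 t₂ t₁ a) : IsCap (m + 1) (insert a S) := by
  have hmax : ∀ s ∈ S, s ≠ t₁ → s.1 < t₁.1 := by
    intro s hs h1
    rcases eq_or_ne s t₂ with rfl | h2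
    · exact h21
    · linarith [hmax2 s hs h1 h2]
  refine isCap_insert_max_forall hS ht₁ hmax ha ?_
  intro s hs h1
  rcases eq_or_ne s t₂ with rfl | h2
  · exact hc
  · have hts : s.1 < t₂.1 := hmax2 s hs h1 h2
    have c3 : Cap3 s t₂ t₁ := hS.2.2 s hs t₂ ht₂ t₁ ht₁ hts h21
    have e2 : sl t₁ a < sl t₂ t₁ := (cap3_iff₂ h21 ha).1 hc
    have e1 : sl t₂ t₁ < sl s t₁ := (cap3_iff₃ hts h21).1 c3
    exact (cap3_iff₂ (by linarith) ha).2 (by linarith)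

section Construction

variable (k l : ℕ)

def Wi : ℤ := 2 * (k : ℤ) + 2 * (l : ℤ) - 4
def Ci : ℤ := 8 * Wi k l

variable {k l}

lemma hW16 (hk : 5 ≤ k) (hl : 5 ≤ l) : 16 ≤ Wi k l := by
  unfold Wi; omega

lemma hWeven : Even (Wi k l) := ⟨(k : ℤ) + l - 2, by unfold Wi; ring⟩

variable (k l)

def BnegE : Finset ℤ := (Finset.range (k - 3)).image (fun j : ℕ => -2 * (j : ℤ) - 2)
def BposE : Finset ℤ := (Finset.range (k - 4)).image (fun j : ℕ => 2 * (j : ℤ) + 2)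
def BleftO : Finset ℤ := (Finset.range (l - 4)).image (fun t : ℕ => Ci k l - 1 - 2 * (t : ℤ))
def BrightO : Finset ℤ := (Finset.range (l - 3)).image (fun t : ℕ => Ci k l + 1 + 2 * (t : ℤ))

def IP : Finset ℤ :=
  ({-Wi k l, 1, Ci k l, Ci k l + Wi k l} : Finset ℤ) ∪ BnegE k ∪ BposE k ∪ BleftO k l ∪ BrightO k l

variable {k l}

lemma mem_BnegE (hk : 5 ≤ k) {n : ℤ} :
    n ∈ BnegE k ↔ Even n ∧ -2 * (k : ℤ) + 6 ≤ n ∧ n ≤ -2 := by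
  simp only [BnegE, Finset.mem_image, Finset.mem_range]
  constructor
  · rintro ⟨j, hj, rfl⟩
    exact ⟨⟨-(j : ℤ) - 1, by ring⟩, by omega, by omega⟩
  · rintro ⟨⟨c, hc⟩, h1, h2⟩
    exact ⟨(-c - 1).toNat, by omega, by omega⟩

lemma mem_BposE (hk : 5 ≤ k) {n : ℤ} :
    n ∈ BposE k ↔ Even n ∧ 2 ≤ n ∧ n ≤ 2 * (k : ℤ) - 8 := by
  simp only [BposE, Finset.mem_image, Finset.mem_range]
  constructor
  · rintro ⟨j, hj, rfl⟩
    exact ⟨⟨(j : ℤ) + 1, by ring⟩, by omega, by omega⟩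
  · rintro ⟨⟨c, hc⟩, h1, h2⟩
    exact ⟨(c - 1).toNat, by omega, by omega⟩

lemma mem_BleftO (hl : 5 ≤ l) {n : ℤ} :
    n ∈ BleftO k l ↔ Odd n ∧ Ci k l - 2 * (l : ℤ) + 9 ≤ n ∧ n ≤ Ci k l - 1 := by
  have hCe : Even (Ci k l) := ⟨4 * Wi k l, by unfold Ci; ring⟩
  obtain ⟨c0, hc0⟩ := hCe
  simp only [BleftO, Finset.mem_image, Finset.mem_range]
  constructor
  · rintro ⟨j, hj, rfl⟩
    exact ⟨⟨c0 - 1 - (j : ℤ), by omega⟩, by omega, by omega⟩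
  · rintro ⟨⟨c, hc⟩, h1, h2⟩
    exact ⟨((Ci k l - 1 - n) / 2).toNat, by omega, by omega⟩

lemma mem_BrightO (hl : 5 ≤ l) {n : ℤ} :
    n ∈ BrightO k l ↔ Odd n ∧ Ci k l + 1 ≤ n ∧ n ≤ Ci k l + 2 * (l : ℤ) - 7 := by
  have hCe : Even (Ci k l) := ⟨4 * Wi k l, by unfold Ci; ring⟩
  obtain ⟨c0, hc0⟩ := hCe
  simp only [BrightO, Finset.mem_image, Finset.mem_range]
  constructor
  · rintro ⟨j, hj, rfl⟩
    exact ⟨⟨c0 + (j : ℤ), by omega⟩, by omega, by omega⟩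
  · rintro ⟨⟨c, hc⟩, h1, h2⟩
    exact ⟨((n - Ci k l - 1) / 2).toNat, by omega, by omega⟩

set_option maxHeartbeats 1000000 in
lemma mem_IP (hk : 5 ≤ k) (hl : 5 ≤ l) {n : ℤ} :
    n ∈ IP k l ↔ n = -Wi k l ∨ n = 1 ∨ n = Ci k l ∨ n = Ci k l + Wi k l ∨
      (Even n ∧ -2 * (k : ℤ) + 6 ≤ n ∧ n ≤ -2) ∨
      (Even n ∧ 2 ≤ n ∧ n ≤ 2 * (k : ℤ) - 8) ∨
      (Odd n ∧ Ci k l - 2 * (l : ℤ) + 9 ≤ n ∧ n ≤ Ci k l - 1) ∨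
      (Odd n ∧ Ci k l + 1 ≤ n ∧ n ≤ Ci k l + 2 * (l : ℤ) - 7) := by
  simp only [IP, Finset.mem_union, Finset.mem_insert, Finset.mem_singleton,
    mem_BnegE hk, mem_BposE hk, mem_BleftO hl, mem_BrightO hl]
  tauto

-- chunk 2: cards

lemma Wi_eq : Wi k l = 2 * (k : ℤ) + 2 * (l : ℤ) - 4 := rfl
lemma Ci_eq : Ci k l = 8 * (2 * (k : ℤ) + 2 * (l : ℤ) - 4) := rfl

lemma card_BnegE : (BnegE k).card = k - 3 := by
  rw [BnegE, Finset.card_image_of_injective _ (fun a b h => by omega), Finset.card_range]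

lemma card_BposE : (BposE k).card = k - 4 := by
  rw [BposE, Finset.card_image_of_injective _ (fun a b h => by omega), Finset.card_range]

lemma card_BleftO : (BleftO k l).card = l - 4 := by
  rw [BleftO, Finset.card_image_of_injective _ (fun a b h => by omega), Finset.card_range]

lemma card_BrightO : (BrightO k l).card = l - 3 := by
  rw [BrightO, Finset.card_image_of_injective _ (fun a b h => by omega), Finset.card_range]

lemma card_IP (hk : 5 ≤ k) (hl : 5 ≤ l) : (IP k l).card = 2 * k + 2 * l - 10 := by
  have hW := Wi_eq (k := k) (l := l)
  have hC := Ci_eq (k := k) (l := l)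
  have c0 : ({-Wi k l, 1, Ci k l, Ci k l + Wi k l} : Finset ℤ).card = 4 := by
    rw [Finset.card_insert_of_notMem (by simp; omega),
      Finset.card_insert_of_notMem (by simp; omega),
      Finset.card_insert_of_notMem (by simp; omega), Finset.card_singleton]
  have d1 : Disjoint ({-Wi k l, 1, Ci k l, Ci k l + Wi k l} : Finset ℤ) (BnegE k) := by
    rw [Finset.disjoint_left]
    intro a ha hb
    rw [mem_BnegE hk] at hb
    simp only [Finset.mem_insert, Finset.mem_singleton] at ha
    omega
  have d2 : Disjoint (({-Wi k l, 1, Ci k l, Ci k l + Wi k l} : Finset ℤ) ∪ BnegE k)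
      (BposE k) := by
    rw [Finset.disjoint_left]
    intro a ha hb
    rw [mem_BposE hk] at hb
    simp only [Finset.mem_union, Finset.mem_insert, Finset.mem_singleton,
      mem_BnegE hk] at ha
    omega
  have d3 : Disjoint (({-Wi k l, 1, Ci k l, Ci k l + Wi k l} : Finset ℤ) ∪ BnegE k ∪ BposE k)
      (BleftO k l) := by
    rw [Finset.disjoint_left]
    intro a ha hb
    rw [mem_BleftO hl] at hb
    simp only [Finset.mem_union, Finset.mem_insert, Finset.mem_singleton,
      mem_BnegE hk, mem_BposE hk] at ha
    omega
  have d4 : Disjoint (({-Wi k l, 1, Ci k l, Ci k l + Wi k l} : Finset ℤ) ∪ BnegE k ∪ BposE k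
      ∪ BleftO k l) (BrightO k l) := by
    rw [Finset.disjoint_left]
    intro a ha hb
    rw [mem_BrightO hl] at hb
    simp only [Finset.mem_union, Finset.mem_insert, Finset.mem_singleton,
      mem_BnegE hk, mem_BposE hk, mem_BleftO hl] at ha
    omega
  rw [IP, Finset.card_union_of_disjoint d4, Finset.card_union_of_disjoint d3,
    Finset.card_union_of_disjoint d2, Finset.card_union_of_disjoint d1,
    c0, card_BnegE, card_BposE, card_BleftO, card_BrightO]
  omega

-- chunk 3: point values and index sets

lemma Yz_m2 (W : ℤ) : Yz W (-2) = 4 := by rw [Yz_even ⟨-1, by ring⟩]; ring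
lemma Yz_p2 (W : ℤ) : Yz W 2 = 4 := by rw [Yz_even ⟨1, by ring⟩]; ring
lemma Yz_1 (W : ℤ) : Yz W 1 = 18 * W ^ 2 + 16 * W - 1 := by
  rw [Yz_odd ⟨0, by ring⟩]; ring
lemma Yz_8W (W : ℤ) : Yz W (8 * W) = 64 * W ^ 2 := by
  rw [Yz_even ⟨4 * W, by ring⟩]; ring
lemma Yz_8Wm1 (W : ℤ) : Yz W (8 * W - 1) = 82 * W ^ 2 - 1 := by
  rw [Yz_odd ⟨4 * W - 1, by ring⟩]; ring
lemma Yz_8Wp1 (W : ℤ) : Yz W (8 * W + 1) = 82 * W ^ 2 - 1 := by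
  rw [Yz_odd ⟨4 * W, by ring⟩]; ring
lemma Yz_negW {W : ℤ} (hWe : Even W) : Yz W (-W) = W ^ 2 := by
  obtain ⟨c, hc⟩ := hWe
  rw [Yz_even ⟨-c, by omega⟩]; ring
lemma Yz_9W {W : ℤ} (hWe : Even W) : Yz W (9 * W) = 81 * W ^ 2 := by
  obtain ⟨c, hc⟩ := hWe
  rw [Yz_even ⟨4 * W + c, by omega⟩]; ring

lemma CpW_eq : Ci k l + Wi k l = 9 * Wi k l := by rw [Ci]; ring
lemma Ci_8W : Ci k l = 8 * Wi k l := rfl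

variable (k l)

def RU1i : Finset ℤ := insert (-Wi k l) (insert 2 (BnegE k))
def RU2i : Finset ℤ := insert (-2) (insert (Ci k l) (insert (Ci k l + Wi k l) (BposE k)))
def M1bi : Finset ℤ := insert (Ci k l) (insert (Ci k l + Wi k l) (BposE k))
def M2bi : Finset ℤ := insert (-Wi k l) (BnegE k)
def RD1i : Finset ℤ := insert (-Wi k l) (insert 1 (insert (Ci k l + 1) (BleftO k l)))
def RD2i : Finset ℤ := insert (Ci k l - 1) (insert (Ci k l + Wi k l) (BrightO k l))
def N1bi : Finset ℤ := insert (Ci k l + Wi k l) (BrightO k l)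
def N2bi : Finset ℤ := insert (-Wi k l) (insert 1 (BleftO k l))

variable {k l}

lemma mem_RU1i (hk : 5 ≤ k) {n : ℤ} : n ∈ RU1i k l ↔
    n = -Wi k l ∨ n = 2 ∨ (Even n ∧ -2 * (k : ℤ) + 6 ≤ n ∧ n ≤ -2) := by
  simp [RU1i, mem_BnegE hk]

lemma mem_RU2i (hk : 5 ≤ k) {n : ℤ} : n ∈ RU2i k l ↔
    n = -2 ∨ n = Ci k l ∨ n = Ci k l + Wi k l ∨
      (Even n ∧ 2 ≤ n ∧ n ≤ 2 * (k : ℤ) - 8) := by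
  simp [RU2i, mem_BposE hk]

lemma mem_M1bi (hk : 5 ≤ k) {n : ℤ} : n ∈ M1bi k l ↔
    n = Ci k l ∨ n = Ci k l + Wi k l ∨ (Even n ∧ 2 ≤ n ∧ n ≤ 2 * (k : ℤ) - 8) := by
  simp [M1bi, mem_BposE hk]

lemma mem_M2bi (hk : 5 ≤ k) {n : ℤ} : n ∈ M2bi k l ↔
    n = -Wi k l ∨ (Even n ∧ -2 * (k : ℤ) + 6 ≤ n ∧ n ≤ -2) := by
  simp [M2bi, mem_BnegE hk]

lemma mem_RD1i (hl : 5 ≤ l) {n : ℤ} : n ∈ RD1i k l ↔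
    n = -Wi k l ∨ n = 1 ∨ n = Ci k l + 1 ∨
      (Odd n ∧ Ci k l - 2 * (l : ℤ) + 9 ≤ n ∧ n ≤ Ci k l - 1) := by
  simp [RD1i, mem_BleftO hl]

lemma mem_RD2i (hl : 5 ≤ l) {n : ℤ} : n ∈ RD2i k l ↔
    n = Ci k l - 1 ∨ n = Ci k l + Wi k l ∨
      (Odd n ∧ Ci k l + 1 ≤ n ∧ n ≤ Ci k l + 2 * (l : ℤ) - 7) := by
  simp [RD2i, mem_BrightO hl]

lemma mem_N1bi (hl : 5 ≤ l) {n : ℤ} : n ∈ N1bi k l ↔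
    n = Ci k l + Wi k l ∨ (Odd n ∧ Ci k l + 1 ≤ n ∧ n ≤ Ci k l + 2 * (l : ℤ) - 7) := by
  simp [N1bi, mem_BrightO hl]

lemma mem_N2bi (hl : 5 ≤ l) {n : ℤ} : n ∈ N2bi k l ↔
    n = -Wi k l ∨ n = 1 ∨ (Odd n ∧ Ci k l - 2 * (l : ℤ) + 9 ≤ n ∧ n ≤ Ci k l - 1) := by
  simp [N2bi, mem_BleftO hl]

lemma RU1i_subset (hk : 5 ≤ k) (hl : 5 ≤ l) : RU1i k l ⊆ IP k l := by
  intro n hn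
  rw [mem_RU1i hk] at hn
  rw [mem_IP hk hl]
  rcases hn with h | h | h
  · tauto
  · subst h; exact Or.inr (Or.inr (Or.inr (Or.inr (Or.inr (Or.inl ⟨⟨1, by ring⟩, by omega, by
      have := Wi_eq (k := k) (l := l); omega⟩)))))
  · tauto

lemma RU2i_subset (hk : 5 ≤ k) (hl : 5 ≤ l) : RU2i k l ⊆ IP k l := by
  intro n hn
  rw [mem_RU2i hk] at hn
  rw [mem_IP hk hl]
  rcases hn with h | h | h | h
  · subst h; exact Or.inr (Or.inr (Or.inr (Or.inr (Or.inl ⟨⟨-1, by ring⟩, by omega, by omega⟩))))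
  · tauto
  · tauto
  · tauto

lemma M1bi_subset (hk : 5 ≤ k) (hl : 5 ≤ l) : M1bi k l ⊆ IP k l := by
  intro n hn
  rw [mem_M1bi hk] at hn
  rw [mem_IP hk hl]
  tauto

lemma M2bi_subset (hk : 5 ≤ k) (hl : 5 ≤ l) : M2bi k l ⊆ IP k l := by
  intro n hn
  rw [mem_M2bi hk] at hn
  rw [mem_IP hk hl]
  tauto

lemma RD1i_subset (hk : 5 ≤ k) (hl : 5 ≤ l) : RD1i k l ⊆ IP k l := by
  intro n hn
  rw [mem_RD1i hl] at hn
  rw [mem_IP hk hl]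
  rcases hn with h | h | h | h
  · tauto
  · tauto
  · subst h
    refine Or.inr (Or.inr (Or.inr (Or.inr (Or.inr (Or.inr (Or.inr ⟨?_, by omega, by
      have := Wi_eq (k := k) (l := l); have := Ci_eq (k := k) (l := l); omega⟩))))))
    have hCe : Even (Ci k l) := ⟨4 * Wi k l, by rw [Ci_8W]; ring⟩
    obtain ⟨c, hc⟩ := hCe
    exact ⟨c, by omega⟩
  · tauto

lemma RD2i_subset (hk : 5 ≤ k) (hl : 5 ≤ l) : RD2i k l ⊆ IP k l := by
  intro n hn
  rw [mem_RD2i hl] at hn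
  rw [mem_IP hk hl]
  rcases hn with h | h | h
  · subst h
    refine Or.inr (Or.inr (Or.inr (Or.inr (Or.inr (Or.inr (Or.inl ⟨?_, by
      have := Wi_eq (k := k) (l := l); have := Ci_eq (k := k) (l := l); omega, by omega⟩))))))
    have hCe : Even (Ci k l) := ⟨4 * Wi k l, by rw [Ci_8W]; ring⟩
    obtain ⟨c, hc⟩ := hCe
    exact ⟨c - 1, by omega⟩
  · tauto
  · tauto

lemma N1bi_subset (hk : 5 ≤ k) (hl : 5 ≤ l) : N1bi k l ⊆ IP k l := by
  intro n hn
  rw [mem_N1bi hl] at hn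
  rw [mem_IP hk hl]
  tauto

lemma N2bi_subset (hk : 5 ≤ k) (hl : 5 ≤ l) : N2bi k l ⊆ IP k l := by
  intro n hn
  rw [mem_N2bi hl] at hn
  rw [mem_IP hk hl]
  tauto

-- chunk 4: cards of index sets, Y matching

lemma card_RU1i (hk : 5 ≤ k) (hl : 5 ≤ l) : (RU1i k l).card = k - 1 := by
  have hW := Wi_eq (k := k) (l := l)
  rw [RU1i, Finset.card_insert_of_notMem (by
      simp only [Finset.mem_insert, mem_BnegE hk]; omega),
    Finset.card_insert_of_notMem (by rw [mem_BnegE hk]; omega), card_BnegE]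
  omega

lemma card_RU2i (hk : 5 ≤ k) (hl : 5 ≤ l) : (RU2i k l).card = k - 1 := by
  have hW := Wi_eq (k := k) (l := l)
  have hC := Ci_eq (k := k) (l := l)
  rw [RU2i, Finset.card_insert_of_notMem (by
      simp only [Finset.mem_insert, mem_BposE hk]; omega),
    Finset.card_insert_of_notMem (by
      simp only [Finset.mem_insert, mem_BposE hk]; omega),
    Finset.card_insert_of_notMem (by rw [mem_BposE hk]; omega), card_BposE]
  omega

lemma card_M1bi (hk : 5 ≤ k) (hl : 5 ≤ l) : (M1bi k l).card = k - 2 := by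
  have hW := Wi_eq (k := k) (l := l)
  have hC := Ci_eq (k := k) (l := l)
  rw [M1bi, Finset.card_insert_of_notMem (by
      simp only [Finset.mem_insert, mem_BposE hk]; omega),
    Finset.card_insert_of_notMem (by rw [mem_BposE hk]; omega), card_BposE]
  omega

lemma card_M2bi (hk : 5 ≤ k) (hl : 5 ≤ l) : (M2bi k l).card = k - 2 := by
  have hW := Wi_eq (k := k) (l := l)
  rw [M2bi, Finset.card_insert_of_notMem (by rw [mem_BnegE hk]; omega), card_BnegE]
  omega

lemma card_RD1i (hk : 5 ≤ k) (hl : 5 ≤ l) : (RD1i k l).card = l - 1 := by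
  have hW := Wi_eq (k := k) (l := l)
  have hC := Ci_eq (k := k) (l := l)
  rw [RD1i, Finset.card_insert_of_notMem (by
      simp only [Finset.mem_insert, mem_BleftO hl]; omega),
    Finset.card_insert_of_notMem (by
      simp only [Finset.mem_insert, mem_BleftO hl]; omega),
    Finset.card_insert_of_notMem (by rw [mem_BleftO hl]; omega), card_BleftO]
  omega

lemma card_RD2i (hk : 5 ≤ k) (hl : 5 ≤ l) : (RD2i k l).card = l - 1 := by
  have hW := Wi_eq (k := k) (l := l)
  have hC := Ci_eq (k := k) (l := l)
  rw [RD2i, Finset.card_insert_of_notMem (by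
      simp only [Finset.mem_insert, mem_BrightO hl]; omega),
    Finset.card_insert_of_notMem (by rw [mem_BrightO hl]; omega), card_BrightO]
  omega

lemma card_N1bi (hk : 5 ≤ k) (hl : 5 ≤ l) : (N1bi k l).card = l - 2 := by
  have hW := Wi_eq (k := k) (l := l)
  have hC := Ci_eq (k := k) (l := l)
  rw [N1bi, Finset.card_insert_of_notMem (by rw [mem_BrightO hl]; omega), card_BrightO]
  omega

lemma card_N2bi (hk : 5 ≤ k) (hl : 5 ≤ l) : (N2bi k l).card = l - 2 := by
  have hW := Wi_eq (k := k) (l := l)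
  have hC := Ci_eq (k := k) (l := l)
  rw [N2bi, Finset.card_insert_of_notMem (by
      simp only [Finset.mem_insert, mem_BleftO hl]; omega),
    Finset.card_insert_of_notMem (by rw [mem_BleftO hl]; omega), card_BleftO]
  omega

lemma Ymatch_RU1 (hk : 5 ≤ k) : ∀ n ∈ RU1i k l, Yz (Wi k l) n = n ^ 2 := by
  intro n hn
  rw [mem_RU1i hk] at hn
  rcases hn with h | h | h
  · subst h; rw [Yz_negW hWeven]; ring
  · subst h; rw [Yz_p2]; ring
  · exact Yz_even h.1

lemma Ymatch_RU2 (hk : 5 ≤ k) : ∀ n ∈ RU2i k l, Yz (Wi k l) n = n ^ 2 := by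
  intro n hn
  rw [mem_RU2i hk] at hn
  rcases hn with h | h | h | h
  · subst h; rw [Yz_m2]; ring
  · subst h; rw [Ci_8W, Yz_8W]; ring
  · subst h; rw [CpW_eq, Yz_9W hWeven]; ring
  · exact Yz_even h.1

lemma Ymatch_M1b (hk : 5 ≤ k) : ∀ n ∈ M1bi k l, Yz (Wi k l) n = n ^ 2 := by
  intro n hn
  rw [mem_M1bi hk] at hn
  rcases hn with h | h | h
  · subst h; rw [Ci_8W, Yz_8W]; ring
  · subst h; rw [CpW_eq, Yz_9W hWeven]; ring
  · exact Yz_even h.1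

lemma Ymatch_M2b (hk : 5 ≤ k) : ∀ n ∈ M2bi k l, Yz (Wi k l) n = n ^ 2 := by
  intro n hn
  rw [mem_M2bi hk] at hn
  rcases hn with h | h
  · subst h; rw [Yz_negW hWeven]; ring
  · exact Yz_even h.1

lemma Ymatch_RD1 (hl : 5 ≤ l) : ∀ n ∈ RD1i k l,
    Yz (Wi k l) n = -n ^ 2 + 16 * Wi k l * n + 18 * Wi k l ^ 2 := by
  intro n hn
  rw [mem_RD1i hl] at hn
  rcases hn with h | h | h | h
  · subst h; rw [Yz_negW hWeven]; ring
  · subst h; rw [Yz_1]; ring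
  · subst h; rw [Ci_8W, Yz_8Wp1]; ring
  · exact Yz_odd h.1

lemma Ymatch_RD2 (hl : 5 ≤ l) : ∀ n ∈ RD2i k l,
    Yz (Wi k l) n = -n ^ 2 + 16 * Wi k l * n + 18 * Wi k l ^ 2 := by
  intro n hn
  rw [mem_RD2i hl] at hn
  rcases hn with h | h | h
  · subst h; rw [Ci_8W, Yz_8Wm1]; ring
  · subst h; rw [CpW_eq, Yz_9W hWeven]; ring
  · exact Yz_odd h.1

lemma Ymatch_N1b (hl : 5 ≤ l) : ∀ n ∈ N1bi k l,
    Yz (Wi k l) n = -n ^ 2 + 16 * Wi k l * n + 18 * Wi k l ^ 2 := by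
  intro n hn
  rw [mem_N1bi hl] at hn
  rcases hn with h | h
  · subst h; rw [CpW_eq, Yz_9W hWeven]; ring
  · exact Yz_odd h.1

lemma Ymatch_N2b (hl : 5 ≤ l) : ∀ n ∈ N2bi k l,
    Yz (Wi k l) n = -n ^ 2 + 16 * Wi k l * n + 18 * Wi k l ^ 2 := by
  intro n hn
  rw [mem_N2bi hl] at hn
  rcases hn with h | h | h
  · subst h; rw [Yz_negW hWeven]; ring
  · subst h; rw [Yz_1]; ring
  · exact Yz_odd h.1

-- chunk 7: structure point sets

lemma pt_snd (W n : ℤ) : (pt W n).2 = ((Yz W n : ℤ) : ℝ) := rfl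

lemma ptv_m2 (W : ℤ) : (pt W (-2)).2 = 4 := by rw [pt_snd, Yz_m2]; norm_num
lemma ptv_p2 (W : ℤ) : (pt W 2).2 = 4 := by rw [pt_snd, Yz_p2]; norm_num
lemma ptv_1 (W : ℤ) : (pt W 1).2 = 18 * (W : ℝ) ^ 2 + 16 * (W : ℝ) - 1 := by
  rw [pt_snd, Yz_1]; push_cast; ring
lemma ptv_8W (W : ℤ) : (pt W (8 * W)).2 = 64 * (W : ℝ) ^ 2 := by
  rw [pt_snd, Yz_8W]; push_cast; ring
lemma ptv_8Wm1 (W : ℤ) : (pt W (8 * W - 1)).2 = 82 * (W : ℝ) ^ 2 - 1 := by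
  rw [pt_snd, Yz_8Wm1]; push_cast; ring
lemma ptv_8Wp1 (W : ℤ) : (pt W (8 * W + 1)).2 = 82 * (W : ℝ) ^ 2 - 1 := by
  rw [pt_snd, Yz_8Wp1]; push_cast; ring
lemma ptv_sq {W n : ℤ} (h : Yz W n = n ^ 2) : (pt W n).2 = (n : ℝ) ^ 2 := by
  rw [pt_snd, h]; push_cast; ring
lemma ptv_f {W n : ℤ} (h : Yz W n = -n ^ 2 + 16 * W * n + 18 * W ^ 2) :
    (pt W n).2 = -(n : ℝ) ^ 2 + 16 * (W : ℝ) * n + 18 * (W : ℝ) ^ 2 := by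
  rw [pt_snd, h]; push_cast; ring

lemma pt_ne_of_ne {W a b : ℤ} (h : a ≠ b) : pt W a ≠ pt W b :=
  fun hh => h (pt_injective W hh)

lemma pt_lt {W a b : ℤ} (h : a < b) : (pt W a).1 < (pt W b).1 := by
  rw [pt_fst, pt_fst]; exact_mod_cast h

variable (k l)

noncomputable def RU1pts : Finset (ℝ × ℝ) := (RU1i k l).image (pt (Wi k l))
noncomputable def RU2pts : Finset (ℝ × ℝ) := (RU2i k l).image (pt (Wi k l))
noncomputable def RD1pts : Finset (ℝ × ℝ) := (RD1i k l).image (pt (Wi k l))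
noncomputable def RD2pts : Finset (ℝ × ℝ) := (RD2i k l).image (pt (Wi k l))
noncomputable def M1pts : Finset (ℝ × ℝ) :=
  insert (pt (Wi k l) 1) ((M1bi k l).image (pt (Wi k l)))
noncomputable def M2pts : Finset (ℝ × ℝ) :=
  insert (pt (Wi k l) 1) ((M2bi k l).image (pt (Wi k l)))
noncomputable def N1pts : Finset (ℝ × ℝ) :=
  insert (pt (Wi k l) (Ci k l)) ((N1bi k l).image (pt (Wi k l)))
noncomputable def N2pts : Finset (ℝ × ℝ) :=
  insert (pt (Wi k l) (Ci k l)) ((N2bi k l).image (pt (Wi k l)))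

variable {k l}

lemma isCup_RU1pts (hk : 5 ≤ k) (hl : 5 ≤ l) : IsCup (k - 1) (RU1pts k l) := by
  have h := isCup_base (Wi k l) (RU1i k l) (Ymatch_RU1 hk)
  rwa [card_RU1i hk hl] at h

lemma isCup_RU2pts (hk : 5 ≤ k) (hl : 5 ≤ l) : IsCup (k - 1) (RU2pts k l) := by
  have h := isCup_base (Wi k l) (RU2i k l) (Ymatch_RU2 hk)
  rwa [card_RU2i hk hl] at h

lemma isCap_RD1pts (hk : 5 ≤ k) (hl : 5 ≤ l) : IsCap (l - 1) (RD1pts k l) := by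
  have h := isCap_base (Wi k l) (RD1i k l) (Ymatch_RD1 hl)
  rwa [card_RD1i hk hl] at h

lemma isCap_RD2pts (hk : 5 ≤ k) (hl : 5 ≤ l) : IsCap (l - 1) (RD2pts k l) := by
  have h := isCap_base (Wi k l) (RD2i k l) (Ymatch_RD2 hl)
  rwa [card_RD2i hk hl] at h

lemma M1bi_ge4 (hk : 5 ≤ k) (hl : 5 ≤ l) : ∀ n ∈ M1bi k l, n ≠ 2 → 4 ≤ n := by
  have hW := Wi_eq (k := k) (l := l)
  have hC := Ci_eq (k := k) (l := l)
  intro n hn hn2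
  rw [mem_M1bi hk] at hn
  rcases hn with h | h | h
  · omega
  · omega
  · obtain ⟨⟨c, hcc⟩, hb1, hb2⟩ := h; omega

lemma two_mem_M1bi (hk : 5 ≤ k) (hl : 5 ≤ l) : (2 : ℤ) ∈ M1bi k l := by
  have hW := Wi_eq (k := k) (l := l)
  rw [mem_M1bi hk]
  exact Or.inr (Or.inr ⟨⟨1, by ring⟩, by omega, by omega⟩)

lemma isCup_M1pts (hk : 5 ≤ k) (hl : 5 ≤ l) : IsCup (k - 1) (M1pts k l) := by
  have hWr : (16 : ℝ) ≤ ((Wi k l : ℤ) : ℝ) := by exact_mod_cast hW16 hk hl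
  have hbase : IsCup (k - 2) ((M1bi k l).image (pt (Wi k l))) := by
    have h := isCup_base (Wi k l) (M1bi k l) (Ymatch_M1b hk)
    rwa [card_M1bi hk hl] at h
  have key : IsCup (k - 2 + 1) (M1pts k l) := by
    refine isCup_insert_min_forall hbase
      (t₁ := pt (Wi k l) 2) (Finset.mem_image_of_mem _ (two_mem_M1bi hk hl)) ?_ ?_ ?_
    · intro s hs hne
      obtain ⟨n, hn, rfl⟩ := Finset.mem_image.1 hs
      exact pt_lt (by have := M1bi_ge4 hk hl n hn (fun h => hne (by rw [h])); omega)
    · exact pt_lt (by norm_num)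
    · intro s hs hne
      obtain ⟨n, hn, rfl⟩ := Finset.mem_image.1 hs
      have h4 : 4 ≤ n := M1bi_ge4 hk hl n hn (fun h => hne (by rw [h]))
      have hN : (4 : ℝ) ≤ (n : ℝ) := by exact_mod_cast h4
      refine ⟨pt_lt (by norm_num), pt_lt (by omega), ?_⟩
      rw [pt_fst, pt_fst, pt_fst, ptv_1, ptv_p2, ptv_sq (Ymatch_M1b hk n hn)]
      push_cast
      have hkey : (0 : ℝ) < ((n : ℝ) - 2) * (((n : ℝ) - 2) +
          (18 * ((Wi k l : ℤ) : ℝ) ^ 2 + 16 * ((Wi k l : ℤ) : ℝ) - 1)) := by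
        apply mul_pos (by linarith)
        nlinarith
      nlinarith [hkey]
  rwa [show k - 2 + 1 = k - 1 from by omega] at key

lemma M2bi_le4 (hk : 5 ≤ k) (hl : 5 ≤ l) : ∀ n ∈ M2bi k l, n ≠ -2 → n ≤ -4 := by
  have hW := Wi_eq (k := k) (l := l)
  intro n hn hn2
  rw [mem_M2bi hk] at hn
  rcases hn with h | h
  · omega
  · obtain ⟨⟨c, hcc⟩, hb1, hb2⟩ := h; omega

lemma m2_mem_M2bi (hk : 5 ≤ k) (hl : 5 ≤ l) : (-2 : ℤ) ∈ M2bi k l := by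
  rw [mem_M2bi hk]
  exact Or.inr ⟨⟨-1, by ring⟩, by omega, by omega⟩

lemma isCup_M2pts (hk : 5 ≤ k) (hl : 5 ≤ l) : IsCup (k - 1) (M2pts k l) := by
  have hWr : (16 : ℝ) ≤ ((Wi k l : ℤ) : ℝ) := by exact_mod_cast hW16 hk hl
  have hbase : IsCup (k - 2) ((M2bi k l).image (pt (Wi k l))) := by
    have h := isCup_base (Wi k l) (M2bi k l) (Ymatch_M2b hk)
    rwa [card_M2bi hk hl] at h
  have key : IsCup (k - 2 + 1) (M2pts k l) := by
    refine isCup_insert_max_forall hbase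
      (t₁ := pt (Wi k l) (-2)) (Finset.mem_image_of_mem _ (m2_mem_M2bi hk hl)) ?_ ?_ ?_
    · intro s hs hne
      obtain ⟨n, hn, rfl⟩ := Finset.mem_image.1 hs
      exact pt_lt (by have := M2bi_le4 hk hl n hn (fun h => hne (by rw [h])); omega)
    · exact pt_lt (by norm_num)
    · intro s hs hne
      obtain ⟨n, hn, rfl⟩ := Finset.mem_image.1 hs
      have h4 : n ≤ -4 := M2bi_le4 hk hl n hn (fun h => hne (by rw [h]))
      have hN : (n : ℝ) ≤ -4 := by exact_mod_cast h4
      refine ⟨pt_lt (by omega), pt_lt (by norm_num), ?_⟩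
      rw [pt_fst, pt_fst, pt_fst, ptv_1, ptv_m2, ptv_sq (Ymatch_M2b hk n hn)]
      push_cast
      have hkey : (0 : ℝ) < (-((n : ℝ) + 2)) * (-(3 * (n : ℝ) - 3 -
          (18 * ((Wi k l : ℤ) : ℝ) ^ 2 + 16 * ((Wi k l : ℤ) : ℝ) - 2))) := by
        apply mul_pos (by linarith)
        nlinarith
      nlinarith [hkey]
  rwa [show k - 2 + 1 = k - 1 from by omega] at key

lemma N1bi_ge3 (hk : 5 ≤ k) (hl : 5 ≤ l) :
    ∀ n ∈ N1bi k l, n ≠ Ci k l + 1 → Ci k l + 3 ≤ n := by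
  have hW := Wi_eq (k := k) (l := l)
  have hC := Ci_eq (k := k) (l := l)
  intro n hn hn2
  rw [mem_N1bi hl] at hn
  rcases hn with h | h
  · omega
  · obtain ⟨⟨c, hcc⟩, hb1, hb2⟩ := h
    have hCe : Even (Ci k l) := ⟨4 * Wi k l, by rw [Ci_8W]; ring⟩
    obtain ⟨c0, hc0⟩ := hCe
    omega

lemma cp1_mem_N1bi (hk : 5 ≤ k) (hl : 5 ≤ l) : Ci k l + 1 ∈ N1bi k l := by
  have hCe : Even (Ci k l) := ⟨4 * Wi k l, by rw [Ci_8W]; ring⟩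
  obtain ⟨c0, hc0⟩ := hCe
  rw [mem_N1bi hl]
  exact Or.inr ⟨⟨c0, by omega⟩, by omega, by omega⟩

lemma isCap_N1pts (hk : 5 ≤ k) (hl : 5 ≤ l) : IsCap (l - 1) (N1pts k l) := by
  have hWr : (16 : ℝ) ≤ ((Wi k l : ℤ) : ℝ) := by exact_mod_cast hW16 hk hl
  have hbase : IsCap (l - 2) ((N1bi k l).image (pt (Wi k l))) := by
    have h := isCap_base (Wi k l) (N1bi k l) (Ymatch_N1b hl)
    rwa [card_N1bi hk hl] at h
  have key : IsCap (l - 2 + 1) (N1pts k l) := by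
    refine isCap_insert_min_forall hbase
      (t₁ := pt (Wi k l) (Ci k l + 1)) (Finset.mem_image_of_mem _ (cp1_mem_N1bi hk hl)) ?_ ?_ ?_
    · intro s hs hne
      obtain ⟨n, hn, rfl⟩ := Finset.mem_image.1 hs
      exact pt_lt (by have := N1bi_ge3 hk hl n hn (fun h => hne (by rw [h])); omega)
    · exact pt_lt (by omega)
    · intro s hs hne
      obtain ⟨n, hn, rfl⟩ := Finset.mem_image.1 hs
      have h3 : Ci k l + 3 ≤ n := N1bi_ge3 hk hl n hn (fun h => hne (by rw [h]))
      have hN : ((Ci k l : ℤ) : ℝ) + 3 ≤ (n : ℝ) := by exact_mod_cast h3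
      have hC8 : ((Ci k l : ℤ) : ℝ) = 8 * ((Wi k l : ℤ) : ℝ) := by
        rw [Ci_8W]; push_cast; ring
      refine ⟨pt_lt (by omega), pt_lt (by omega), ?_⟩
      rw [pt_fst, pt_fst, pt_fst]
      rw [show (pt (Wi k l) (Ci k l)).2 = 64 * ((Wi k l : ℤ) : ℝ) ^ 2 from by
          rw [Ci_8W]; exact ptv_8W _,
        show (pt (Wi k l) (Ci k l + 1)).2 = 82 * ((Wi k l : ℤ) : ℝ) ^ 2 - 1 from by
          rw [Ci_8W]; exact ptv_8Wp1 _,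
        ptv_f (Ymatch_N1b hl n hn)]
      rw [hC8] at hN
      push_cast
      rw [hC8]
      have hkey : (0 : ℝ) < (((n : ℝ) - 8 * ((Wi k l : ℤ) : ℝ)) - 1) *
          (18 * ((Wi k l : ℤ) : ℝ) ^ 2 + ((n : ℝ) - 8 * ((Wi k l : ℤ) : ℝ))) := by
        apply mul_pos (by linarith)
        nlinarith
      nlinarith [hkey]
  rwa [show l - 2 + 1 = l - 1 from by omega] at key

lemma N2bi_le3 (hk : 5 ≤ k) (hl : 5 ≤ l) :
    ∀ n ∈ N2bi k l, n ≠ Ci k l - 1 → n ≤ Ci k l - 3 := by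
  have hW := Wi_eq (k := k) (l := l)
  have hC := Ci_eq (k := k) (l := l)
  intro n hn hn2
  rw [mem_N2bi hl] at hn
  rcases hn with h | h | h
  · omega
  · omega
  · obtain ⟨⟨c, hcc⟩, hb1, hb2⟩ := h
    have hCe : Even (Ci k l) := ⟨4 * Wi k l, by rw [Ci_8W]; ring⟩
    obtain ⟨c0, hc0⟩ := hCe
    omega

lemma cm1_mem_N2bi (hk : 5 ≤ k) (hl : 5 ≤ l) : Ci k l - 1 ∈ N2bi k l := by
  have hCe : Even (Ci k l) := ⟨4 * Wi k l, by rw [Ci_8W]; ring⟩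
  obtain ⟨c0, hc0⟩ := hCe
  have hW := Wi_eq (k := k) (l := l)
  have hC := Ci_eq (k := k) (l := l)
  rw [mem_N2bi hl]
  exact Or.inr (Or.inr ⟨⟨c0 - 1, by omega⟩, by omega, by omega⟩)

lemma isCap_N2pts (hk : 5 ≤ k) (hl : 5 ≤ l) : IsCap (l - 1) (N2pts k l) := by
  have hWr : (16 : ℝ) ≤ ((Wi k l : ℤ) : ℝ) := by exact_mod_cast hW16 hk hl
  have hbase : IsCap (l - 2) ((N2bi k l).image (pt (Wi k l))) := by
    have h := isCap_base (Wi k l) (N2bi k l) (Ymatch_N2b hl)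
    rwa [card_N2bi hk hl] at h
  have key : IsCap (l - 2 + 1) (N2pts k l) := by
    refine isCap_insert_max_forall hbase
      (t₁ := pt (Wi k l) (Ci k l - 1)) (Finset.mem_image_of_mem _ (cm1_mem_N2bi hk hl)) ?_ ?_ ?_
    · intro s hs hne
      obtain ⟨n, hn, rfl⟩ := Finset.mem_image.1 hs
      exact pt_lt (by have := N2bi_le3 hk hl n hn (fun h => hne (by rw [h])); omega)
    · exact pt_lt (by omega)
    · intro s hs hne
      obtain ⟨n, hn, rfl⟩ := Finset.mem_image.1 hs
      have h3 : n ≤ Ci k l - 3 := N2bi_le3 hk hl n hn (fun h => hne (by rw [h]))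
      have hN : (n : ℝ) ≤ ((Ci k l : ℤ) : ℝ) - 3 := by exact_mod_cast h3
      have hC8 : ((Ci k l : ℤ) : ℝ) = 8 * ((Wi k l : ℤ) : ℝ) := by
        rw [Ci_8W]; push_cast; ring
      refine ⟨pt_lt (by omega), pt_lt (by omega), ?_⟩
      rw [pt_fst, pt_fst, pt_fst]
      rw [show (pt (Wi k l) (Ci k l)).2 = 64 * ((Wi k l : ℤ) : ℝ) ^ 2 from by
          rw [Ci_8W]; exact ptv_8W _,
        show (pt (Wi k l) (Ci k l - 1)).2 = 82 * ((Wi k l : ℤ) : ℝ) ^ 2 - 1 from by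
          rw [Ci_8W]; exact ptv_8Wm1 _,
        ptv_f (Ymatch_N2b hl n hn)]
      rw [hC8] at hN
      push_cast
      rw [hC8]
      have hkey : (0 : ℝ) < ((8 * ((Wi k l : ℤ) : ℝ) - (n : ℝ)) - 1) *
          ((8 * ((Wi k l : ℤ) : ℝ) - (n : ℝ)) + 18 * ((Wi k l : ℤ) : ℝ) ^ 2) := by
        apply mul_pos (by linarith)
        nlinarith
      nlinarith [hkey]
  rwa [show l - 2 + 1 = l - 1 from by omega] at key

-- chunk 8: covering lemmas

lemma RU2i_ge4 (hk : 5 ≤ k) (hl : 5 ≤ l) :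
    ∀ n ∈ RU2i k l, n ≠ -2 → n ≠ 2 → 4 ≤ n := by
  have hW := Wi_eq (k := k) (l := l)
  have hC := Ci_eq (k := k) (l := l)
  intro n hn h1 h2
  rw [mem_RU2i hk] at hn
  rcases hn with h | h | h | h
  · omega
  · omega
  · omega
  · obtain ⟨⟨c, hcc⟩, hb1, hb2⟩ := h; omega

lemma RU1i_le4 (hk : 5 ≤ k) (hl : 5 ≤ l) :
    ∀ n ∈ RU1i k l, n ≠ 2 → n ≠ -2 → n ≤ -4 := by
  have hW := Wi_eq (k := k) (l := l)
  intro n hn h1 h2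
  rw [mem_RU1i hk] at hn
  rcases hn with h | h | h
  · omega
  · omega
  · obtain ⟨⟨c, hcc⟩, hb1, hb2⟩ := h; omega

lemma RD2i_ge3 (hk : 5 ≤ k) (hl : 5 ≤ l) :
    ∀ n ∈ RD2i k l, n ≠ Ci k l - 1 → n ≠ Ci k l + 1 → Ci k l + 3 ≤ n := by
  have hW := Wi_eq (k := k) (l := l)
  have hC := Ci_eq (k := k) (l := l)
  intro n hn h1 h2
  rw [mem_RD2i hl] at hn
  rcases hn with h | h | h
  · omega
  · omega
  · obtain ⟨⟨c, hcc⟩, hb1, hb2⟩ := h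
    have hCe : Even (Ci k l) := ⟨4 * Wi k l, by rw [Ci_8W]; ring⟩
    obtain ⟨c0, hc0⟩ := hCe
    omega

lemma RD1i_le3 (hk : 5 ≤ k) (hl : 5 ≤ l) :
    ∀ n ∈ RD1i k l, n ≠ Ci k l + 1 → n ≠ Ci k l - 1 → n ≤ Ci k l - 3 := by
  have hW := Wi_eq (k := k) (l := l)
  have hC := Ci_eq (k := k) (l := l)
  intro n hn h1 h2
  rw [mem_RD1i hl] at hn
  rcases hn with h | h | h | h
  · omega
  · omega
  · omega
  · obtain ⟨⟨c, hcc⟩, hb1, hb2⟩ := h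
    have hCe : Even (Ci k l) := ⟨4 * Wi k l, by rw [Ci_8W]; ring⟩
    obtain ⟨c0, hc0⟩ := hCe
    omega

lemma cov_RU2 (hk : 5 ≤ k) (hl : 5 ≤ l) {q : ℝ × ℝ} (hx : q.1 < -2) (hy : 4 < q.2) :
    IsCup k (insert q (RU2pts k l)) := by
  have hW := Wi_eq (k := k) (l := l)
  have hC := Ci_eq (k := k) (l := l)
  have key := isCup_insert_min_two (isCup_RU2pts hk hl)
    (t₁ := pt (Wi k l) (-2)) (t₂ := pt (Wi k l) 2) (a := q)
    (Finset.mem_image_of_mem _ (by rw [mem_RU2i hk]; tauto))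
    (Finset.mem_image_of_mem _ (by
      rw [mem_RU2i hk]
      exact Or.inr (Or.inr (Or.inr ⟨⟨1, by ring⟩, by omega, by omega⟩))))
    (pt_lt (by norm_num))
    (by
      intro s hs h1 h2
      obtain ⟨n, hn, rfl⟩ := Finset.mem_image.1 hs
      exact pt_lt (by
        have := RU2i_ge4 hk hl n hn (fun h => h1 (by rw [h])) (fun h => h2 (by rw [h]))
        omega))
    (by rw [pt_fst]; push_cast; linarith)
    (by
      refine ⟨by rw [pt_fst]; push_cast; linarith, pt_lt (by norm_num), ?_⟩
      rw [pt_fst, pt_fst, ptv_m2, ptv_p2]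
      push_cast
      nlinarith)
  rwa [show k - 1 + 1 = k from by omega] at key

lemma cov_RU1 (hk : 5 ≤ k) (hl : 5 ≤ l) {q : ℝ × ℝ} (hx : 2 < q.1) (hy : 4 < q.2) :
    IsCup k (insert q (RU1pts k l)) := by
  have hW := Wi_eq (k := k) (l := l)
  have key := isCup_insert_max_two (isCup_RU1pts hk hl)
    (t₁ := pt (Wi k l) 2) (t₂ := pt (Wi k l) (-2)) (a := q)
    (Finset.mem_image_of_mem _ (by rw [mem_RU1i hk]; tauto))
    (Finset.mem_image_of_mem _ (by
      rw [mem_RU1i hk]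
      exact Or.inr (Or.inr ⟨⟨-1, by ring⟩, by omega, by omega⟩)))
    (pt_lt (by norm_num))
    (by
      intro s hs h1 h2
      obtain ⟨n, hn, rfl⟩ := Finset.mem_image.1 hs
      exact pt_lt (by
        have := RU1i_le4 hk hl n hn (fun h => h1 (by rw [h])) (fun h => h2 (by rw [h]))
        omega))
    (by rw [pt_fst]; push_cast; linarith)
    (by
      refine ⟨pt_lt (by norm_num), by rw [pt_fst]; push_cast; linarith, ?_⟩
      rw [pt_fst, pt_fst, ptv_m2, ptv_p2]
      push_cast
      nlinarith)
  rwa [show k - 1 + 1 = k from by omega] at key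

lemma cov_M1 (hk : 5 ≤ k) (hl : 5 ≤ l) {q : ℝ × ℝ} (hx : q.1 < 1)
    (hy : (18 * ((Wi k l : ℤ) : ℝ) ^ 2 + 16 * ((Wi k l : ℤ) : ℝ) - 1) +
      (4 - (18 * ((Wi k l : ℤ) : ℝ) ^ 2 + 16 * ((Wi k l : ℤ) : ℝ) - 1)) * (q.1 - 1) < q.2) :
    IsCup k (insert q (M1pts k l)) := by
  have key := isCup_insert_min_two (isCup_M1pts hk hl)
    (t₁ := pt (Wi k l) 1) (t₂ := pt (Wi k l) 2) (a := q)
    (Finset.mem_insert_self _ _)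
    (Finset.mem_insert_of_mem (Finset.mem_image_of_mem _ (two_mem_M1bi hk hl)))
    (pt_lt (by norm_num))
    (by
      intro s hs h1 h2
      rcases Finset.mem_insert.1 hs with h | h
      · exact absurd h h1
      · obtain ⟨n, hn, rfl⟩ := Finset.mem_image.1 h
        exact pt_lt (by
          have := M1bi_ge4 hk hl n hn (fun hh => h2 (by rw [hh]))
          omega))
    (by rw [pt_fst]; push_cast; linarith)
    (by
      refine ⟨by rw [pt_fst]; push_cast; linarith, pt_lt (by norm_num), ?_⟩
      rw [pt_fst, pt_fst, ptv_1, ptv_p2]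
      push_cast
      nlinarith [hy])
  rwa [show k - 1 + 1 = k from by omega] at key

lemma cov_M2 (hk : 5 ≤ k) (hl : 5 ≤ l) {q : ℝ × ℝ} (hx : 1 < q.1)
    (hy : (18 * ((Wi k l : ℤ) : ℝ) ^ 2 + 16 * ((Wi k l : ℤ) : ℝ) - 1) * (q.1 + 2)
      - 4 * q.1 + 4 < 3 * q.2) :
    IsCup k (insert q (M2pts k l)) := by
  have key := isCup_insert_max_two (isCup_M2pts hk hl)
    (t₁ := pt (Wi k l) 1) (t₂ := pt (Wi k l) (-2)) (a := q)
    (Finset.mem_insert_self _ _)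
    (Finset.mem_insert_of_mem (Finset.mem_image_of_mem _ (m2_mem_M2bi hk hl)))
    (pt_lt (by norm_num))
    (by
      intro s hs h1 h2
      rcases Finset.mem_insert.1 hs with h | h
      · exact absurd h h1
      · obtain ⟨n, hn, rfl⟩ := Finset.mem_image.1 h
        exact pt_lt (by
          have := M2bi_le4 hk hl n hn (fun hh => h2 (by rw [hh]))
          omega))
    (by rw [pt_fst]; push_cast; linarith)
    (by
      refine ⟨pt_lt (by norm_num), by rw [pt_fst]; push_cast; linarith, ?_⟩
      rw [pt_fst, pt_fst, ptv_1, ptv_m2]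
      push_cast
      nlinarith [hy])
  rwa [show k - 1 + 1 = k from by omega] at key

lemma cov_RD2 (hk : 5 ≤ k) (hl : 5 ≤ l) {q : ℝ × ℝ}
    (hx : q.1 < ((Ci k l : ℤ) : ℝ) - 1) (hy : q.2 < 82 * ((Wi k l : ℤ) : ℝ) ^ 2 - 1) :
    IsCap l (insert q (RD2pts k l)) := by
  have hW := Wi_eq (k := k) (l := l)
  have hC := Ci_eq (k := k) (l := l)
  have hCe : Even (Ci k l) := ⟨4 * Wi k l, by rw [Ci_8W]; ring⟩
  obtain ⟨c0, hc0⟩ := hCe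
  have key := isCap_insert_min_two (isCap_RD2pts hk hl)
    (t₁ := pt (Wi k l) (Ci k l - 1)) (t₂ := pt (Wi k l) (Ci k l + 1)) (a := q)
    (Finset.mem_image_of_mem _ (by rw [mem_RD2i hl]; tauto))
    (Finset.mem_image_of_mem _ (by
      rw [mem_RD2i hl]
      exact Or.inr (Or.inr ⟨⟨c0, by omega⟩, by omega, by omega⟩)))
    (pt_lt (by omega))
    (by
      intro s hs h1 h2
      obtain ⟨n, hn, rfl⟩ := Finset.mem_image.1 hs
      exact pt_lt (by
        have := RD2i_ge3 hk hl n hn (fun h => h1 (by rw [h])) (fun h => h2 (by rw [h]))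
        omega))
    (by rw [pt_fst]; push_cast; linarith)
    (by
      refine ⟨by rw [pt_fst]; push_cast; linarith, pt_lt (by omega), ?_⟩
      rw [pt_fst, pt_fst,
        show (pt (Wi k l) (Ci k l - 1)).2 = 82 * ((Wi k l : ℤ) : ℝ) ^ 2 - 1 from by
          rw [Ci_8W]; exact ptv_8Wm1 _,
        show (pt (Wi k l) (Ci k l + 1)).2 = 82 * ((Wi k l : ℤ) : ℝ) ^ 2 - 1 from by
          rw [Ci_8W]; exact ptv_8Wp1 _]
      push_cast
      nlinarith)
  rwa [show l - 1 + 1 = l from by omega] at key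

lemma cov_RD1 (hk : 5 ≤ k) (hl : 5 ≤ l) {q : ℝ × ℝ}
    (hx : ((Ci k l : ℤ) : ℝ) + 1 < q.1) (hy : q.2 < 82 * ((Wi k l : ℤ) : ℝ) ^ 2 - 1) :
    IsCap l (insert q (RD1pts k l)) := by
  have hW := Wi_eq (k := k) (l := l)
  have hC := Ci_eq (k := k) (l := l)
  have hCe : Even (Ci k l) := ⟨4 * Wi k l, by rw [Ci_8W]; ring⟩
  obtain ⟨c0, hc0⟩ := hCe
  have key := isCap_insert_max_two (isCap_RD1pts hk hl)
    (t₁ := pt (Wi k l) (Ci k l + 1)) (t₂ := pt (Wi k l) (Ci k l - 1)) (a := q)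
    (Finset.mem_image_of_mem _ (by rw [mem_RD1i hl]; tauto))
    (Finset.mem_image_of_mem _ (by
      rw [mem_RD1i hl]
      exact Or.inr (Or.inr (Or.inr ⟨⟨c0 - 1, by omega⟩, by omega, by omega⟩))))
    (pt_lt (by omega))
    (by
      intro s hs h1 h2
      obtain ⟨n, hn, rfl⟩ := Finset.mem_image.1 hs
      exact pt_lt (by
        have := RD1i_le3 hk hl n hn (fun h => h1 (by rw [h])) (fun h => h2 (by rw [h]))
        omega))
    (by rw [pt_fst]; push_cast; linarith)
    (by
      refine ⟨pt_lt (by omega), by rw [pt_fst]; push_cast; linarith, ?_⟩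
      rw [pt_fst, pt_fst,
        show (pt (Wi k l) (Ci k l - 1)).2 = 82 * ((Wi k l : ℤ) : ℝ) ^ 2 - 1 from by
          rw [Ci_8W]; exact ptv_8Wm1 _,
        show (pt (Wi k l) (Ci k l + 1)).2 = 82 * ((Wi k l : ℤ) : ℝ) ^ 2 - 1 from by
          rw [Ci_8W]; exact ptv_8Wp1 _]
      push_cast
      nlinarith)
  rwa [show l - 1 + 1 = l from by omega] at key

lemma cov_N1 (hk : 5 ≤ k) (hl : 5 ≤ l) {q : ℝ × ℝ}
    (hx : q.1 < 8 * ((Wi k l : ℤ) : ℝ))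
    (hy : q.2 < 64 * ((Wi k l : ℤ) : ℝ) ^ 2 -
      (18 * ((Wi k l : ℤ) : ℝ) ^ 2 - 1) * (8 * ((Wi k l : ℤ) : ℝ) - q.1)) :
    IsCap l (insert q (N1pts k l)) := by
  have hW := Wi_eq (k := k) (l := l)
  have hC := Ci_eq (k := k) (l := l)
  have hC8 : ((Ci k l : ℤ) : ℝ) = 8 * ((Wi k l : ℤ) : ℝ) := by
    rw [Ci_8W]; push_cast; ring
  have key := isCap_insert_min_two (isCap_N1pts hk hl)
    (t₁ := pt (Wi k l) (Ci k l)) (t₂ := pt (Wi k l) (Ci k l + 1)) (a := q)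
    (Finset.mem_insert_self _ _)
    (Finset.mem_insert_of_mem (Finset.mem_image_of_mem _ (cp1_mem_N1bi hk hl)))
    (pt_lt (by omega))
    (by
      intro s hs h1 h2
      rcases Finset.mem_insert.1 hs with h | h
      · exact absurd h h1
      · obtain ⟨n, hn, rfl⟩ := Finset.mem_image.1 h
        exact pt_lt (by
          have := N1bi_ge3 hk hl n hn (fun hh => h2 (by rw [hh]))
          omega))
    (by rw [pt_fst, hC8]; linarith)
    (by
      refine ⟨by rw [pt_fst, hC8]; linarith, pt_lt (by omega), ?_⟩
      rw [pt_fst, pt_fst,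
        show (pt (Wi k l) (Ci k l)).2 = 64 * ((Wi k l : ℤ) : ℝ) ^ 2 from by
          rw [Ci_8W]; exact ptv_8W _,
        show (pt (Wi k l) (Ci k l + 1)).2 = 82 * ((Wi k l : ℤ) : ℝ) ^ 2 - 1 from by
          rw [Ci_8W]; exact ptv_8Wp1 _]
      push_cast
      rw [hC8]
      nlinarith [hy])
  rwa [show l - 1 + 1 = l from by omega] at key

lemma cov_N2 (hk : 5 ≤ k) (hl : 5 ≤ l) {q : ℝ × ℝ}
    (hx : 8 * ((Wi k l : ℤ) : ℝ) < q.1)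
    (hy : q.2 < 64 * ((Wi k l : ℤ) : ℝ) ^ 2 -
      (18 * ((Wi k l : ℤ) : ℝ) ^ 2 - 1) * (q.1 - 8 * ((Wi k l : ℤ) : ℝ))) :
    IsCap l (insert q (N2pts k l)) := by
  have hW := Wi_eq (k := k) (l := l)
  have hC := Ci_eq (k := k) (l := l)
  have hC8 : ((Ci k l : ℤ) : ℝ) = 8 * ((Wi k l : ℤ) : ℝ) := by
    rw [Ci_8W]; push_cast; ring
  have key := isCap_insert_max_two (isCap_N2pts hk hl)
    (t₁ := pt (Wi k l) (Ci k l)) (t₂ := pt (Wi k l) (Ci k l - 1)) (a := q)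
    (Finset.mem_insert_self _ _)
    (Finset.mem_insert_of_mem (Finset.mem_image_of_mem _ (cm1_mem_N2bi hk hl)))
    (pt_lt (by omega))
    (by
      intro s hs h1 h2
      rcases Finset.mem_insert.1 hs with h | h
      · exact absurd h h1
      · obtain ⟨n, hn, rfl⟩ := Finset.mem_image.1 h
        exact pt_lt (by
          have := N2bi_le3 hk hl n hn (fun hh => h2 (by rw [hh]))
          omega))
    (by rw [pt_fst, hC8]; linarith)
    (by
      refine ⟨pt_lt (by omega), by rw [pt_fst, hC8]; linarith, ?_⟩
      rw [pt_fst, pt_fst,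
        show (pt (Wi k l) (Ci k l)).2 = 64 * ((Wi k l : ℤ) : ℝ) ^ 2 from by
          rw [Ci_8W]; exact ptv_8W _,
        show (pt (Wi k l) (Ci k l - 1)).2 = 82 * ((Wi k l : ℤ) : ℝ) ^ 2 - 1 from by
          rw [Ci_8W]; exact ptv_8Wm1 _]
      push_cast
      rw [hC8]
      nlinarith [hy])
  rwa [show l - 1 + 1 = l from by omega] at key

-- chunk 9: general position

lemma not_collinear_pt' (W : ℤ) {m n o : ℤ} (h1 : m ≠ n) (h2 : m ≠ o) (h3 : n ≠ o) :
    ¬ Collinear ℝ ({pt W m, pt W n, pt W o} : Set (ℝ × ℝ)) := by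
  intro hcol
  have perm : ∀ a b c : ℤ, ({pt W a, pt W b, pt W c} : Set (ℝ × ℝ)) = {pt W m, pt W n, pt W o} →
      a < b → b < c → False := by
    intro a b c hset hab hbc
    exact not_collinear_pt W a b c hab hbc (by rwa [hset])
  rcases lt_trichotomy m n with hmn | hmn | hmn
  · rcases lt_trichotomy n o with hno | hno | hno
    · exact perm m n o rfl hmn hno
    · exact h3 hno
    · rcases lt_trichotomy m o with hmo | hmo | hmo
      · exact perm m o n (by ext u; simp only [Set.mem_insert_iff, Set.mem_singleton_iff]; tauto)
          hmo hno
      · exact h2 hmo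
      · exact perm o m n (by ext u; simp only [Set.mem_insert_iff, Set.mem_singleton_iff]; tauto)
          hmo hmn
  · exact h1 hmn
  · rcases lt_trichotomy m o with hmo | hmo | hmo
    · exact perm n m o (by ext u; simp only [Set.mem_insert_iff, Set.mem_singleton_iff]; tauto)
        hmn hmo
    · exact h2 hmo
    · rcases lt_trichotomy n o with hno | hno | hno
      · exact perm n o m (by ext u; simp only [Set.mem_insert_iff, Set.mem_singleton_iff]; tauto)
          hno hmo
      · exact h3 hno
      · exact perm o n m (by ext u; simp only [Set.mem_insert_iff, Set.mem_singleton_iff]; tauto)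
          hno hmn

lemma genPos_image (W : ℤ) (F : Finset ℤ) : GenPos (F.image (pt W)) := by
  constructor
  · intro p hp q hq hpq
    obtain ⟨a, _, rfl⟩ := Finset.mem_image.1 hp
    obtain ⟨b, _, rfl⟩ := Finset.mem_image.1 hq
    have : a ≠ b := fun h => hpq (by rw [h])
    simpa [pt_fst] using fun h => this (by exact_mod_cast h)
  · intro p hp q hq r hr hpq hpr hqr
    obtain ⟨a, _, rfl⟩ := Finset.mem_image.1 hp
    obtain ⟨b, _, rfl⟩ := Finset.mem_image.1 hq
    obtain ⟨c, _, rfl⟩ := Finset.mem_image.1 hr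
    exact not_collinear_pt' W (fun h => hpq (by rw [h])) (fun h => hpr (by rw [h]))
      (fun h => hqr (by rw [h]))

end Construction

end CCSat

set_option maxHeartbeats 4000000 in
open CCSat in
/-- For `k, l ≥ 5`, there is a finite planar point set in general position with exactly
`2k + 2l - 10` points that is `(k,l)`-semisaturated with respect to `k`-cups and `l`-caps. -/
theorem cupcap_semisat_upper_bound (k l : ℕ) (hk : 5 ≤ k) (hl : 5 ≤ l) :
    ∃ P : Finset (ℝ × ℝ), GenPos P ∧ P.card = 2 * k + 2 * l - 10 ∧ CupCapSemiSat k l P := by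

  classical
  refine ⟨(IP k l).image (pt (Wi k l)), genPos_image _ _, ?_, ?_⟩
  · rw [Finset.card_image_of_injective _ (pt_injective _), card_IP hk hl]
  · intro q hq hgen
    have hW := Wi_eq (k := k) (l := l)
    have hC := Ci_eq (k := k) (l := l)
    have hWr : (16 : ℝ) ≤ ((Wi k l : ℤ) : ℝ) := by exact_mod_cast hW16 hk hl
    have hC8 : ((Ci k l : ℤ) : ℝ) = 8 * ((Wi k l : ℤ) : ℝ) := by
      rw [Ci_8W]; push_cast; ring
    have hxne : ∀ n ∈ IP k l, q.1 ≠ ((n : ℤ) : ℝ) := by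
      intro n hn
      have hqn : q ≠ pt (Wi k l) n := by
        rintro rfl; exact hq (Finset.mem_image_of_mem _ hn)
      exact hgen.1 q (Finset.mem_insert_self _ _) _
        (Finset.mem_insert_of_mem (Finset.mem_image_of_mem _ hn)) hqn
    have hCe : Even (Ci k l) := ⟨4 * Wi k l, by rw [Ci_8W]; ring⟩
    obtain ⟨c0, hc0⟩ := hCe
    have m_m2 : (-2 : ℤ) ∈ IP k l := by
      rw [mem_IP hk hl]
      exact Or.inr (Or.inr (Or.inr (Or.inr (Or.inl ⟨⟨-1, by ring⟩, by omega, by omega⟩))))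
    have m_1 : (1 : ℤ) ∈ IP k l := by rw [mem_IP hk hl]; tauto
    have m_2 : (2 : ℤ) ∈ IP k l := by
      rw [mem_IP hk hl]
      exact Or.inr (Or.inr (Or.inr (Or.inr (Or.inr (Or.inl ⟨⟨1, by ring⟩, by omega, by omega⟩)))))
    have m_Cm1 : Ci k l - 1 ∈ IP k l := by
      rw [mem_IP hk hl]
      exact Or.inr (Or.inr (Or.inr (Or.inr (Or.inr (Or.inr (Or.inl
        ⟨⟨c0 - 1, by omega⟩, by omega, by omega⟩))))))
    have m_C : Ci k l ∈ IP k l := by rw [mem_IP hk hl]; tauto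
    have m_Cp1 : Ci k l + 1 ∈ IP k l := by
      rw [mem_IP hk hl]
      exact Or.inr (Or.inr (Or.inr (Or.inr (Or.inr (Or.inr (Or.inr
        ⟨⟨c0, by omega⟩, by omega, by omega⟩))))))
    have ne_m2 : q.1 ≠ -2 := by have h := hxne _ m_m2; push_cast at h; exact h
    have ne_1 : q.1 ≠ 1 := by have h := hxne _ m_1; push_cast at h; exact h
    have ne_2 : q.1 ≠ 2 := by have h := hxne _ m_2; push_cast at h; exact h
    have ne_Cm1 : q.1 ≠ ((Ci k l : ℤ) : ℝ) - 1 := by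
      have h := hxne _ m_Cm1; push_cast at h; exact h
    have ne_C : q.1 ≠ ((Ci k l : ℤ) : ℝ) := hxne _ m_C
    have ne_Cp1 : q.1 ≠ ((Ci k l : ℤ) : ℝ) + 1 := by
      have h := hxne _ m_Cp1; push_cast at h; exact h
    have sRU1 : insert q (RU1pts k l) ⊆ insert q ((IP k l).image (pt (Wi k l))) :=
      Finset.insert_subset_insert _ (Finset.image_subset_image (RU1i_subset hk hl))
    have sRU2 : insert q (RU2pts k l) ⊆ insert q ((IP k l).image (pt (Wi k l))) :=
      Finset.insert_subset_insert _ (Finset.image_subset_image (RU2i_subset hk hl))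
    have sRD1 : insert q (RD1pts k l) ⊆ insert q ((IP k l).image (pt (Wi k l))) :=
      Finset.insert_subset_insert _ (Finset.image_subset_image (RD1i_subset hk hl))
    have sRD2 : insert q (RD2pts k l) ⊆ insert q ((IP k l).image (pt (Wi k l))) :=
      Finset.insert_subset_insert _ (Finset.image_subset_image (RD2i_subset hk hl))
    have sM1 : insert q (M1pts k l) ⊆ insert q ((IP k l).image (pt (Wi k l))) :=
      Finset.insert_subset_insert _ (Finset.insert_subset
        (Finset.mem_image_of_mem _ m_1) (Finset.image_subset_image (M1bi_subset hk hl)))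
    have sM2 : insert q (M2pts k l) ⊆ insert q ((IP k l).image (pt (Wi k l))) :=
      Finset.insert_subset_insert _ (Finset.insert_subset
        (Finset.mem_image_of_mem _ m_1) (Finset.image_subset_image (M2bi_subset hk hl)))
    have sN1 : insert q (N1pts k l) ⊆ insert q ((IP k l).image (pt (Wi k l))) :=
      Finset.insert_subset_insert _ (Finset.insert_subset
        (Finset.mem_image_of_mem _ m_C) (Finset.image_subset_image (N1bi_subset hk hl)))
    have sN2 : insert q (N2pts k l) ⊆ insert q ((IP k l).image (pt (Wi k l))) :=
      Finset.insert_subset_insert _ (Finset.insert_subset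
        (Finset.mem_image_of_mem _ m_C) (Finset.image_subset_image (N2bi_subset hk hl)))
    by_cases h1 : q.1 < -2
    · by_cases hy : (4 : ℝ) < q.2
      · exact ⟨_, sRU2, Finset.mem_insert_self _ _, Or.inl (cov_RU2 hk hl h1 hy)⟩
      · push_neg at hy
        refine ⟨_, sRD2, Finset.mem_insert_self _ _, Or.inr (cov_RD2 hk hl ?_ ?_)⟩
        · rw [hC8]; linarith
        · nlinarith
    · have h1' : -2 < q.1 := lt_of_le_of_ne (not_lt.1 h1) (Ne.symm ne_m2)
      by_cases h2 : q.1 < 1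
      · by_cases hy : (18 * ((Wi k l : ℤ) : ℝ) ^ 2 + 16 * ((Wi k l : ℤ) : ℝ) - 1) +
            (4 - (18 * ((Wi k l : ℤ) : ℝ) ^ 2 + 16 * ((Wi k l : ℤ) : ℝ) - 1)) * (q.1 - 1) < q.2
        · exact ⟨_, sM1, Finset.mem_insert_self _ _, Or.inl (cov_M1 hk hl h2 hy)⟩
        · push_neg at hy
          refine ⟨_, sRD2, Finset.mem_insert_self _ _, Or.inr (cov_RD2 hk hl ?_ ?_)⟩
          · rw [hC8]; linarith
          · have hprod : (0 : ℝ) ≤ (18 * ((Wi k l : ℤ) : ℝ) ^ 2 + 16 * ((Wi k l : ℤ) : ℝ)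
                - 1 - 4) * (2 + q.1) := by
              apply mul_nonneg (by nlinarith) (by linarith)
            nlinarith [hprod]
      · have h2' : 1 < q.1 := lt_of_le_of_ne (not_lt.1 h2) (Ne.symm ne_1)
        by_cases h3 : q.1 < 2
        · by_cases hy : (18 * ((Wi k l : ℤ) : ℝ) ^ 2 + 16 * ((Wi k l : ℤ) : ℝ) - 1) *
              (q.1 + 2) - 4 * q.1 + 4 < 3 * q.2
          · exact ⟨_, sM2, Finset.mem_insert_self _ _, Or.inl (cov_M2 hk hl h2' hy)⟩
          · push_neg at hy
            refine ⟨_, sRD2, Finset.mem_insert_self _ _, Or.inr (cov_RD2 hk hl ?_ ?_)⟩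
            · rw [hC8]; linarith
            · have hprod : (0 : ℝ) ≤ (18 * ((Wi k l : ℤ) : ℝ) ^ 2 + 16 * ((Wi k l : ℤ) : ℝ)
                  - 1) * (2 - q.1) := by
                apply mul_nonneg (by nlinarith) (by linarith)
              nlinarith [hprod]
        · have h3' : 2 < q.1 := lt_of_le_of_ne (not_lt.1 h3) (Ne.symm ne_2)
          by_cases hy : (4 : ℝ) < q.2
          · exact ⟨_, sRU1, Finset.mem_insert_self _ _, Or.inl (cov_RU1 hk hl h3' hy)⟩
          push_neg at hy
          by_cases h4 : q.1 < ((Ci k l : ℤ) : ℝ) - 1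
          · refine ⟨_, sRD2, Finset.mem_insert_self _ _, Or.inr (cov_RD2 hk hl h4 (by nlinarith))⟩
          · have h4' : ((Ci k l : ℤ) : ℝ) - 1 < q.1 :=
              lt_of_le_of_ne (not_lt.1 h4) (Ne.symm ne_Cm1)
            by_cases h5 : q.1 < ((Ci k l : ℤ) : ℝ)
            · refine ⟨_, sN1, Finset.mem_insert_self _ _, Or.inr (cov_N1 hk hl ?_ ?_)⟩
              · rw [← hC8]; exact h5
              · have hb1 : 8 * ((Wi k l : ℤ) : ℝ) - q.1 < 1 := by rw [← hC8]; linarith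
                have hb0 : 0 < 8 * ((Wi k l : ℤ) : ℝ) - q.1 := by rw [← hC8]; linarith
                have hL : (0 : ℝ) < 18 * ((Wi k l : ℤ) : ℝ) ^ 2 - 1 := by nlinarith
                have hm : (18 * ((Wi k l : ℤ) : ℝ) ^ 2 - 1) * (8 * ((Wi k l : ℤ) : ℝ) - q.1)
                    < (18 * ((Wi k l : ℤ) : ℝ) ^ 2 - 1) * 1 := by
                  exact mul_lt_mul_of_pos_left hb1 hL
                nlinarith [hm]
            · have h5' : ((Ci k l : ℤ) : ℝ) < q.1 := lt_of_le_of_ne (not_lt.1 h5) (Ne.symm ne_C)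
              by_cases h6 : q.1 < ((Ci k l : ℤ) : ℝ) + 1
              · refine ⟨_, sN2, Finset.mem_insert_self _ _, Or.inr (cov_N2 hk hl ?_ ?_)⟩
                · rw [← hC8]; exact h5'
                · have hb1 : q.1 - 8 * ((Wi k l : ℤ) : ℝ) < 1 := by rw [← hC8]; linarith
                  have hb0 : 0 < q.1 - 8 * ((Wi k l : ℤ) : ℝ) := by rw [← hC8]; linarith
                  have hL : (0 : ℝ) < 18 * ((Wi k l : ℤ) : ℝ) ^ 2 - 1 := by nlinarith
                  have hm : (18 * ((Wi k l : ℤ) : ℝ) ^ 2 - 1) * (q.1 - 8 * ((Wi k l : ℤ) : ℝ))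
                      < (18 * ((Wi k l : ℤ) : ℝ) ^ 2 - 1) * 1 := by
                    exact mul_lt_mul_of_pos_left hb1 hL
                  nlinarith [hm]
              · have h6' : ((Ci k l : ℤ) : ℝ) + 1 < q.1 :=
                  lt_of_le_of_ne (not_lt.1 h6) (Ne.symm ne_Cp1)
                refine ⟨_, sRD1, Finset.mem_insert_self _ _,
                  Or.inr (cov_RD1 hk hl h6' (by nlinarith))⟩
end

section
/- Let d ≥ 1 and n ≥ 2 be integers. Every finite set S ⊂ ℝ^d in general position that is semisaturated for convex n-sets has at least n − 1 + ⌊(n−2)/d⌋ points. -/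
/-- `S ⊂ ℝ^d` is in general position: every subset of at most `d+1` of its points is
affinely independent. -/
def GenPosD {d : ℕ} (S : Finset (Fin d → ℝ)) : Prop :=
  ∀ T : Finset (Fin d → ℝ), T ⊆ S → T.card ≤ d + 1 →
    AffineIndependent ℝ (fun x : (T : Set (Fin d → ℝ)) => (x : Fin d → ℝ))

/-- `T` is in convex position: none of its points lies in the convex hull of the others. -/
def ConvexPosD {d : ℕ} (T : Finset (Fin d → ℝ)) : Prop :=
  ∀ p ∈ T, p ∉ convexHull ℝ ((T.erase p : Finset (Fin d → ℝ)) : Set (Fin d → ℝ))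

/-- `S` is semisaturated for convex `n`-sets in `ℝ^d`: for every point `p ∉ S` with
`S ∪ {p}` in general position, there is an `n`-element subset of `S ∪ {p}` containing `p`
that is in convex position. -/
def ConvSemiSatD {d : ℕ} (n : ℕ) (S : Finset (Fin d → ℝ)) : Prop :=
  ∀ p ∉ S, GenPosD (insert p S) →
    ∃ T ⊆ insert p S, p ∈ T ∧ T.card = n ∧ ConvexPosD T

open Finset Module MeasureTheory

section Aux

variable {d : ℕ}

/-- Adding a point outside the affine span of an affinely independent set keeps it
affinely independent. -/
private lemma insertCoe_affineIndependent {s : Set (Fin d → ℝ)} {p : Fin d → ℝ}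
    (hs : AffineIndependent ℝ ((↑) : s → (Fin d → ℝ)))
    (hps : p ∉ s) (hp : p ∉ affineSpan ℝ s) :
    AffineIndependent ℝ (fun x : (insert p s : Set (Fin d → ℝ)) => (x : Fin d → ℝ)) := by
  classical
  set i : (insert p s : Set (Fin d → ℝ)) := ⟨p, Set.mem_insert _ _⟩ with hidef
  have himg : (Subtype.val '' {x : (insert p s : Set (Fin d → ℝ)) | x ≠ i}) = s := by
    ext y
    constructor
    · rintro ⟨x, hx, rfl⟩
      rcases x.2 with h | h
      · exact absurd (Subtype.ext h) hx
      · exact h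
    · intro hy
      refine ⟨⟨y, Set.mem_insert_of_mem _ hy⟩, fun h => hps ?_, rfl⟩
      have : y = p := congrArg Subtype.val h
      rwa [this] at hy
  apply AffineIndependent.affineIndependent_of_notMem_span (i := i)
  · have hmem : ∀ x : {y : (insert p s : Set (Fin d → ℝ)) // y ≠ i},
        (x : Fin d → ℝ) ∈ s := by
      intro x
      rcases x.1.2 with h | h
      · exact absurd (Subtype.ext h) x.2
      · exact h
    let e : {y : (insert p s : Set (Fin d → ℝ)) // y ≠ i} ↪ s :=
      ⟨fun x => ⟨x.1.1, hmem x⟩, by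
        intro a b hab
        have h2 : a.1.1 = b.1.1 := by simpa [Subtype.ext_iff] using hab
        ext1; ext1
        exact h2⟩
    exact hs.comp_embedding e
  · rwa [himg]

/-- The affine span of at most `d` points in `ℝ^d` is a proper affine subspace. -/
private lemma span_ne_top {T : Finset (Fin d → ℝ)} (hd : 1 ≤ d) (hT : T.card ≤ d) :
    affineSpan ℝ (T : Set (Fin d → ℝ)) ≠ ⊤ := by
  intro h
  rcases T.eq_empty_or_nonempty with rfl | ⟨x, hx⟩
  · rw [Finset.coe_empty, AffineSubspace.span_empty] at h
    exact AffineSubspace.bot_ne_top ℝ (Fin d → ℝ) (Fin d → ℝ) h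
  · have hcard : Fintype.card (T : Set (Fin d → ℝ)) = (T.card - 1) + 1 := by
      have h1 : Fintype.card (T : Set (Fin d → ℝ)) = T.card := by simp
      have : 1 ≤ T.card := Finset.card_pos.mpr ⟨x, hx⟩
      omega
    have hrank := finrank_vectorSpan_range_le ℝ
      (fun x : (T : Set (Fin d → ℝ)) => (x : Fin d → ℝ)) hcard
    rw [Subtype.range_coe] at hrank
    have hdir : (affineSpan ℝ (T : Set (Fin d → ℝ))).direction = ⊤ := by
      rw [h]; exact AffineSubspace.direction_top ℝ _ _
    rw [direction_affineSpan] at hdir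
    rw [hdir, finrank_top, Module.finrank_fin_fun ℝ] at hrank
    omega

/-- There is a nonempty open set of "deep" points: every closed halfspace containing such a
point contains at least `⌊|S|/(d+1)⌋` points of `S`.  This is a generic centerpoint theorem,
proved via Helly's theorem applied to interiors of convex hulls of large subsets of `S`. -/
private lemma deepW (d : ℕ) (hd : 1 ≤ d) (S : Finset (Fin d → ℝ)) (hgp : GenPosD S) :
    ∃ W : Set (Fin d → ℝ), IsOpen W ∧ W.Nonempty ∧
      ∀ p ∈ W, ∀ f : (Fin d → ℝ) →L[ℝ] ℝ, f ≠ 0 →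
        S.card / (d + 1) ≤ (S.filter fun s => f p < f s).card := by
  classical
  set m := S.card with hm
  set k := m / (d + 1) with hk
  rcases Nat.eq_zero_or_pos k with hk0 | hk1
  · exact ⟨Set.univ, isOpen_univ, Set.univ_nonempty, by simp [← hk, hk0]⟩
  have hdk : (d + 1) * k ≤ m := by
    rw [hk, mul_comm]; exact Nat.div_mul_le_self _ _
  have hrankE : finrank ℝ (Fin d → ℝ) = d := Module.finrank_fin_fun ℝ
  set F : Finset (Fin d → ℝ) → Set (Fin d → ℝ) :=
    fun A => interior (convexHull ℝ (A : Set (Fin d → ℝ))) with hF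
  set 𝒜 : Finset (Finset (Fin d → ℝ)) := S.powersetCard (m - k + 1) with h𝒜
  have hne : (⋂ A ∈ 𝒜, F A).Nonempty := by
    apply Convex.helly_theorem' (𝕜 := ℝ)
    · intro A _
      exact (convex_convexHull ℝ _).interior
    · intro I hIs hIcard
      rw [hrankE] at hIcard
      -- the common part of all members of I
      set B : Finset (Fin d → ℝ) := S.filter (fun x => ∀ A ∈ I, x ∈ A) with hB
      have hBsub : ∀ A ∈ I, B ⊆ A := fun A hA x hx => (mem_filter.mp hx).2 A hA
      have hBS : B ⊆ S := filter_subset _ _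
      have hcompl : S \ B ⊆ I.biUnion (fun A => S \ A) := by
        intro x hx
        rw [mem_sdiff, hB, mem_filter] at hx
        push_neg at hx
        obtain ⟨A, hA, hxA⟩ := hx.2 hx.1
        exact mem_biUnion.mpr ⟨A, hA, mem_sdiff.mpr ⟨hx.1, hxA⟩⟩
      have hcard1 : (S \ B).card ≤ (d + 1) * (k - 1) := by
        calc (S \ B).card ≤ (I.biUnion (fun A => S \ A)).card := card_le_card hcompl
          _ ≤ ∑ A ∈ I, (S \ A).card := card_biUnion_le
          _ ≤ ∑ _A ∈ I, (k - 1) := by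
              apply Finset.sum_le_sum
              intro A hA
              have hAmem := mem_powersetCard.mp (hIs hA)
              rw [card_sdiff_of_subset hAmem.1, hAmem.2]
              omega
          _ = I.card * (k - 1) := by rw [sum_const, smul_eq_mul]
          _ ≤ (d + 1) * (k - 1) := Nat.mul_le_mul_right _ hIcard
      have hBcard : d + 1 ≤ B.card := by
        have h1 : (S \ B).card = m - B.card := by rw [card_sdiff_of_subset hBS]
        have h2 : B.card ≤ m := card_le_card hBS
        have h3 : (d + 1) * (k - 1) + (d + 1) = (d + 1) * k := by
          have : k - 1 + 1 = k := by omega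
          calc (d + 1) * (k - 1) + (d + 1) = (d + 1) * ((k - 1) + 1) := by ring
            _ = (d + 1) * k := by rw [this]
        omega
      obtain ⟨C, hCB, hCcard⟩ := Finset.exists_subset_card_eq hBcard
      have hCS : C ⊆ S := hCB.trans hBS
      have hCi := hgp C hCS (by omega)
      have hCspan : affineSpan ℝ (C : Set (Fin d → ℝ)) = ⊤ := by
        rw [← Subtype.range_coe (s := (C : Set (Fin d → ℝ)))]
        apply hCi.affineSpan_eq_top_iff_card_eq_finrank_add_one.mpr
        simp [hCcard, hrankE]
      have hint : (interior (convexHull ℝ (C : Set (Fin d → ℝ)))).Nonempty := by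
        rw [interior_convexHull_nonempty_iff_affineSpan_eq_top]
        exact hCspan
      obtain ⟨x, hx⟩ := hint
      refine ⟨x, Set.mem_iInter₂.mpr fun A hA => ?_⟩
      exact interior_mono (convexHull_mono (by exact_mod_cast hCB.trans (hBsub A hA))) hx
  refine ⟨⋂ A ∈ 𝒜, F A, ?_, hne, ?_⟩
  · exact isOpen_biInter_finset fun A _ => isOpen_interior
  · intro p hp f hf
    by_contra hcon
    push_neg at hcon

    -- the set of points "below" p
    have hsplit := Finset.card_filter_add_card_filter_not
      (s := S) (p := fun s => f p < f s)
    set A₀ : Finset (Fin d → ℝ) := S.filter (fun s => ¬ f p < f s) with hA₀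
    rw [← hm] at hsplit
    have hkm : k ≤ m := le_trans (Nat.le_mul_of_pos_left k (by omega)) hdk
    have hA₀card : m - k + 1 ≤ A₀.card := by omega
    obtain ⟨A, hAA₀, hAcard⟩ := Finset.exists_subset_card_eq hA₀card
    have hA𝒜 : A ∈ 𝒜 := mem_powersetCard.mpr ⟨hAA₀.trans (filter_subset _ _), hAcard⟩
    have hpA : p ∈ interior (convexHull ℝ (A : Set (Fin d → ℝ))) :=
      Set.mem_iInter₂.mp hp A hA𝒜
    have hhull : convexHull ℝ (A : Set (Fin d → ℝ)) ⊆ {x | f x ≤ f p} := by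
      apply convexHull_min
      · intro a ha
        have := (mem_filter.mp (hAA₀ (by exact_mod_cast ha))).2
        simpa using not_lt.mp this
      · exact convex_halfSpace_le ⟨f.map_add, f.map_smul⟩ (f p)
    obtain ⟨v, hv⟩ : ∃ v, f v ≠ 0 := by
      by_contra hno
      push_neg at hno
      exact hf (ContinuousLinearMap.ext fun x => by simp [hno x])
    set w : Fin d → ℝ := (f v)⁻¹ • v with hw
    have hfw : f w = 1 := by
      rw [hw, f.map_smul, smul_eq_mul, inv_mul_cancel₀ hv]
    have hnhds : convexHull ℝ (A : Set (Fin d → ℝ)) ∈ nhds p :=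
      mem_interior_iff_mem_nhds.mp hpA
    obtain ⟨ε, hε, hball⟩ := Metric.mem_nhds_iff.mp hnhds
    set c : ℝ := ε / (2 * (‖w‖ + 1)) with hc
    have hcpos : 0 < c := by positivity
    have hnw : 0 ≤ ‖w‖ := norm_nonneg _
    have hqball : p + c • w ∈ Metric.ball p ε := by
      rw [Metric.mem_ball, dist_eq_norm, add_sub_cancel_left, norm_smul,
        Real.norm_eq_abs, abs_of_pos hcpos]
      have h1 : c * ‖w‖ ≤ c * (‖w‖ + 1) := by nlinarith
      have h2 : c * (‖w‖ + 1) = ε / 2 := by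
        rw [hc]; field_simp
      linarith
    have hqle : f (p + c • w) ≤ f p := hhull (hball hqball)
    rw [map_add, f.map_smul, hfw, smul_eq_mul, mul_one] at hqle
    linarith

/-- There is a "generic deep point" for `S`: a point `p ∉ S` with `insert p S` in general
position such that every open halfspace not containing `p` misses at least
`⌊|S|/(d+1)⌋` points of `S`. -/
private lemma exists_deep_point (d : ℕ) (hd : 1 ≤ d) (S : Finset (Fin d → ℝ))
    (hgp : GenPosD S) :
    ∃ p ∉ S, GenPosD (insert p S) ∧
      ∀ f : (Fin d → ℝ) →L[ℝ] ℝ, f ≠ 0 →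
        S.card / (d + 1) ≤ (S.filter fun s => f p < f s).card := by
  classical
  obtain ⟨W, hWo, hWne, hWdeep⟩ := deepW d hd S hgp
  set FF : Finset (Finset (Fin d → ℝ)) := S.powerset.filter (fun T => T.card ≤ d) with hFF
  set Bad : Set (Fin d → ℝ) :=
    ⋃ T ∈ FF, (affineSpan ℝ (T : Set (Fin d → ℝ)) : Set (Fin d → ℝ)) with hBad
  have hBadnull : volume Bad = 0 := by
    rw [hBad]
    refine (measure_biUnion_null_iff FF.countable_toSet).mpr fun T hT => ?_
    exact Measure.addHaar_affineSubspace volume _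
      (span_ne_top hd (mem_filter.mp hT).2)
  have hWpos : 0 < volume W := hWo.measure_pos volume hWne
  have hex : ∃ p ∈ W, p ∉ Bad := by
    by_contra hno
    push_neg at hno
    exact absurd (measure_mono_null hno hBadnull) (ne_of_gt hWpos)
  obtain ⟨p, hpW, hpBad⟩ := hex
  have hpnotspan : ∀ T : Finset (Fin d → ℝ), T ⊆ S → T.card ≤ d →
      p ∉ affineSpan ℝ (T : Set (Fin d → ℝ)) := by
    intro T hTS hTd hsp
    exact hpBad (Set.mem_biUnion (mem_filter.mpr ⟨mem_powerset.mpr hTS, hTd⟩) hsp)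
  have hpS : p ∉ S := by
    intro hpS
    refine hpnotspan {p} (singleton_subset_iff.mpr hpS) (by simpa using hd) ?_
    exact subset_affineSpan ℝ _ (by simp)
  refine ⟨p, hpS, ?_, fun f hf => hWdeep p hpW f hf⟩
  intro T hT hTcard
  by_cases hpT : p ∈ T
  · set T' := T.erase p with hT'
    have hT'S : T' ⊆ S := by
      intro x hx
      have hx' := Finset.mem_erase.mp hx
      exact (Finset.mem_insert.mp (hT hx'.2)).resolve_left hx'.1
    have hT'd : T'.card ≤ d := by
      rw [hT', card_erase_of_mem hpT]
      omega
    have hind := hgp T' hT'S (by omega)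
    have hpspan := hpnotspan T' hT'S hT'd
    have hpnotT' : p ∉ (T' : Set (Fin d → ℝ)) := by
      simp [hT']
    have key := insertCoe_affineIndependent hind hpnotT' hpspan
    have hset : (insert p ((T' : Set (Fin d → ℝ)))) = (T : Set (Fin d → ℝ)) := by
      rw [← Finset.coe_insert, Finset.insert_erase hpT]
    rw [hset] at key
    exact key
  · have hTS : T ⊆ S := by
      intro x hx
      exact (Finset.mem_insert.mp (hT hx)).resolve_left (fun h => hpT (h ▸ hx))
    exact hgp T hTS hTcard

/-- Arithmetic: `n - 1 + ⌊m/(d+1)⌋ ≤ m` implies `n - 1 + ⌊(n-2)/d⌋ ≤ m`. -/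
private lemma arith_aux (d n m : ℕ) (hd : 1 ≤ d) (hn : 2 ≤ n)
    (h : n - 1 + m / (d + 1) ≤ m) : n - 1 + (n - 2) / d ≤ m := by
  by_contra hc
  push_neg at hc
  set q := (n - 2) / d with hq
  have hqd : d * q ≤ n - 2 := by
    rw [hq, mul_comm]; exact Nat.div_mul_le_self _ _
  set m' := n - 2 + q with hm'
  have hmm' : m ≤ m' := by omega
  have h1 : q ≤ m' / (d + 1) := by
    apply Nat.le_div_iff_mul_le (by omega) |>.mpr
    have : q * (d + 1) = d * q + q := by ring
    omega
  have h2 : m' / (d + 1) ≤ m / (d + 1) + (m' - m) := by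
    calc m' / (d + 1) ≤ (m + (m' - m) * (d + 1)) / (d + 1) := by
          apply Nat.div_le_div_right
          have : m' - m ≤ (m' - m) * (d + 1) := Nat.le_mul_of_pos_right _ (by omega)
          omega
      _ = m / (d + 1) + (m' - m) := Nat.add_mul_div_right _ _ (by omega)
  omega

end Aux

/-- For `d ≥ 1` and `n ≥ 2`, every finite set in `ℝ^d` in general position that is
semisaturated for convex `n`-sets has at least `n - 1 + ⌊(n-2)/d⌋` points. -/
theorem convex_semisat_lower_bound_dim (d n : ℕ) (hd : 1 ≤ d) (hn : 2 ≤ n)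
    (S : Finset (Fin d → ℝ)) (hgp : GenPosD S) (hsat : ConvSemiSatD n S) :
    n - 1 + (n - 2) / d ≤ S.card := by
  classical
  obtain ⟨p, hpS, hgp', hdeep⟩ := exists_deep_point d hd S hgp
  obtain ⟨T, hTsub, hpT, hTcard, hTconv⟩ := hsat p hpS hgp'
  set T' := T.erase p with hT'
  have hT'card : T'.card = n - 1 := by
    rw [hT', card_erase_of_mem hpT, hTcard]
  have hT'S : T' ⊆ S := by
    intro x hx
    have hx' := Finset.mem_erase.mp hx
    exact (Finset.mem_insert.mp (hTsub hx'.2)).resolve_left hx'.1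
  have hsep : p ∉ convexHull ℝ (T' : Set (Fin d → ℝ)) := hTconv p hpT
  have hclosed : IsClosed (convexHull ℝ (T' : Set (Fin d → ℝ))) :=
    T'.finite_toSet.isClosed_convexHull (𝕜 := ℝ)
  obtain ⟨f, u, hfu, hfb⟩ :=
    geometric_hahn_banach_point_closed (convex_convexHull ℝ _) hclosed hsep
  have hT'ne : T'.Nonempty := Finset.card_pos.mp (by omega)
  obtain ⟨b, hb⟩ := hT'ne
  have hub : u < f b := hfb b (subset_convexHull ℝ _ (by exact_mod_cast hb))
  have hf0 : f ≠ 0 := by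
    intro h
    rw [h] at hfu hub
    simp at hfu hub
    linarith
  have hD := hdeep (-f) (neg_ne_zero.mpr hf0)
  set D := S.filter (fun s => (-f) p < (-f) s) with hDdef
  have hdisj : Disjoint D T' := by
    rw [Finset.disjoint_left]
    intro a haD haT'
    have h1 : f a < f p := by
      have := (Finset.mem_filter.mp haD).2
      simpa using this
    have h2 : u < f a := hfb a (subset_convexHull ℝ _ (by exact_mod_cast haT'))
    linarith
  have hsub : D ∪ T' ⊆ S := Finset.union_subset (Finset.filter_subset _ _) hT'S
  have hcard : D.card + T'.card ≤ S.card := by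
    rw [← Finset.card_union_of_disjoint hdisj]
    exact Finset.card_le_card hsub
  apply arith_aux d n S.card hd hn
  omega
end

section
/- Let a : Fin m → ℝ be injective and let s, t ∈ Fin m with s ≠ t. Then: (i) if dec(s) ≤ dec(t) and inc(s) ≤ inc(t), then s < t; and (ii) if dec(s) ≥ dec(t) and inc(s) ≤ inc(t), then a(s) < a(t). -/
/-- The maximum length of an increasing subsequence of `a` ending at index `t`. -/
noncomputable def incLen {m : ℕ} (a : Fin m → ℝ) (t : Fin m) : ℕ :=
  sSup {k | ∃ f : Fin k → Fin m, StrictMono f ∧ StrictMono (a ∘ f) ∧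
    ∃ hk : 0 < k, f ⟨k - 1, by omega⟩ = t}

/-- The maximum length of a decreasing subsequence of `a` ending at index `t`. -/
noncomputable def decLen {m : ℕ} (a : Fin m → ℝ) (t : Fin m) : ℕ :=
  sSup {k | ∃ f : Fin k → Fin m, StrictMono f ∧ StrictAnti (a ∘ f) ∧
    ∃ hk : 0 < k, f ⟨k - 1, by omega⟩ = t}

lemma snoc_strictMono' {k : ℕ} {α : Type*} [Preorder α] {f : Fin k → α} {x : α}
    (hf : StrictMono f) (hx : ∀ i, f i < x) : StrictMono (Fin.snoc f x) := by
  intro i j hij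
  rcases Fin.eq_castSucc_or_eq_last j with ⟨j', rfl⟩ | rfl
  · have hi : i ≠ Fin.last k := (lt_of_lt_of_le hij (Fin.castSucc_lt_last j').le).ne
    obtain ⟨i', rfl⟩ := Fin.exists_castSucc_eq.mpr hi
    simp only [Fin.snoc_castSucc]
    exact hf (Fin.castSucc_lt_castSucc_iff.mp hij)
  · obtain ⟨i', rfl⟩ := Fin.exists_castSucc_eq.mpr (ne_of_lt hij)
    simp only [Fin.snoc_castSucc, Fin.snoc_last]
    exact hx i'

lemma snoc_strictAnti' {k : ℕ} {α : Type*} [Preorder α] {f : Fin k → α} {x : α}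
    (hf : StrictAnti f) (hx : ∀ i, x < f i) : StrictAnti (Fin.snoc f x) := by
  intro i j hij
  rcases Fin.eq_castSucc_or_eq_last j with ⟨j', rfl⟩ | rfl
  · have hi : i ≠ Fin.last k := (lt_of_lt_of_le hij (Fin.castSucc_lt_last j').le).ne
    obtain ⟨i', rfl⟩ := Fin.exists_castSucc_eq.mpr hi
    simp only [Fin.snoc_castSucc]
    exact hf (Fin.castSucc_lt_castSucc_iff.mp hij)
  · obtain ⟨i', rfl⟩ := Fin.exists_castSucc_eq.mpr (ne_of_lt hij)
    simp only [Fin.snoc_castSucc, Fin.snoc_last]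
    exact hx i'

lemma incSet_bddAbove {m : ℕ} (a : Fin m → ℝ) (t : Fin m) :
    BddAbove {k | ∃ f : Fin k → Fin m, StrictMono f ∧ StrictMono (a ∘ f) ∧
      ∃ hk : 0 < k, f ⟨k - 1, by omega⟩ = t} := by
  refine ⟨m, fun k hk => ?_⟩
  obtain ⟨f, hf, -, -⟩ := hk
  simpa using Fintype.card_le_of_injective f hf.injective

lemma decSet_bddAbove {m : ℕ} (a : Fin m → ℝ) (t : Fin m) :
    BddAbove {k | ∃ f : Fin k → Fin m, StrictMono f ∧ StrictAnti (a ∘ f) ∧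
      ∃ hk : 0 < k, f ⟨k - 1, by omega⟩ = t} := by
  refine ⟨m, fun k hk => ?_⟩
  obtain ⟨f, hf, -, -⟩ := hk
  simpa using Fintype.card_le_of_injective f hf.injective

lemma incSet_nonempty {m : ℕ} (a : Fin m → ℝ) (t : Fin m) :
    Set.Nonempty {k | ∃ f : Fin k → Fin m, StrictMono f ∧ StrictMono (a ∘ f) ∧
      ∃ hk : 0 < k, f ⟨k - 1, by omega⟩ = t} :=
  ⟨1, fun _ => t, Subsingleton.strictMono _, Subsingleton.strictMono _, Nat.one_pos, rfl⟩

lemma decSet_nonempty {m : ℕ} (a : Fin m → ℝ) (t : Fin m) :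
    Set.Nonempty {k | ∃ f : Fin k → Fin m, StrictMono f ∧ StrictAnti (a ∘ f) ∧
      ∃ hk : 0 < k, f ⟨k - 1, by omega⟩ = t} :=
  ⟨1, fun _ => t, Subsingleton.strictMono _, Subsingleton.strictAnti _, Nat.one_pos, rfl⟩

lemma incLen_mem {m : ℕ} (a : Fin m → ℝ) (t : Fin m) :
    incLen a t ∈ {k | ∃ f : Fin k → Fin m, StrictMono f ∧ StrictMono (a ∘ f) ∧
      ∃ hk : 0 < k, f ⟨k - 1, by omega⟩ = t} :=
  Nat.sSup_mem (incSet_nonempty a t) (incSet_bddAbove a t)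

lemma decLen_mem {m : ℕ} (a : Fin m → ℝ) (t : Fin m) :
    decLen a t ∈ {k | ∃ f : Fin k → Fin m, StrictMono f ∧ StrictAnti (a ∘ f) ∧
      ∃ hk : 0 < k, f ⟨k - 1, by omega⟩ = t} :=
  Nat.sSup_mem (decSet_nonempty a t) (decSet_bddAbove a t)

lemma incLen_lt_incLen {m : ℕ} (a : Fin m → ℝ) {s t : Fin m} (hst : s < t)
    (hat : a s < a t) : incLen a s < incLen a t := by
  obtain ⟨f, hf, hfa, hk, hlast⟩ := incLen_mem a s
  have hlei : ∀ i : Fin (incLen a s), i ≤ ⟨incLen a s - 1, by omega⟩ := by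
    intro i
    have := i.isLt
    exact Fin.le_def.mpr (by simp; omega)
  have hle : ∀ i, f i ≤ s := fun i => hlast ▸ hf.monotone (hlei i)
  have hale : ∀ i, a (f i) ≤ a s := by
    intro i
    have := hfa.monotone (hlei i)
    simpa [hlast] using this
  have hmem : incLen a s + 1 ∈ {k | ∃ f : Fin k → Fin m, StrictMono f ∧ StrictMono (a ∘ f) ∧
      ∃ hk : 0 < k, f ⟨k - 1, by omega⟩ = t} := by
    refine ⟨Fin.snoc f t, ?_, ?_, Nat.succ_pos _, ?_⟩
    · exact snoc_strictMono' hf (fun i => lt_of_le_of_lt (hle i) hst)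
    · rw [show a ∘ Fin.snoc f t = Fin.snoc (a ∘ f) (a t) from (Fin.comp_snoc a f t)]
      exact snoc_strictMono' hfa (fun i => lt_of_le_of_lt (hale i) hat)
    · have h : (⟨incLen a s + 1 - 1, by omega⟩ : Fin (incLen a s + 1)) = Fin.last _ := rfl
      rw [h, Fin.snoc_last]
  exact Nat.lt_of_succ_le (le_csSup (incSet_bddAbove a t) hmem)

lemma decLen_lt_decLen {m : ℕ} (a : Fin m → ℝ) {s t : Fin m} (hst : s < t)
    (hat : a t < a s) : decLen a s < decLen a t := by
  obtain ⟨f, hf, hfa, hk, hlast⟩ := decLen_mem a s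
  have hlei : ∀ i : Fin (decLen a s), i ≤ ⟨decLen a s - 1, by omega⟩ := by
    intro i
    have := i.isLt
    exact Fin.le_def.mpr (by simp; omega)
  have hle : ∀ i, f i ≤ s := fun i => hlast ▸ hf.monotone (hlei i)
  have hale : ∀ i, a s ≤ a (f i) := by
    intro i
    have := hfa.antitone (hlei i)
    simpa [hlast] using this
  have hmem : decLen a s + 1 ∈ {k | ∃ f : Fin k → Fin m, StrictMono f ∧ StrictAnti (a ∘ f) ∧
      ∃ hk : 0 < k, f ⟨k - 1, by omega⟩ = t} := by
    refine ⟨Fin.snoc f t, ?_, ?_, Nat.succ_pos _, ?_⟩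
    · exact snoc_strictMono' hf (fun i => lt_of_le_of_lt (hle i) hst)
    · rw [show a ∘ Fin.snoc f t = Fin.snoc (a ∘ f) (a t) from (Fin.comp_snoc a f t)]
      exact snoc_strictAnti' hfa (fun i => lt_of_lt_of_le hat (hale i))
    · have h : (⟨decLen a s + 1 - 1, by omega⟩ : Fin (decLen a s + 1)) = Fin.last _ := rfl
      rw [h, Fin.snoc_last]
  exact Nat.lt_of_succ_le (le_csSup (decSet_bddAbove a t) hmem)

/-- For an injective sequence `a` and distinct indices `s ≠ t`:
(i) if `dec(s) ≤ dec(t)` and `inc(s) ≤ inc(t)` then `s < t`;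
(ii) if `dec(s) ≥ dec(t)` and `inc(s) ≤ inc(t)` then `a s < a t`. -/
theorem incLen_decLen_compare {m : ℕ} (a : Fin m → ℝ) (ha : Function.Injective a)
    (s t : Fin m) (hst : s ≠ t) :
    (decLen a s ≤ decLen a t → incLen a s ≤ incLen a t → s < t) ∧
    (decLen a t ≤ decLen a s → incLen a s ≤ incLen a t → a s < a t) := by
  have hane : a s ≠ a t := fun h => hst (ha h)
  constructor
  · intro h1 h2
    rcases lt_or_gt_of_ne hst with h | h
    · exact h
    · rcases lt_or_gt_of_ne hane with h' | h'
      · exact absurd (decLen_lt_decLen a h h') (by omega)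
      · exact absurd (incLen_lt_incLen a h h') (by omega)
  · intro h1 h2
    rcases lt_or_gt_of_ne hane with h | h
    · exact h
    · rcases lt_or_gt_of_ne hst with h' | h'
      · exact absurd (decLen_lt_decLen a h' h) (by omega)
      · exact absurd (incLen_lt_incLen a h' h) (by omega)
end
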